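/- arXiv:2302.14004 — 11 statements merged into one kernel-verified Lean document; each statement's English description precedes it below -/
import Mathlib

section
/- Let V : X → [0,H] be any function, CB : X × A → [0,∞) a nonnegative bonus function, and P̂ : X × A × X → ℝ any (not necessarily stochastic) estimated model satisfying the validity condition |γ · Σ_{x'} (P(x'|x,a) − P̂(x'|x,a)) V(x')| ≤ CB(x,a) for every (x,a). Define Q(x,a) = Π_H[ r(x,a) + CB(x,a) + γ · Σ_{x'} P̂(x'|x,a) V(x') ], where Π_H clamps a real number to the interval [0,H]. Then for every state-action pair (x,a): r(x,a) + γ (P V)(x,a) ≤ Q(x,a) ≤ r(x,a) + 2·CB(x,a) + γ (P V)(x,a). -/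
/-! Write `e = γ (P V)(x,a)` and `ê = γ (P̂ V)(x,a)`. Validity says `|e - ê| ≤ CB`, so the
unclamped optimistic value `r + CB + ê` lies between `r + e` and `r + 2 CB + e`. Clamping to
`[0, H]` cannot break the lower bound because `0 ≤ r + e ≤ 1 + γ H = H`, nor the upper bound
because `r + 2 CB + e ≥ 0`. -/

open Finset

theorem one_add_mul_one_div_one_sub {γ : ℝ} (hγ : γ ≠ 1) :
    1 + γ * (1 / (1 - γ)) = 1 / (1 - γ) := by
  have : 1 - γ ≠ 0 := sub_ne_zero.mpr (Ne.symm hγ)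
  field_simp
  ring

theorem sum_mul_mem_Icc_of_stochastic {ι : Type*} [Fintype ι] {p f : ι → ℝ} {H : ℝ}
    (hp0 : ∀ i, 0 ≤ p i) (hp1 : ∑ i, p i = 1) (hf0 : ∀ i, 0 ≤ f i) (hfH : ∀ i, f i ≤ H) :
    ∑ i, p i * f i ∈ Set.Icc 0 H :=
  (convex_Icc 0 H).sum_mem (fun i _ => hp0 i) hp1 fun i _ => ⟨hf0 i, hfH i⟩

theorem clamped_optimistic_bounds {r c e ê H : ℝ} (hvalid : |e - ê| ≤ c)
    (h0 : 0 ≤ r + e) (hH : r + e ≤ H) :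
    r + e ≤ max (min (r + c + ê) H) 0 ∧ max (min (r + c + ê) H) 0 ≤ r + 2 * c + e := by
  obtain ⟨hlo, hhi⟩ := abs_le.mp hvalid
  have hc : 0 ≤ c := (abs_nonneg _).trans hvalid
  exact ⟨le_max_of_le_left (le_min (by linarith) hH),
    max_le ((min_le_left _ _).trans (by linarith)) (by linarith)⟩

theorem stmt_0_general {X A : Type*} [Fintype X]
    (γ : ℝ) (hγ0 : 0 < γ) (hγ1 : γ < 1) (H : ℝ) (hH : H = 1 / (1 - γ))
    (P : X → A → X → ℝ) (hP0 : ∀ x a x', 0 ≤ P x a x') (hP1 : ∀ x a, ∑ x', P x a x' = 1)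
    (r : X → A → ℝ) (hr0 : ∀ x a, 0 ≤ r x a) (hr1 : ∀ x a, r x a ≤ 1)
    (V : X → ℝ) (hV0 : ∀ x, 0 ≤ V x) (hVH : ∀ x, V x ≤ H)
    (CB : X → A → ℝ)
    (Phat : X → A → X → ℝ)
    (hvalid : ∀ x a, |γ * ∑ x', (P x a x' - Phat x a x') * V x'| ≤ CB x a)
    (Q : X → A → ℝ)
    (hQ : ∀ x a, Q x a = max (min (r x a + CB x a + γ * ∑ x', Phat x a x' * V x') H) 0) :
    ∀ x a,
      r x a + γ * ∑ x', P x a x' * V x' ≤ Q x a ∧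
      Q x a ≤ r x a + 2 * CB x a + γ * ∑ x', P x a x' * V x' := by
  intro x a
  obtain ⟨hPV0, hPVH⟩ := sum_mul_mem_Icc_of_stochastic (hP0 x a) (hP1 x a) hV0 hVH
  have hgap : γ * ∑ x', (P x a x' - Phat x a x') * V x'
      = γ * ∑ x', P x a x' * V x' - γ * ∑ x', Phat x a x' * V x' := by
    simp only [sub_mul, sum_sub_distrib, mul_sub]
  have hhorizon : 1 + γ * H = H := hH ▸ one_add_mul_one_div_one_sub hγ1.ne
  have hbackup_le : γ * ∑ x', P x a x' * V x' ≤ γ * H :=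
    mul_le_mul_of_nonneg_left hPVH hγ0.le
  rw [hQ]
  exact clamped_optimistic_bounds (hgap ▸ hvalid x a)
    (add_nonneg (hr0 x a) (mul_nonneg hγ0.le hPV0)) (by linarith [hr1 x a])

/-- Lemma 1 (bounds on the optimistic Q-iterate).  Let `V : X → [0,H]`, `CB ≥ 0`, and let
`P̂` be any estimated model satisfying the validity condition
`|γ Σ_{x'} (P(x'|x,a) − P̂(x'|x,a)) V(x')| ≤ CB(x,a)`.  With
`Q(x,a) = Π_H[r(x,a) + CB(x,a) + γ (P̂ V)(x,a)]` (clamping to `[0,H]`), for every `(x,a)`: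
`r + γ P V ≤ Q ≤ r + 2 CB + γ P V`. -/
theorem stmt_0 {X A : Type*} [Fintype X] [Fintype A] [Nonempty X] [Nonempty A]
    (γ : ℝ) (hγ0 : 0 < γ) (hγ1 : γ < 1) (H : ℝ) (hH : H = 1 / (1 - γ))
    (P : X → A → X → ℝ) (hP0 : ∀ x a x', 0 ≤ P x a x') (hP1 : ∀ x a, ∑ x', P x a x' = 1)
    (r : X → A → ℝ) (hr0 : ∀ x a, 0 ≤ r x a) (hr1 : ∀ x a, r x a ≤ 1)
    (V : X → ℝ) (hV0 : ∀ x, 0 ≤ V x) (hVH : ∀ x, V x ≤ H)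
    (CB : X → A → ℝ) (hCB : ∀ x a, 0 ≤ CB x a)
    (Phat : X → A → X → ℝ)
    (hvalid : ∀ x a, |γ * ∑ x', (P x a x' - Phat x a x') * V x'| ≤ CB x a)
    (Q : X → A → ℝ)
    (hQ : ∀ x a, Q x a = max (min (r x a + CB x a + γ * ∑ x', Phat x a x' * V x') H) 0) :
    ∀ x a,
      r x a + γ * ∑ x', P x a x' * V x' ≤ Q x a ∧
      Q x a ≤ r x a + 2 * CB x a + γ * ∑ x', P x a x' * V x' :=
  stmt_0_general γ hγ0 hγ1 H hH P hP0 hP1 r hr0 hr1 V hV0 hVH CB Phat hvalid Q hQ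
end

section
/- Fix K ≥ 1 and η > 0. Let V₀ = 0, let π₀ be any policy, and let Q₁(x,a) = V₀(x) = 0. For k = 1, …, K define recursively: V_k(x) = (1/η) · log( Σ_a π_{k−1}(a|x) · exp(η Q_k(x,a)) ); π_k(a|x) = π_{k−1}(a|x) · exp( η (Q_k(x,a) − V_k(x)) ); and Q_{k+1}(x,a) = Π_H[ r(x,a) + CB_k(x,a) + γ · Σ_{x'} P̂_k(x'|x,a) V_k(x') ], where Π_H clamps to [0,H], the P̂_k : X × A × X → ℝ are arbitrary estimated models, and the CB_k : X × A → [0,∞) are nonnegative bonuses. Assume the validity condition: for every k ∈ {1,…,K} and every (x,a), |γ · Σ_{x'} (P(x'|x,a) − P̂_k(x'|x,a)) V_k(x')| ≤ CB_k(x,a). Then for any policy π* whose occupancy measure μ* = μ^{π*} maximizes ⟨μ^π, r⟩ over policies π, the following holds: Σ_{k=1}^K ( ⟨μ*, r⟩ − ⟨μ^{π_k}, r⟩ ) ≤ 2 · Σ_{k=1}^K ⟨μ^{π_k}, CB_k⟩ + 2H + (1/η) · H(π* ‖ π₀) + (η H³ K)/2, where ⟨μ, f⟩ = Σ_{x,a}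 μ(x,a) f(x,a). -/
open scoped ENNReal

/-- The state distribution of the Markov chain induced by policy `π`:
`stateDist P ν₀ π t x = Pr_π[X_t = x]`. -/
noncomputable def stateDist {X A : Type*} [Fintype X] [Fintype A]
    (P : X → A → X → ℝ) (ν₀ : X → ℝ) (π : X → A → ℝ) : ℕ → X → ℝ
  | 0 => ν₀
  | t + 1 => fun x' => ∑ x, ∑ a, stateDist P ν₀ π t x * π x a * P x a x'

/-- The normalized discounted state-action occupancy measure
`μ^π(x,a) = (1−γ) Σ_{t≥0} γ^t Pr_π[X_t = x, A_t = a]`. -/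
noncomputable def occ {X A : Type*} [Fintype X] [Fintype A]
    (γ : ℝ) (P : X → A → X → ℝ) (ν₀ : X → ℝ) (π : X → A → ℝ) (x : X) (a : A) : ℝ :=
  (1 - γ) * ∑' t : ℕ, γ ^ t * stateDist P ν₀ π t x * π x a

open Classical in
/-- Relative entropy between two (finitely supported) distributions given as functions,
valued in `[0,∞]`, with `KL(p‖q) = ∞` when `p` is not absolutely continuous w.r.t. `q`. -/
noncomputable def KLd {S : Type*} [Fintype S] (p q : S → ℝ) : ℝ≥0∞ :=
  if ∀ s, q s = 0 → p s = 0 then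
    ENNReal.ofReal (∑ s, if p s = 0 then (0 : ℝ) else p s * Real.log (p s / q s))
  else ⊤

/-- The conditional relative entropy `H(π‖π') = Σ_x ν^π(x) KL(π(·|x) ‖ π'(·|x))`, where
`ν^π(x) = Σ_a μ^π(x,a)` is the discounted state occupancy of `π`. -/
noncomputable def condKL {X A : Type*} [Fintype X] [Fintype A]
    (γ : ℝ) (P : X → A → X → ℝ) (ν₀ : X → ℝ) (π π' : X → A → ℝ) : ℝ≥0∞ :=
  ∑ x, ENNReal.ofReal (∑ a, occ γ P ν₀ π x a) * KLd (π x) (π' x)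

/-!
Optimism and pessimism of the clipped, bonus-corrected `Q_{k+1}` sandwich it between the
one-step lookaheads of `V_k`, so by the Bellman flow equation the regret of `π_k` against `π*`
is at most `⟨ν*, ⟨π*, Q_{k+1}⟩ - V_k⟩ - ⟨ν^{π_k}, ⟨π_k, Q_{k+1}⟩ - V_k⟩ + 2⟨μ^{π_k}, CB_k⟩`.
On the comparator's states the mirror-descent identity of the exponential-weights update turns
`⟨π*, Q_{k+1}⟩ - V_{k+1}` into a drop of `KL(π* ‖ π_k) / η`; on the learner's states replacing
`⟨π_k, Q_{k+1}⟩` by `V_{k+1}` costs `η H² / 2`, and replacing `ν^{π_k}` by `ν^{π_{k+1}}` costs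
`γ η H³ / 2` since `‖π_{k+1} - π_k‖₁ ≤ η H`. Hence the potential
`⟨ν^{π_k} - ν*, V_k⟩ + H(π* ‖ π_k) / η` pays for the regret of each round up to
`2⟨μ^{π_k}, CB_k⟩ + η H³ / 2`, and summing telescopes: the potential starts at
`H(π* ‖ π₀) / η` (as `V_1 = 0`, `π_1 = π₀`) and never drops below `-H`.
-/

namespace RAVI

open Finset

section Elementary

open Real

theorem exp_sub_one_le_mul_exp (y : ℝ) : exp y - 1 ≤ y * exp y := by
  have h : (1 - y) * exp y ≤ exp (-y) * exp y :=
    mul_le_mul_of_nonneg_right (by linarith [add_one_le_exp (-y)]) (exp_pos y).le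
  rw [← exp_add, neg_add_cancel, exp_zero] at h
  linarith

theorem abs_exp_sub_one_le_exp_mul_add {y a b : ℝ} (ha : y ≤ a) (hb : -y ≤ b) (ha0 : 0 ≤ a)
    (hb0 : 0 ≤ b) : |exp y - 1| ≤ exp y * a + b := by
  rcases le_total 0 y with hy | hy
  · rw [abs_of_nonneg (by linarith [one_le_exp hy])]
    have := exp_sub_one_le_mul_exp y
    nlinarith [exp_pos y]
  · rw [abs_of_nonpos (by linarith [exp_le_one_iff.mpr hy])]
    nlinarith [add_one_le_exp y, exp_pos y]

theorem sum_mul_mem_Icc_of_mem_stdSimplex {S : Type*} [Fintype S] {p f : S → ℝ} {L U : ℝ}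
    (hp : p ∈ stdSimplex ℝ S) (hf : ∀ s, f s ∈ Set.Icc L U) :
    ∑ s, p s * f s ∈ Set.Icc L U := by
  constructor
  · calc L = ∑ s, p s * L := by rw [← sum_mul, hp.2, one_mul]
      _ ≤ ∑ s, p s * f s := by gcongr with s; exacts [hp.1 s, (hf s).1]
  · calc ∑ s, p s * f s ≤ ∑ s, p s * U := by gcongr with s; exacts [hp.1 s, (hf s).2]
      _ = U := by rw [← sum_mul, hp.2, one_mul]

/-- Centring `f` at `(L + U) / 2` does not change the left side, as `p - q` has total mass zero. -/
theorem sum_sub_mul_le_of_sum_eq {S : Type*} [Fintype S] {p q f : S → ℝ} {L U : ℝ}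
    (hpq : ∑ s, p s = ∑ s, q s) (hf : ∀ s, f s ∈ Set.Icc L U) :
    ∑ s, (p s - q s) * f s ≤ (∑ s, |p s - q s|) * ((U - L) / 2) := by
  have hcentre : ∑ s, (p s - q s) * f s = ∑ s, (p s - q s) * (f s - (L + U) / 2) := by
    simp only [mul_sub, sum_sub_distrib, ← sum_mul, hpq, sub_self, zero_mul, sub_zero]
  rw [hcentre, sum_mul]
  refine sum_le_sum fun s _ => ?_
  calc (p s - q s) * (f s - (L + U) / 2) ≤ |p s - q s| * |f s - (L + U) / 2| := by
        rw [← abs_mul]; exact le_abs_self _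
    _ ≤ |p s - q s| * ((U - L) / 2) := by
        gcongr
        rw [abs_le]
        constructor <;> linarith [(hf s).1, (hf s).2]

theorem sum_Icc_le_of_add_le {a b ℓ : ℕ → ℝ} :
    ∀ {K : ℕ}, (∀ k ∈ Icc 1 K, a k + ℓ (k + 1) ≤ ℓ k + b k) →
      ∑ k ∈ Icc 1 K, a k ≤ ℓ 1 - ℓ (K + 1) + ∑ k ∈ Icc 1 K, b k
  | 0, _ => by simp
  | K + 1, h => by
    have ih := sum_Icc_le_of_add_le fun k hk => h k (Icc_subset_Icc_right K.le_succ hk)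
    have hlast := h (K + 1) (right_mem_Icc.mpr (by omega))
    rw [sum_Icc_succ_top (by omega), sum_Icc_succ_top (by omega)]
    linarith

theorem mem_Icc_of_eq_max_min {X A : Type*} {H : ℝ} {K : ℕ} {Q f : ℕ → X → A → ℝ} (hH0 : 0 ≤ H)
    (hQ1 : Q 1 = 0)
    (hQ : ∀ k ∈ Icc 1 K, ∀ x a, Q (k + 1) x a = max (min (f k x a) H) 0) :
    ∀ k ∈ Icc 1 (K + 1), ∀ x a, Q k x a ∈ Set.Icc 0 H := by
  intro k hk x a
  obtain ⟨hk1, hkK⟩ := mem_Icc.mp hk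
  obtain rfl | hk1 := hk1.eq_or_lt
  · simp [hQ1, hH0]
  obtain ⟨j, rfl⟩ : ∃ j, k = j + 1 := ⟨k - 1, by omega⟩
  rw [hQ j (mem_Icc.mpr ⟨by omega, by omega⟩)]
  exact ⟨le_max_right _ _, max_le (min_le_right _ _) hH0⟩

end Elementary

section SoftUpdate

open Real

variable {A : Type*} [Fintype A]

noncomputable def softValue (η : ℝ) (p q : A → ℝ) : ℝ :=
  1 / η * log (∑ a, p a * exp (η * q a))

noncomputable def softUpdate (η : ℝ) (p q : A → ℝ) : A → ℝ :=
  fun a => p a * exp (η * (q a - softValue η p q))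

/-- Agrees with `KLd p q` when `p ≪ q` (the convention `0 log 0 = 0` holds as `0 * _ = 0`);
without absolute continuity it is a junk value. -/
noncomputable def relEntropy (p q : A → ℝ) : ℝ :=
  ∑ a, p a * log (p a / q a)

variable {η : ℝ} {p q σ : A → ℝ} {L U : ℝ}

theorem exp_mul_softValue (hη : η ≠ 0) (hp : p ∈ stdSimplex ℝ A) :
    exp (η * softValue η p q) = ∑ a, p a * exp (η * q a) := by
  obtain ⟨a₀, -, ha₀⟩ := exists_ne_zero_of_sum_ne_zero (hp.2.trans_ne one_ne_zero)
  have hpos : 0 < ∑ a, p a * exp (η * q a) :=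
    sum_pos' (fun a _ => mul_nonneg (hp.1 a) (exp_pos _).le)
      ⟨a₀, mem_univ _, mul_pos ((hp.1 a₀).lt_of_ne' ha₀) (exp_pos _)⟩
  rw [softValue, ← mul_assoc, mul_one_div_cancel hη, one_mul, exp_log hpos]

theorem softValue_mem_Icc (hη : 0 < η) (hp : p ∈ stdSimplex ℝ A)
    (hq : ∀ a, q a ∈ Set.Icc L U) : softValue η p q ∈ Set.Icc L U := by
  have h := sum_mul_mem_Icc_of_mem_stdSimplex (f := fun a => exp (η * q a)) hp
    fun a => ⟨exp_le_exp.mpr (mul_le_mul_of_nonneg_left (hq a).1 hη.le),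
      exp_le_exp.mpr (mul_le_mul_of_nonneg_left (hq a).2 hη.le)⟩
  rw [← exp_mul_softValue hη.ne' hp, Set.mem_Icc, exp_le_exp, exp_le_exp] at h
  exact ⟨le_of_mul_le_mul_left h.1 hη, le_of_mul_le_mul_left h.2 hη⟩

theorem softValue_zero (hp : p ∈ stdSimplex ℝ A) : softValue η p 0 = 0 := by
  simp [softValue, hp.2]

theorem softUpdate_zero (hp : p ∈ stdSimplex ℝ A) : softUpdate η p 0 = p := by
  ext a
  simp [softUpdate, softValue_zero hp]

theorem softUpdate_eq_zero_iff {a : A} : softUpdate η p q a = 0 ↔ p a = 0 := by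
  simp [softUpdate, exp_ne_zero]

theorem softUpdate_mem_stdSimplex (hη : η ≠ 0) (hp : p ∈ stdSimplex ℝ A) :
    softUpdate η p q ∈ stdSimplex ℝ A := by
  refine ⟨fun a => mul_nonneg (hp.1 a) (exp_pos _).le, ?_⟩
  have hZ := exp_mul_softValue (q := q) hη hp
  simp only [softUpdate, mul_sub, exp_sub, mul_div_assoc', ← sum_div, ← hZ]
  exact div_self (exp_pos _).ne'

/-- Pointwise `|softUpdate - p| = p |exp y - 1|` with `y = η (q - v)`, `v = softValue η p q`,
and `y ≤ η (U - v)`, `-y ≤ η (v - L)`. -/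
theorem sum_abs_softUpdate_sub_le (hη : 0 < η) (hp : p ∈ stdSimplex ℝ A)
    (hq : ∀ a, q a ∈ Set.Icc L U) : ∑ a, |softUpdate η p q a - p a| ≤ η * (U - L) := by
  set v := softValue η p q
  obtain ⟨hLv, hvU⟩ := softValue_mem_Icc hη hp hq
  have hterm : ∀ a, |softUpdate η p q a - p a|
      ≤ softUpdate η p q a * (η * (U - v)) + p a * (η * (v - L)) := fun a => by
    have h := abs_exp_sub_one_le_exp_mul_add (y := η * (q a - v)) (a := η * (U - v))
      (b := η * (v - L)) (by nlinarith [(hq a).2]) (by nlinarith [(hq a).1]) (by nlinarith)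
      (by nlinarith)
    calc |softUpdate η p q a - p a| = p a * |exp (η * (q a - v)) - 1| := by
          rw [← abs_of_nonneg (hp.1 a), ← abs_mul, abs_of_nonneg (hp.1 a)]
          simp only [softUpdate, v, mul_sub, mul_one]
      _ ≤ p a * (exp (η * (q a - v)) * (η * (U - v)) + η * (v - L)) :=
          mul_le_mul_of_nonneg_left h (hp.1 a)
      _ = _ := by simp only [softUpdate, v]; ring
  calc ∑ a, |softUpdate η p q a - p a|
      ≤ ∑ a, (softUpdate η p q a * (η * (U - v)) + p a * (η * (v - L))) :=
        sum_le_sum fun a _ => hterm a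
    _ = η * (U - L) := by
      rw [sum_add_distrib, ← sum_mul, ← sum_mul, (softUpdate_mem_stdSimplex hη.ne' hp).2, hp.2]
      ring

/-- The weights of `softUpdate` give the payoff `q - softValue` a nonnegative mean, and against
the (mass-zero) difference `softUpdate - p` the payoff is controlled by the `ℓ¹` bound. -/
theorem softValue_sub_sum_mul_le (hη : 0 < η) (hp : p ∈ stdSimplex ℝ A)
    (hq : ∀ a, q a ∈ Set.Icc L U) :
    softValue η p q - ∑ a, p a * q a ≤ η * (U - L) ^ 2 / 2 := by
  set v := softValue η p q
  set t := softUpdate η p q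
  have ht := softUpdate_mem_stdSimplex (q := q) hη.ne' hp
  have hmean : 0 ≤ ∑ a, t a * (q a - v) := by
    have h := sum_le_sum fun a (_ : a ∈ univ) =>
      mul_le_mul_of_nonneg_left (exp_sub_one_le_mul_exp (η * (q a - v))) (hp.1 a)
    have hlhs : ∑ a, p a * (exp (η * (q a - v)) - 1) = 0 := by
      simp only [mul_sub_one, sum_sub_distrib]
      rw [show ∑ a, p a * exp (η * (q a - v)) = ∑ a, t a from rfl, ht.2, hp.2, sub_self]
    have hrhs : ∑ a, p a * (η * (q a - v) * exp (η * (q a - v))) = η * ∑ a, t a * (q a - v) := by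
      rw [mul_sum]
      exact sum_congr rfl fun a _ => by simp only [t, softUpdate, v]; ring
    rw [hlhs, hrhs] at h
    exact nonneg_of_mul_nonneg_right (by linarith) hη
  have hpair := sum_sub_mul_le_of_sum_eq (p := t) (q := p) (f := fun a => q a - v)
    (L := L - v) (U := U - v) (by rw [ht.2, hp.2])
    fun a => ⟨by linarith [(hq a).1], by linarith [(hq a).2]⟩
  have hl1 := sum_abs_softUpdate_sub_le hη hp hq
  have hsplit : v - ∑ a, p a * q a = ∑ a, (t a - p a) * (q a - v) - ∑ a, t a * (q a - v) := by
    simp only [sub_mul, mul_sub, sum_sub_distrib, ← sum_mul, hp.2]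
    ring
  obtain ⟨hLv, hvU⟩ := softValue_mem_Icc hη hp hq
  have hUL : 0 ≤ (U - L) / 2 := by linarith
  calc v - ∑ a, p a * q a ≤ (∑ a, |t a - p a|) * ((U - v - (L - v)) / 2) := by linarith
    _ ≤ η * (U - L) * ((U - L) / 2) := by
      rw [show U - v - (L - v) = U - L by ring]
      exact mul_le_mul_of_nonneg_right hl1 hUL
    _ = η * (U - L) ^ 2 / 2 := by ring

theorem relEntropy_nonneg (hp : p ∈ stdSimplex ℝ A) (hq : q ∈ stdSimplex ℝ A)
    (hpq : ∀ a, q a = 0 → p a = 0) : 0 ≤ relEntropy p q := by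
  have hterm : ∀ a, p a - q a ≤ p a * log (p a / q a) := fun a => by
    rcases (hp.1 a).eq_or_lt with hpa | hpa
    · rw [← hpa]; simpa using hq.1 a
    have hqa : 0 < q a := (hq.1 a).lt_of_ne' fun h => hpa.ne' (hpq a h)
    have := one_sub_inv_le_log_of_pos (div_pos hpa hqa)
    rw [inv_div] at this
    calc p a - q a = p a * (1 - q a / p a) := by field_simp
      _ ≤ p a * log (p a / q a) := mul_le_mul_of_nonneg_left this hpa.le
  have := sum_le_sum fun a (_ : a ∈ univ) => hterm a
  rwa [sum_sub_distrib, hp.2, hq.2, sub_self] at this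

/-- The mirror-descent identity for the exponential-weights step. -/
theorem sum_mul_sub_softValue (hη : η ≠ 0) (hσ : ∑ a, σ a = 1)
    (hσp : ∀ a, p a = 0 → σ a = 0) :
    ∑ a, σ a * q a - softValue η p q = (relEntropy σ p - relEntropy σ (softUpdate η p q)) / η := by
  rw [eq_div_iff hη, relEntropy, relEntropy, ← sum_sub_distrib]
  have hterm : ∀ a, σ a * log (σ a / p a) - σ a * log (σ a / softUpdate η p q a)
      = η * (σ a * q a) - η * softValue η p q * σ a := fun a => by
    rcases eq_or_ne (σ a) 0 with hσa | hσa
    · simp [hσa]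
    have hpa : p a ≠ 0 := fun h => hσa (hσp a h)
    rw [softUpdate, log_div hσa hpa, log_div hσa (mul_ne_zero hpa (exp_ne_zero _)),
      log_mul hpa (exp_ne_zero _), log_exp]
    ring
  simp only [hterm, sum_sub_distrib, ← mul_sum, hσ]
  ring

end SoftUpdate

structure IsDiscountedMDP {X A : Type*} [Fintype X] (γ : ℝ) (P : X → A → X → ℝ) (ν₀ : X → ℝ) :
    Prop where
  discount_nonneg : 0 ≤ γ
  discount_lt_one : γ < 1
  kernel_mem : ∀ x a, P x a ∈ stdSimplex ℝ X
  initial_mem : ν₀ ∈ stdSimplex ℝ X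

section Occupancy

variable {X A : Type*} [Fintype X] [Fintype A]

/-- The discounted state occupancy `ν^ρ`. -/
noncomputable def stateOcc (γ : ℝ) (P : X → A → X → ℝ) (ν₀ : X → ℝ) (ρ : X → A → ℝ) (x : X) : ℝ :=
  (1 - γ) * ∑' t : ℕ, γ ^ t * stateDist P ν₀ ρ t x

/-- The pairing `⟨μ^ρ, f⟩`. -/
noncomputable def occInner (γ : ℝ) (P : X → A → X → ℝ) (ν₀ : X → ℝ) (ρ : X → A → ℝ)
    (f : X → A → ℝ) : ℝ :=
  ∑ x, ∑ a, occ γ P ν₀ ρ x a * f x a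

variable {γ : ℝ} {P : X → A → X → ℝ} {ν₀ : X → ℝ} {ρ ρ' σ : X → A → ℝ}

theorem stateDist_mem_stdSimplex (hP : ∀ x a, P x a ∈ stdSimplex ℝ X) (hν : ν₀ ∈ stdSimplex ℝ X)
    (hρ : ∀ x, ρ x ∈ stdSimplex ℝ A) : ∀ t, stateDist P ν₀ ρ t ∈ stdSimplex ℝ X
  | 0 => hν
  | t + 1 => by
    obtain ⟨h0, h1⟩ := stateDist_mem_stdSimplex hP hν hρ t
    refine ⟨fun x' => sum_nonneg fun x _ => sum_nonneg fun a _ =>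
      mul_nonneg (mul_nonneg (h0 x) ((hρ x).1 a)) ((hP x a).1 x'), ?_⟩
    calc ∑ x', ∑ x, ∑ a, stateDist P ν₀ ρ t x * ρ x a * P x a x'
        = ∑ x, ∑ a, stateDist P ν₀ ρ t x * ρ x a * ∑ x', P x a x' := by
          rw [sum_comm]
          exact sum_congr rfl fun x _ => by rw [sum_comm]; simp only [mul_sum]
      _ = 1 := by simp only [(hP _ _).2, mul_one, ← mul_sum, (hρ _).2, h1]

theorem summable_stateDist (hM : IsDiscountedMDP γ P ν₀) (hρ : ∀ x, ρ x ∈ stdSimplex ℝ A)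
    (x : X) : Summable fun t => γ ^ t * stateDist P ν₀ ρ t x := by
  have hd := stateDist_mem_stdSimplex hM.kernel_mem hM.initial_mem hρ
  refine (summable_geometric_of_lt_one hM.discount_nonneg hM.discount_lt_one).of_nonneg_of_le
    (fun t => mul_nonneg (pow_nonneg hM.discount_nonneg t) ((hd t).1 x)) fun t => ?_
  exact mul_le_of_le_one_right (pow_nonneg hM.discount_nonneg t)
    (mem_Icc_of_mem_stdSimplex (hd t) x).2

theorem occ_eq_stateOcc_mul (x : X) (a : A) :
    occ γ P ν₀ ρ x a = stateOcc γ P ν₀ ρ x * ρ x a := by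
  rw [occ, stateOcc, mul_assoc, tsum_mul_right]

theorem stateOcc_mem_stdSimplex (hM : IsDiscountedMDP γ P ν₀) (hρ : ∀ x, ρ x ∈ stdSimplex ℝ A) :
    stateOcc γ P ν₀ ρ ∈ stdSimplex ℝ X := by
  have hd := stateDist_mem_stdSimplex hM.kernel_mem hM.initial_mem hρ
  have h1γ : 0 < 1 - γ := sub_pos.mpr hM.discount_lt_one
  refine ⟨fun x => mul_nonneg h1γ.le (tsum_nonneg fun t =>
    mul_nonneg (pow_nonneg hM.discount_nonneg t) ((hd t).1 x)), ?_⟩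
  simp only [stateOcc, ← mul_sum]
  rw [← Summable.tsum_finsetSum fun x _ => summable_stateDist hM hρ x]
  simp only [← mul_sum, (hd _).2, mul_one]
  rw [tsum_geometric_of_lt_one hM.discount_nonneg hM.discount_lt_one, mul_inv_cancel₀ h1γ.ne']

/-- The Bellman flow equation. -/
theorem stateOcc_eq (hM : IsDiscountedMDP γ P ν₀) (hρ : ∀ x, ρ x ∈ stdSimplex ℝ A) (x' : X) :
    stateOcc γ P ν₀ ρ x'
      = (1 - γ) * ν₀ x' + γ * ∑ x, ∑ a, stateOcc γ P ν₀ ρ x * ρ x a * P x a x' := by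
  have hs := summable_stateDist hM hρ
  have hshift : ∑' t, γ ^ (t + 1) * stateDist P ν₀ ρ (t + 1) x'
      = γ * ∑ x, ∑ a, (∑' t, γ ^ t * stateDist P ν₀ ρ t x) * ρ x a * P x a x' := by
    have hterm : ∀ t, γ ^ (t + 1) * stateDist P ν₀ ρ (t + 1) x'
        = ∑ x, ∑ a, γ ^ t * stateDist P ν₀ ρ t x * (γ * ρ x a * P x a x') := fun t => by
      simp only [stateDist, mul_sum, pow_succ]
      exact sum_congr rfl fun x _ => sum_congr rfl fun a _ => by ring
    simp only [hterm, mul_sum]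
    rw [Summable.tsum_finsetSum fun x _ => summable_sum fun a _ => (hs x).mul_right _]
    refine sum_congr rfl fun x _ => ?_
    rw [Summable.tsum_finsetSum fun a _ => (hs x).mul_right _]
    exact sum_congr rfl fun a _ => by rw [tsum_mul_right]; ring
  rw [stateOcc, (hs x').tsum_eq_zero_add, hshift]
  simp only [stateOcc, stateDist, pow_zero, one_mul, mul_assoc, ← mul_sum]
  ring

theorem sum_stateOcc_mul_kernel (hM : IsDiscountedMDP γ P ν₀) (hρ : ∀ x, ρ x ∈ stdSimplex ℝ A)
    (f : X → ℝ) :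
    γ * ∑ x, ∑ a, stateOcc γ P ν₀ ρ x * ρ x a * ∑ x', P x a x' * f x'
      = ∑ x, stateOcc γ P ν₀ ρ x * f x - (1 - γ) * ∑ x, ν₀ x * f x := by
  have hflow : ∑ x', stateOcc γ P ν₀ ρ x' * f x'
      = ∑ x', ((1 - γ) * ν₀ x' + γ * ∑ x, ∑ a, stateOcc γ P ν₀ ρ x * ρ x a * P x a x') * f x' :=
    sum_congr rfl fun x' _ => congrArg (· * f x') (stateOcc_eq hM hρ x')
  rw [eq_sub_iff_add_eq, hflow]
  simp only [add_mul, sum_add_distrib, mul_sum, sum_mul]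
  rw [add_comm]
  congr 1
  · exact sum_congr rfl fun x _ => by ring
  · rw [eq_comm, sum_comm]
    refine sum_congr rfl fun x _ => ?_
    rw [sum_comm]
    exact sum_congr rfl fun a _ => sum_congr rfl fun x' _ => by ring

theorem occInner_eq (g : X → A → ℝ) :
    occInner γ P ν₀ ρ g = ∑ x, stateOcc γ P ν₀ ρ x * ∑ a, ρ x a * g x a := by
  simp only [occInner, occ_eq_stateOcc_mul, mul_sum, mul_assoc]

theorem occInner_add (f g : X → A → ℝ) :
    occInner γ P ν₀ ρ (fun x a => f x a + g x a) = occInner γ P ν₀ ρ f + occInner γ P ν₀ ρ g := by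
  simp only [occInner, mul_add, sum_add_distrib]

theorem occInner_mono (hM : IsDiscountedMDP γ P ν₀) (hρ : ∀ x, ρ x ∈ stdSimplex ℝ A)
    {f g : X → A → ℝ} (h : ∀ x a, f x a ≤ g x a) : occInner γ P ν₀ ρ f ≤ occInner γ P ν₀ ρ g :=
  sum_le_sum fun x _ => sum_le_sum fun a _ => mul_le_mul_of_nonneg_left (h x a) <| by
    rw [occ_eq_stateOcc_mul]
    exact mul_nonneg ((stateOcc_mem_stdSimplex hM hρ).1 x) ((hρ x).1 a)

theorem occInner_add_bellman (hM : IsDiscountedMDP γ P ν₀) (hρ : ∀ x, ρ x ∈ stdSimplex ℝ A)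
    (g : X → A → ℝ) (V : X → ℝ) :
    occInner γ P ν₀ ρ (fun x a => g x a + γ * ∑ x', P x a x' * V x')
      = occInner γ P ν₀ ρ g + (∑ x, stateOcc γ P ν₀ ρ x * V x - (1 - γ) * ∑ x, ν₀ x * V x) := by
  rw [occInner_add, ← sum_stateOcc_mul_kernel hM hρ V]
  congr 1
  rw [occInner_eq, mul_sum]
  refine sum_congr rfl fun x _ => ?_
  rw [mul_sum, mul_sum]
  exact sum_congr rfl fun a _ => by ring

theorem occInner_sub_occInner_le (hM : IsDiscountedMDP γ P ν₀) (hσ : ∀ x, σ x ∈ stdSimplex ℝ A)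
    (hρ : ∀ x, ρ x ∈ stdSimplex ℝ A) {r b q : X → A → ℝ} {V : X → ℝ}
    (hq : ∀ x a, q x a ∈ Set.Icc (r x a + γ * ∑ x', P x a x' * V x')
      (r x a + b x a + γ * ∑ x', P x a x' * V x')) :
    occInner γ P ν₀ σ r - occInner γ P ν₀ ρ r
      ≤ ∑ x, stateOcc γ P ν₀ σ x * (∑ a, σ x a * q x a - V x)
        - ∑ x, stateOcc γ P ν₀ ρ x * (∑ a, ρ x a * q x a - V x) + occInner γ P ν₀ ρ b := by
  have hlow := occInner_mono hM hσ fun x a => (hq x a).1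
  have hupp := occInner_mono hM hρ fun x a => (hq x a).2
  rw [occInner_add_bellman hM hσ, occInner_eq q] at hlow
  rw [occInner_add_bellman hM hρ (fun x a => r x a + b x a), occInner_add, occInner_eq q] at hupp
  simp only [mul_sub, sum_sub_distrib]
  linarith

theorem stateOcc_sub_stateOcc (hM : IsDiscountedMDP γ P ν₀) (hρ : ∀ x, ρ x ∈ stdSimplex ℝ A)
    (hρ' : ∀ x, ρ' x ∈ stdSimplex ℝ A) (x' : X) :
    stateOcc γ P ν₀ ρ' x' - stateOcc γ P ν₀ ρ x'
      = γ * ∑ x, ∑ a, ((stateOcc γ P ν₀ ρ' x - stateOcc γ P ν₀ ρ x) * ρ' x a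
          + stateOcc γ P ν₀ ρ x * (ρ' x a - ρ x a)) * P x a x' := by
  rw [stateOcc_eq hM hρ' x', stateOcc_eq hM hρ x', add_sub_add_left_eq_sub, ← mul_sub,
    ← sum_sub_distrib]
  refine congrArg _ (sum_congr rfl fun x _ => ?_)
  rw [← sum_sub_distrib]
  exact sum_congr rfl fun a _ => by ring

theorem sum_abs_stateOcc_sub_le (hM : IsDiscountedMDP γ P ν₀) (hρ : ∀ x, ρ x ∈ stdSimplex ℝ A)
    (hρ' : ∀ x, ρ' x ∈ stdSimplex ℝ A) {c : ℝ} (hc : ∀ x, ∑ a, |ρ' x a - ρ x a| ≤ c) :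
    ∑ x, |stateOcc γ P ν₀ ρ' x - stateOcc γ P ν₀ ρ x| ≤ γ * c / (1 - γ) := by
  set ν := stateOcc γ P ν₀ ρ
  set ν' := stateOcc γ P ν₀ ρ'
  have hν := stateOcc_mem_stdSimplex hM hρ
  have hγ := hM.discount_nonneg
  have hpoint : ∀ x', |ν' x' - ν x'|
      ≤ γ * ∑ x, ∑ a, (|ν' x - ν x| * ρ' x a + ν x * |ρ' x a - ρ x a|) * P x a x' := fun x' => by
    have hdiff : ν' x' - ν x'
        = γ * ∑ x, ∑ a, ((ν' x - ν x) * ρ' x a + ν x * (ρ' x a - ρ x a)) * P x a x' :=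
      stateOcc_sub_stateOcc hM hρ hρ' x'
    rw [hdiff, abs_mul, abs_of_nonneg hγ]
    refine mul_le_mul_of_nonneg_left ((abs_sum_le_sum_abs _ _).trans (sum_le_sum fun x _ =>
      (abs_sum_le_sum_abs _ _).trans (sum_le_sum fun a _ => ?_))) hγ
    rw [abs_mul, abs_of_nonneg ((hM.kernel_mem x a).1 x')]
    refine mul_le_mul_of_nonneg_right ((abs_add_le _ _).trans_eq ?_) ((hM.kernel_mem x a).1 x')
    rw [abs_mul, abs_mul, abs_of_nonneg ((hρ' x).1 a), abs_of_nonneg (hν.1 x)]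
  have hsum : ∑ x', |ν' x' - ν x'| ≤ γ * (∑ x, |ν' x - ν x| + c) :=
    calc ∑ x', |ν' x' - ν x'|
        ≤ ∑ x', γ * ∑ x, ∑ a, (|ν' x - ν x| * ρ' x a + ν x * |ρ' x a - ρ x a|) * P x a x' :=
          sum_le_sum fun x' _ => hpoint x'
      _ = γ * ∑ x, (|ν' x - ν x| + ν x * ∑ a, |ρ' x a - ρ x a|) := by
          rw [← mul_sum, sum_comm]
          refine congrArg _ (sum_congr rfl fun x _ => ?_)
          rw [sum_comm]
          simp only [← mul_sum, (hM.kernel_mem _ _).2, mul_one, sum_add_distrib, (hρ' x).2]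
      _ ≤ γ * ∑ x, (|ν' x - ν x| + ν x * c) := by
          gcongr with x
          exacts [hν.1 x, hc x]
      _ = γ * (∑ x, |ν' x - ν x| + c) := by
          rw [sum_add_distrib, ← sum_mul, hν.2, one_mul]
  rw [le_div_iff₀ (sub_pos.mpr hM.discount_lt_one)]
  linarith

end Occupancy

section Round

variable {X A : Type*} [Fintype X] [Fintype A]

/-- The real-valued counterpart of `condKL`. -/
noncomputable def condRelEntropy (γ : ℝ) (P : X → A → X → ℝ) (ν₀ : X → ℝ) (σ ρ : X → A → ℝ) : ℝ :=
  ∑ x, stateOcc γ P ν₀ σ x * relEntropy (σ x) (ρ x)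

def CondAbsCont (γ : ℝ) (P : X → A → X → ℝ) (ν₀ : X → ℝ) (σ ρ : X → A → ℝ) : Prop :=
  ∀ x, 0 < stateOcc γ P ν₀ σ x → ∀ a, ρ x a = 0 → σ x a = 0

noncomputable def potential (γ η : ℝ) (P : X → A → X → ℝ) (ν₀ : X → ℝ) (σ ρ : X → A → ℝ)
    (V : X → ℝ) : ℝ :=
  ∑ x, (stateOcc γ P ν₀ ρ x - stateOcc γ P ν₀ σ x) * V x + condRelEntropy γ P ν₀ σ ρ / η

variable {γ η H : ℝ} {P : X → A → X → ℝ} {ν₀ : X → ℝ} {σ ρ : X → A → ℝ}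

theorem CondAbsCont.softUpdate (h : CondAbsCont γ P ν₀ σ ρ) (q : X → A → ℝ) :
    CondAbsCont γ P ν₀ σ fun x => RAVI.softUpdate η (ρ x) (q x) :=
  fun x hx a ha => h x hx a (softUpdate_eq_zero_iff.mp ha)

theorem condRelEntropy_nonneg (hM : IsDiscountedMDP γ P ν₀) (hσ : ∀ x, σ x ∈ stdSimplex ℝ A)
    (hρ : ∀ x, ρ x ∈ stdSimplex ℝ A) (hac : CondAbsCont γ P ν₀ σ ρ) :
    0 ≤ condRelEntropy γ P ν₀ σ ρ := by
  refine sum_nonneg fun x _ => ?_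
  rcases ((stateOcc_mem_stdSimplex hM hσ).1 x).eq_or_lt with h0 | hpos
  · rw [← h0, zero_mul]
  · exact mul_nonneg hpos.le (relEntropy_nonneg (hσ x) (hρ x) (hac x hpos))

theorem neg_potential_le (hM : IsDiscountedMDP γ P ν₀) (hσ : ∀ x, σ x ∈ stdSimplex ℝ A)
    (hρ : ∀ x, ρ x ∈ stdSimplex ℝ A) (hac : CondAbsCont γ P ν₀ σ ρ) (hη : 0 ≤ η) {V : X → ℝ}
    (hV : ∀ x, V x ∈ Set.Icc 0 H) : -potential γ η P ν₀ σ ρ V ≤ H := by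
  have hρV : 0 ≤ ∑ x, stateOcc γ P ν₀ ρ x * V x :=
    sum_nonneg fun x _ => mul_nonneg ((stateOcc_mem_stdSimplex hM hρ).1 x) (hV x).1
  have hσV := (sum_mul_mem_Icc_of_mem_stdSimplex (stateOcc_mem_stdSimplex hM hσ) hV).2
  have hD := div_nonneg (condRelEntropy_nonneg hM hσ hρ hac) hη
  simp only [potential, sub_mul, sum_sub_distrib]
  linarith

theorem occInner_sub_add_potential_le (hM : IsDiscountedMDP γ P ν₀) (hH : H = 1 / (1 - γ))
    (hη : 0 < η) (hσ : ∀ x, σ x ∈ stdSimplex ℝ A) (hρ : ∀ x, ρ x ∈ stdSimplex ℝ A)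
    (hac : CondAbsCont γ P ν₀ σ ρ) {r b q : X → A → ℝ} {V : X → ℝ}
    (hqH : ∀ x a, q x a ∈ Set.Icc 0 H)
    (hq : ∀ x a, q x a ∈ Set.Icc (r x a + γ * ∑ x', P x a x' * V x')
      (r x a + 2 * b x a + γ * ∑ x', P x a x' * V x')) :
    occInner γ P ν₀ σ r - occInner γ P ν₀ ρ r
        + potential γ η P ν₀ σ (fun x => softUpdate η (ρ x) (q x))
            (fun x => softValue η (ρ x) (q x))
      ≤ potential γ η P ν₀ σ ρ V + (2 * occInner γ P ν₀ ρ b + η * H ^ 3 / 2) := by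
  set ρ' : X → A → ℝ := fun x => softUpdate η (ρ x) (q x)
  set V' : X → ℝ := fun x => softValue η (ρ x) (q x)
  have hρ' : ∀ x, ρ' x ∈ stdSimplex ℝ A := fun x => softUpdate_mem_stdSimplex hη.ne' (hρ x)
  have hV' : ∀ x, V' x ∈ Set.Icc 0 H := fun x => softValue_mem_Icc hη (hρ x) (hqH x)
  have hνσ := stateOcc_mem_stdSimplex hM hσ
  have hνρ := stateOcc_mem_stdSimplex hM hρ
  have hνρ' := stateOcc_mem_stdSimplex hM hρ'
  have h1γ : 0 < 1 - γ := sub_pos.mpr hM.discount_lt_one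
  have hHγ : (1 - γ) * H = 1 := by rw [hH]; field_simp [h1γ.ne']
  have hH0 : 0 ≤ H := by rw [hH]; exact (one_div_pos.mpr h1γ).le
  have hcompare := occInner_sub_occInner_le hM hσ hρ (b := fun x a => 2 * b x a) hq
  have h2b : occInner γ P ν₀ ρ (fun x a => 2 * b x a) = 2 * occInner γ P ν₀ ρ b := by
    simp only [occInner, mul_left_comm _ (2 : ℝ), ← mul_sum]
  have hmirror : ∑ x, stateOcc γ P ν₀ σ x * (∑ a, σ x a * q x a - V' x)
      = (condRelEntropy γ P ν₀ σ ρ - condRelEntropy γ P ν₀ σ ρ') / η := by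
    rw [condRelEntropy, condRelEntropy, ← sum_sub_distrib, sum_div]
    refine sum_congr rfl fun x _ => ?_
    rcases (hνσ.1 x).eq_or_lt with h0 | hpos
    · simp [← h0]
    · rw [sum_mul_sub_softValue hη.ne' (hσ x).2 (hac x hpos)]
      ring
  have hslack : ∑ x, stateOcc γ P ν₀ ρ x * (V' x - ∑ a, ρ x a * q x a) ≤ η * H ^ 2 / 2 := by
    calc ∑ x, stateOcc γ P ν₀ ρ x * (V' x - ∑ a, ρ x a * q x a)
        ≤ ∑ x, stateOcc γ P ν₀ ρ x * (η * (H - 0) ^ 2 / 2) := by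
          gcongr with x
          exacts [hνρ.1 x, softValue_sub_sum_mul_le hη (hρ x) (hqH x)]
      _ = η * H ^ 2 / 2 := by rw [← sum_mul, hνρ.2, one_mul, sub_zero]
  have hdrift : ∑ x, (stateOcc γ P ν₀ ρ' x - stateOcc γ P ν₀ ρ x) * V' x ≤ γ * η * H ^ 3 / 2 := by
    have hl1 := sum_abs_stateOcc_sub_le hM hρ hρ' fun x =>
      sum_abs_softUpdate_sub_le hη (hρ x) (hqH x)
    calc ∑ x, (stateOcc γ P ν₀ ρ' x - stateOcc γ P ν₀ ρ x) * V' x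
        ≤ (∑ x, |stateOcc γ P ν₀ ρ' x - stateOcc γ P ν₀ ρ x|) * ((H - 0) / 2) :=
          sum_sub_mul_le_of_sum_eq (hνρ'.2.trans hνρ.2.symm) hV'
      _ ≤ γ * (η * (H - 0)) / (1 - γ) * ((H - 0) / 2) :=
          mul_le_mul_of_nonneg_right hl1 (by linarith)
      _ = γ * η * H ^ 3 / 2 := by rw [div_eq_mul_one_div _ (1 - γ), ← hH]; ring
  have hconst : η * H ^ 2 / 2 + γ * η * H ^ 3 / 2 = η * H ^ 3 / 2 := by
    linear_combination -(η * H ^ 2 / 2) * hHγ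
  simp only [sub_div, mul_sub, sum_sub_distrib] at hcompare hmirror hslack
  simp only [potential, sub_mul, sum_sub_distrib] at hdrift ⊢
  linarith

end Round

section CondKL

variable {X A : Type*} [Fintype X] [Fintype A]
variable {γ : ℝ} {P : X → A → X → ℝ} {ν₀ : X → ℝ} {σ ρ : X → A → ℝ}

theorem sum_occ (hσ : ∀ x, σ x ∈ stdSimplex ℝ A) (x : X) :
    ∑ a, occ γ P ν₀ σ x a = stateOcc γ P ν₀ σ x := by
  simp only [occ_eq_stateOcc_mul, ← mul_sum, (hσ x).2, mul_one]

theorem condKL_eq_top (hσ : ∀ x, σ x ∈ stdSimplex ℝ A) (h : ¬CondAbsCont γ P ν₀ σ ρ) :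
    condKL γ P ν₀ σ ρ = ⊤ := by
  simp only [CondAbsCont, not_forall] at h
  obtain ⟨x, hx, a, ha, hσa⟩ := h
  have hKL : KLd (σ x) (ρ x) = ⊤ := if_neg fun hac => hσa (hac a ha)
  refine ENNReal.sum_eq_top.mpr ⟨x, mem_univ x, ?_⟩
  rw [hKL, sum_occ hσ, ENNReal.mul_top (ENNReal.ofReal_pos.mpr hx).ne']

theorem condKL_eq_ofReal (hM : IsDiscountedMDP γ P ν₀) (hσ : ∀ x, σ x ∈ stdSimplex ℝ A)
    (hρ : ∀ x, ρ x ∈ stdSimplex ℝ A) (hac : CondAbsCont γ P ν₀ σ ρ) :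
    condKL γ P ν₀ σ ρ = ENNReal.ofReal (condRelEntropy γ P ν₀ σ ρ) := by
  have hν := stateOcc_mem_stdSimplex hM hσ
  have hterm : ∀ x, ENNReal.ofReal (stateOcc γ P ν₀ σ x) * KLd (σ x) (ρ x)
      = ENNReal.ofReal (stateOcc γ P ν₀ σ x * relEntropy (σ x) (ρ x)) := fun x => by
    rcases (hν.1 x).eq_or_lt with h0 | hpos
    · simp [← h0]
    rw [KLd, if_pos (hac x hpos), ENNReal.ofReal_mul hpos.le, relEntropy]
    congr 2
    exact sum_congr rfl fun a _ => by split_ifs with h <;> simp [h]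
  rw [condRelEntropy, ENNReal.ofReal_sum_of_nonneg, condKL]
  · simp only [sum_occ hσ, hterm]
  · intro x _
    rcases (hν.1 x).eq_or_lt with h0 | hpos
    · rw [← h0, zero_mul]
    · exact mul_nonneg hpos.le (relEntropy_nonneg (hσ x) (hρ x) (hac x hpos))

theorem ofReal_le_add_mul_condKL (hM : IsDiscountedMDP γ P ν₀) (hσ : ∀ x, σ x ∈ stdSimplex ℝ A)
    (hρ : ∀ x, ρ x ∈ stdSimplex ℝ A) {η a b : ℝ} (hη : 0 < η)
    (h : CondAbsCont γ P ν₀ σ ρ → a ≤ b + condRelEntropy γ P ν₀ σ ρ / η) :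
    ENNReal.ofReal a ≤ ENNReal.ofReal b + ENNReal.ofReal (1 / η) * condKL γ P ν₀ σ ρ := by
  by_cases hac : CondAbsCont γ P ν₀ σ ρ
  · rw [condKL_eq_ofReal hM hσ hρ hac, ← ENNReal.ofReal_mul (by positivity), one_div_mul_eq_div]
    exact (ENNReal.ofReal_le_ofReal (h hac)).trans ENNReal.ofReal_add_le
  · rw [condKL_eq_top hσ hac, ENNReal.mul_top (by simpa using hη), add_top]
    exact le_top

end CondKL

section Algorithm

variable {X A : Type*} [Fintype X] [Fintype A]
variable {γ η H : ℝ} {P : X → A → X → ℝ} {ν₀ : X → ℝ} {σ : X → A → ℝ} {r : X → A → ℝ}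
  {π : ℕ → X → A → ℝ} {V : ℕ → X → ℝ} {Q CB : ℕ → X → A → ℝ} {K : ℕ}

theorem max_min_lookahead_mem_Icc {p p' V : X → ℝ} {r c : ℝ} (hp : p ∈ stdSimplex ℝ X)
    (hV : ∀ x, V x ∈ Set.Icc 0 H) (hγ : 0 ≤ γ) (hr0 : 0 ≤ r) (hrH : r + γ * H ≤ H)
    (hc : |γ * ∑ x, (p x - p' x) * V x| ≤ c) :
    max (min (r + c + γ * ∑ x, p' x * V x) H) 0
      ∈ Set.Icc (r + γ * ∑ x, p x * V x) (r + 2 * c + γ * ∑ x, p x * V x) := by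
  obtain ⟨hPV0, hPVH⟩ := sum_mul_mem_Icc_of_mem_stdSimplex hp hV
  have hsplit : r + c + γ * ∑ x, p' x * V x
      = r + γ * ∑ x, p x * V x + c - γ * ∑ x, (p x - p' x) * V x := by
    simp only [sub_mul, sum_sub_distrib]
    ring
  obtain ⟨hc₁, hc₂⟩ := abs_le.mp hc
  have hγPV := mul_le_mul_of_nonneg_left hPVH hγ
  rw [hsplit]
  exact ⟨le_max_of_le_left (le_min (by linarith) (by linarith)),
    max_le ((min_le_left _ _).trans (by linarith)) (by nlinarith)⟩

theorem iterate_mem_stdSimplex_and_condAbsCont (hη : η ≠ 0) (hπ0 : ∀ x, π 0 x ∈ stdSimplex ℝ A)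
    (hac : CondAbsCont γ P ν₀ σ (π 0))
    (hπ : ∀ k ∈ Icc 1 K, π k = fun x => softUpdate η (π (k - 1) x) (Q k x)) :
    ∀ k ≤ K, (∀ x, π k x ∈ stdSimplex ℝ A) ∧ CondAbsCont γ P ν₀ σ (π k)
  | 0, _ => ⟨hπ0, hac⟩
  | k + 1, hk => by
    obtain ⟨hmem, hkac⟩ := iterate_mem_stdSimplex_and_condAbsCont hη hπ0 hac hπ k (by omega)
    rw [hπ (k + 1) (mem_Icc.mpr ⟨by omega, hk⟩)]
    exact ⟨fun x => softUpdate_mem_stdSimplex hη (hmem x), hkac.softUpdate _⟩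

/-- The potential `ℓ k` of the `k`-th iterate is telescoped over `k ∈ [1, K + 1]`; its last term
uses the update the algorithm would make after round `K`. -/
theorem sum_occInner_sub_le (hM : IsDiscountedMDP γ P ν₀) (hH : H = 1 / (1 - γ)) (hη : 0 < η)
    (hσ : ∀ x, σ x ∈ stdSimplex ℝ A) (hπ0 : ∀ x, π 0 x ∈ stdSimplex ℝ A)
    (hac : CondAbsCont γ P ν₀ σ (π 0))
    (hπ : ∀ k ∈ Icc 1 K, π k = fun x => softUpdate η (π (k - 1) x) (Q k x))
    (hV : ∀ k ∈ Icc 1 K, V k = fun x => softValue η (π (k - 1) x) (Q k x)) (hQ1 : Q 1 = 0)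
    (hQ : ∀ k ∈ Icc 1 (K + 1), ∀ x a, Q k x a ∈ Set.Icc 0 H)
    (hsandwich : ∀ k ∈ Icc 1 K, ∀ x a, Q (k + 1) x a
      ∈ Set.Icc (r x a + γ * ∑ x', P x a x' * V k x')
        (r x a + 2 * CB k x a + γ * ∑ x', P x a x' * V k x')) :
    ∑ k ∈ Icc 1 K, (occInner γ P ν₀ σ r - occInner γ P ν₀ (π k) r)
      ≤ 2 * ∑ k ∈ Icc 1 K, occInner γ P ν₀ (π k) (CB k) + 2 * H + η * H ^ 3 * K / 2
        + condRelEntropy γ P ν₀ σ (π 0) / η := by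
  have hpol := iterate_mem_stdSimplex_and_condAbsCont hη.ne' hπ0 hac hπ
  have htel := sum_Icc_le_of_add_le (K := K)
    (a := fun k => occInner γ P ν₀ σ r - occInner γ P ν₀ (π k) r)
    (b := fun k => 2 * occInner γ P ν₀ (π k) (CB k) + η * H ^ 3 / 2)
    (ℓ := fun k => potential γ η P ν₀ σ (fun x => softUpdate η (π (k - 1) x) (Q k x))
      (fun x => softValue η (π (k - 1) x) (Q k x))) fun k hk => by
    obtain ⟨hk1, hkK⟩ := mem_Icc.mp hk
    have h := occInner_sub_add_potential_le hM hH hη hσ (hpol k hkK).1 (hpol k hkK).2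
      (hQ (k + 1) (mem_Icc.mpr ⟨by omega, by omega⟩)) (hsandwich k hk)
    rw [← hπ k hk, ← hV k hk]
    exact h
  have hfirst : potential γ η P ν₀ σ (fun x => softUpdate η (π 0 x) (Q 1 x))
      (fun x => softValue η (π 0 x) (Q 1 x)) = condRelEntropy γ P ν₀ σ (π 0) / η := by
    simp [potential, hQ1, softUpdate_zero, softValue_zero, hπ0]
  have hlast := neg_potential_le hM hσ
    (fun x => softUpdate_mem_stdSimplex (q := Q (K + 1) x) hη.ne' ((hpol K le_rfl).1 x))
    ((hpol K le_rfl).2.softUpdate (Q (K + 1))) hη.le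
    (fun x => softValue_mem_Icc hη ((hpol K le_rfl).1 x)
      (hQ (K + 1) (mem_Icc.mpr ⟨by omega, le_rfl⟩) x))
  have hconst : ∑ k ∈ Icc 1 K, (2 * occInner γ P ν₀ (π k) (CB k) + η * H ^ 3 / 2)
      = 2 * ∑ k ∈ Icc 1 K, occInner γ P ν₀ (π k) (CB k) + η * H ^ 3 * K / 2 := by
    rw [sum_add_distrib, ← mul_sum, sum_const, Nat.card_Icc, nsmul_eq_mul]
    push_cast
    ring
  have hH0 : 0 ≤ H := by rw [hH]; exact one_div_nonneg.mpr (sub_pos.mpr hM.discount_lt_one).le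
  simp only [Nat.sub_self, Nat.add_sub_cancel] at htel
  rw [hfirst, hconst] at htel
  linarith

end Algorithm

end RAVI

open RAVI

theorem stmt_1_general {X A : Type*} [Fintype X] [Fintype A]
    (γ : ℝ) (hγ0 : 0 < γ) (hγ1 : γ < 1) (H : ℝ) (hH : H = 1 / (1 - γ))
    (P : X → A → X → ℝ) (hP0 : ∀ x a x', 0 ≤ P x a x') (hP1 : ∀ x a, ∑ x', P x a x' = 1)
    (r : X → A → ℝ) (hr0 : ∀ x a, 0 ≤ r x a) (hr1 : ∀ x a, r x a ≤ 1)
    (ν₀ : X → ℝ) (hν0 : ∀ x, 0 ≤ ν₀ x) (hν1 : ∑ x, ν₀ x = 1)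
    (K : ℕ) (η : ℝ) (hη : 0 < η)
    (π : ℕ → X → A → ℝ) (hπ00 : ∀ x a, 0 ≤ π 0 x a) (hπ01 : ∀ x, ∑ a, π 0 x a = 1)
    (V : ℕ → X → ℝ)
    (Q : ℕ → X → A → ℝ) (hQ1 : ∀ x a, Q 1 x a = 0)
    (Phat : ℕ → X → A → X → ℝ) (CB : ℕ → X → A → ℝ)
    (hV : ∀ k, 1 ≤ k → k ≤ K → ∀ x,
        V k x = (1 / η) * Real.log (∑ a, π (k - 1) x a * Real.exp (η * Q k x a)))
    (hπ : ∀ k, 1 ≤ k → k ≤ K → ∀ x a,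
        π k x a = π (k - 1) x a * Real.exp (η * (Q k x a - V k x)))
    (hQ : ∀ k, 1 ≤ k → k ≤ K → ∀ x a,
        Q (k + 1) x a
          = max (min (r x a + CB k x a + γ * ∑ x', Phat k x a x' * V k x') H) 0)
    (hvalid : ∀ k, 1 ≤ k → k ≤ K → ∀ x a,
        |γ * ∑ x', (P x a x' - Phat k x a x') * V k x'| ≤ CB k x a)
    (πs : X → A → ℝ) (hπs0 : ∀ x a, 0 ≤ πs x a) (hπs1 : ∀ x, ∑ a, πs x a = 1) :
    ENNReal.ofReal
        (∑ k ∈ Finset.Icc 1 K,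
          ((∑ x, ∑ a, occ γ P ν₀ πs x a * r x a)
            - ∑ x, ∑ a, occ γ P ν₀ (π k) x a * r x a))
      ≤ ENNReal.ofReal
          (2 * ∑ k ∈ Finset.Icc 1 K, ∑ x, ∑ a, occ γ P ν₀ (π k) x a * CB k x a
            + 2 * H + η * H ^ 3 * (K : ℝ) / 2)
        + ENNReal.ofReal (1 / η) * condKL γ P ν₀ πs (π 0) := by
  have hM : IsDiscountedMDP γ P ν₀ := ⟨hγ0.le, hγ1, fun x a => ⟨hP0 x a, hP1 x a⟩, ⟨hν0, hν1⟩⟩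
  have hπs : ∀ x, πs x ∈ stdSimplex ℝ A := fun x => ⟨hπs0 x, hπs1 x⟩
  have hπ0 : ∀ x, π 0 x ∈ stdSimplex ℝ A := fun x => ⟨hπ00 x, hπ01 x⟩
  have hHγ : (1 - γ) * H = 1 := by rw [hH]; field_simp [(sub_pos.mpr hγ1).ne']
  have hH0 : 0 ≤ H := by nlinarith
  refine ofReal_le_add_mul_condKL hM hπs hπ0 hη fun hac => ?_
  have hπ_eq : ∀ k ∈ Finset.Icc 1 K, π k = fun x => softUpdate η (π (k - 1) x) (Q k x) :=
    fun k hk => funext₂ fun x a => by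
      obtain ⟨hk1, hkK⟩ := Finset.mem_Icc.mp hk
      rw [hπ k hk1 hkK x a, hV k hk1 hkK x]
      rfl
  have hV_eq : ∀ k ∈ Finset.Icc 1 K, V k = fun x => softValue η (π (k - 1) x) (Q k x) :=
    fun k hk => funext fun x => hV k (Finset.mem_Icc.mp hk).1 (Finset.mem_Icc.mp hk).2 x
  have hQ_mem := mem_Icc_of_eq_max_min hH0 (funext₂ hQ1) fun k hk =>
    hQ k (Finset.mem_Icc.mp hk).1 (Finset.mem_Icc.mp hk).2
  have hpol := iterate_mem_stdSimplex_and_condAbsCont hη.ne' hπ0 hac hπ_eq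
  have hsandwich : ∀ k ∈ Finset.Icc 1 K, ∀ x a, Q (k + 1) x a
      ∈ Set.Icc (r x a + γ * ∑ x', P x a x' * V k x')
        (r x a + 2 * CB k x a + γ * ∑ x', P x a x' * V k x') := by
    intro k hk x a
    obtain ⟨hk1, hkK⟩ := Finset.mem_Icc.mp hk
    have hV_mem : ∀ x, V k x ∈ Set.Icc 0 H := fun x => by
      rw [hV_eq k hk]
      exact softValue_mem_Icc hη ((hpol (k - 1) (by omega)).1 x)
        (hQ_mem k (Finset.mem_Icc.mpr ⟨hk1, by omega⟩) x)
    rw [hQ k hk1 hkK x a]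
    exact max_min_lookahead_mem_Icc (hM.kernel_mem x a) hV_mem hγ0.le (hr0 x a)
      (by linarith [hr1 x a]) (hvalid k hk1 hkK x a)
  exact sum_occInner_sub_le hM hH hη hπs hπ0 hac hπ_eq hV_eq (funext₂ hQ1) hQ_mem hsandwich

/-- Lemma 2 (optimistic planning guarantee of RAVI-UCB).  With `V₀ = 0`, `Q₁ = 0`, and the
regularized value-iteration recursions
`V_k(x) = (1/η) log Σ_a π_{k−1}(a|x) exp(η Q_k(x,a))`,
`π_k(a|x) = π_{k−1}(a|x) exp(η (Q_k(x,a) − V_k(x)))`,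
`Q_{k+1}(x,a) = Π_H[r(x,a) + CB_k(x,a) + γ (P̂_k V_k)(x,a)]` for `k = 1, …, K`,
if the nonnegative bonuses `CB_k` are valid,
`|γ Σ_{x'} (P(x'|x,a) − P̂_k(x'|x,a)) V_k(x')| ≤ CB_k(x,a)`, then for any optimal policy `π*`:
`Σ_{k=1}^K (⟨μ*, r⟩ − ⟨μ^{π_k}, r⟩)
  ≤ 2 Σ_{k=1}^K ⟨μ^{π_k}, CB_k⟩ + 2H + (1/η) H(π*‖π₀) + η H³ K / 2`.
(The inequality is stated in `[0,∞]` since the conditional entropy may be infinite.) -/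
theorem stmt_1 {X A : Type*} [Fintype X] [Fintype A] [Nonempty X] [Nonempty A]
    (γ : ℝ) (hγ0 : 0 < γ) (hγ1 : γ < 1) (H : ℝ) (hH : H = 1 / (1 - γ))
    (P : X → A → X → ℝ) (hP0 : ∀ x a x', 0 ≤ P x a x') (hP1 : ∀ x a, ∑ x', P x a x' = 1)
    (r : X → A → ℝ) (hr0 : ∀ x a, 0 ≤ r x a) (hr1 : ∀ x a, r x a ≤ 1)
    (ν₀ : X → ℝ) (hν0 : ∀ x, 0 ≤ ν₀ x) (hν1 : ∑ x, ν₀ x = 1)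
    (K : ℕ) (hK : 1 ≤ K) (η : ℝ) (hη : 0 < η)
    (π : ℕ → X → A → ℝ) (hπ00 : ∀ x a, 0 ≤ π 0 x a) (hπ01 : ∀ x, ∑ a, π 0 x a = 1)
    (V : ℕ → X → ℝ) (hV0 : ∀ x, V 0 x = 0)
    (Q : ℕ → X → A → ℝ) (hQ1 : ∀ x a, Q 1 x a = 0)
    (Phat : ℕ → X → A → X → ℝ) (CB : ℕ → X → A → ℝ)
    (hCB0 : ∀ k x a, 0 ≤ CB k x a)
    (hV : ∀ k, 1 ≤ k → k ≤ K → ∀ x,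
        V k x = (1 / η) * Real.log (∑ a, π (k - 1) x a * Real.exp (η * Q k x a)))
    (hπ : ∀ k, 1 ≤ k → k ≤ K → ∀ x a,
        π k x a = π (k - 1) x a * Real.exp (η * (Q k x a - V k x)))
    (hQ : ∀ k, 1 ≤ k → k ≤ K → ∀ x a,
        Q (k + 1) x a
          = max (min (r x a + CB k x a + γ * ∑ x', Phat k x a x' * V k x') H) 0)
    (hvalid : ∀ k, 1 ≤ k → k ≤ K → ∀ x a,
        |γ * ∑ x', (P x a x' - Phat k x a x') * V k x'| ≤ CB k x a)
    (πs : X → A → ℝ) (hπs0 : ∀ x a, 0 ≤ πs x a) (hπs1 : ∀ x, ∑ a, πs x a = 1)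
    (hopt : ∀ ρ : X → A → ℝ, (∀ x a, 0 ≤ ρ x a) → (∀ x, ∑ a, ρ x a = 1) →
        ∑ x, ∑ a, occ γ P ν₀ ρ x a * r x a ≤ ∑ x, ∑ a, occ γ P ν₀ πs x a * r x a) :
    ENNReal.ofReal
        (∑ k ∈ Finset.Icc 1 K,
          ((∑ x, ∑ a, occ γ P ν₀ πs x a * r x a)
            - ∑ x, ∑ a, occ γ P ν₀ (π k) x a * r x a))
      ≤ ENNReal.ofReal
          (2 * ∑ k ∈ Finset.Icc 1 K, ∑ x, ∑ a, occ γ P ν₀ (π k) x a * CB k x a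
            + 2 * H + η * H ^ 3 * (K : ℝ) / 2)
        + ENNReal.ofReal (1 / η) * condKL γ P ν₀ πs (π 0) :=
  stmt_1_general γ hγ0 hγ1 H hH P hP0 hP1 r hr0 hr1 ν₀ hν0 hν1 K η hη π hπ00 hπ01 V Q hQ1 Phat CB hV
    hπ hQ hvalid πs hπs0 hπs1
end

section
/- For any two policies π and π', the relative entropy between their discounted state-action occupancy measures is bounded by the conditional relative entropy as follows: KL(μ^π ‖ μ^{π'}) ≤ (1/(1−γ)) · H(π ‖ π'). -/
/-!
Write `ν, ν'` for the discounted state occupancies of `π, π'`, so that `μ^π = ν ⊗ π`, and note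
that `ν` satisfies the Bellman flow equation `ν = (1 - γ) ν₀ + γ (ν ⊗ π) P`.
The chain rule gives `KL(μ^π ‖ μ^π') = KL(ν ‖ ν') + H(π ‖ π')`. On the other hand, since both
flows share the component `(1 - γ) ν₀`, joint convexity of relative entropy and the data
processing inequality for the kernel `P` give `KL(ν ‖ ν') ≤ γ KL(μ^π ‖ μ^π')`. Together,
`(1 - γ) KL(μ^π ‖ μ^π') ≤ H(π ‖ π')`. All of this happens for finite real vectors once one knows
that `ν ≪ ν'`, which again follows from the flow equations.
-/

open scoped ENNReal

open Finset
open Real (log log_mul one_sub_inv_le_log_of_pos)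

theorem mul_log_div_self (x : ℝ) : x * log (x / x) = 0 := by
  rcases eq_or_ne x 0 with rfl | hx <;> simp [*]

theorem mul_mul_log_mul_div_mul (c a b : ℝ) :
    c * a * log (c * a / (c * b)) = c * (a * log (a / b)) := by
  rcases eq_or_ne c 0 with rfl | hc
  · simp
  · rw [mul_div_mul_left _ _ hc, mul_assoc]

/-- `log u ≥ 1 - u⁻¹` at `u = a / (r b)`. -/
theorem mul_log_add_sub_le_mul_log_div {a b r : ℝ} (ha : 0 ≤ a) (hb : 0 ≤ b)
    (hab : b = 0 → a = 0) (hr : 0 < r) : a * log r + a - r * b ≤ a * log (a / b) := by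
  rcases ha.eq_or_lt with rfl | ha
  · simpa using mul_nonneg hr.le hb
  have hb : 0 < b := hb.lt_of_ne fun h => ha.ne' (hab h.symm)
  have hu : 0 < a / (r * b) := by positivity
  have hsplit : log (a / b) = log r + log (a / (r * b)) := by
    rw [← log_mul hr.ne' hu.ne']
    congr 1
    field_simp
  have hlog := mul_le_mul_of_nonneg_left (one_sub_inv_le_log_of_pos hu) ha.le
  have hlin : a * (1 - (a / (r * b))⁻¹) = a - r * b := by field_simp
  rw [hsplit]
  linarith

/-- The log-sum inequality. -/
theorem sum_mul_log_div_sum_le {ι : Type*} (s : Finset ι) {a b : ι → ℝ}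
    (ha : ∀ i ∈ s, 0 ≤ a i) (hb : ∀ i ∈ s, 0 ≤ b i) (hab : ∀ i ∈ s, b i = 0 → a i = 0) :
    (∑ i ∈ s, a i) * log ((∑ i ∈ s, a i) / ∑ i ∈ s, b i) ≤ ∑ i ∈ s, a i * log (a i / b i) := by
  set A := ∑ i ∈ s, a i
  set B := ∑ i ∈ s, b i
  rcases (sum_nonneg ha).eq_or_lt with hA | hA
  · have hzero : ∀ i ∈ s, a i = 0 := (sum_eq_zero_iff_of_nonneg ha).1 hA.symm
    rw [show A = 0 from hA.symm, zero_mul, sum_eq_zero fun i hi => by rw [hzero i hi, zero_mul]]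
  have hB : 0 < B := by
    refine (sum_nonneg hb).lt_of_ne fun hB => hA.ne' ?_
    exact sum_eq_zero fun i hi => hab i hi ((sum_eq_zero_iff_of_nonneg hb).1 hB.symm i hi)
  calc A * log (A / B) = ∑ i ∈ s, (a i * log (A / B) + a i - A / B * b i) := by
        rw [sum_sub_distrib, sum_add_distrib, ← sum_mul, ← mul_sum]
        field_simp
        ring
    _ ≤ ∑ i ∈ s, a i * log (a i / b i) := sum_le_sum fun i hi =>
        mul_log_add_sub_le_mul_log_div (ha i hi) (hb i hi) (hab i hi) (by positivity)

theorem add_mul_log_div_add_le {a₁ a₂ b₁ b₂ : ℝ} (ha₁ : 0 ≤ a₁) (ha₂ : 0 ≤ a₂)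
    (hb₁ : 0 ≤ b₁) (hb₂ : 0 ≤ b₂) (hab₁ : b₁ = 0 → a₁ = 0) (hab₂ : b₂ = 0 → a₂ = 0) :
    (a₁ + a₂) * log ((a₁ + a₂) / (b₁ + b₂)) ≤ a₁ * log (a₁ / b₁) + a₂ * log (a₂ / b₂) := by
  simpa [Fin.sum_univ_two] using
    sum_mul_log_div_sum_le univ (a := ![a₁, a₂]) (b := ![b₁, b₂])
      (by simp [Fin.forall_fin_two, ha₁, ha₂]) (by simp [Fin.forall_fin_two, hb₁, hb₂])
      (by simpa [Fin.forall_fin_two] using ⟨hab₁, hab₂⟩)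

/-- Meaningful only when `p ≪ q`, since `Real.log (p s / 0) = 0`. -/
noncomputable def relEntropy {S : Type*} [Fintype S] (p q : S → ℝ) : ℝ :=
  ∑ s, p s * log (p s / q s)

section relEntropy

variable {S : Type*} [Fintype S] {p q : S → ℝ}

theorem KLd_eq_ofReal_relEntropy (hpq : ∀ s, q s = 0 → p s = 0) :
    KLd p q = ENNReal.ofReal (relEntropy p q) := by
  rw [KLd, if_pos hpq, relEntropy]
  congr 1
  refine sum_congr rfl fun s _ => ?_
  split_ifs with h <;> simp [h]

theorem relEntropy_nonneg (hp : ∀ s, 0 ≤ p s) (hq : ∀ s, 0 ≤ q s)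
    (hpq : ∀ s, q s = 0 → p s = 0) (hsum : ∑ s, p s = ∑ s, q s) : 0 ≤ relEntropy p q := by
  have := sum_mul_log_div_sum_le univ (fun s _ => hp s) (fun s _ => hq s) (fun s _ => hpq s)
  rwa [hsum, mul_log_div_self] at this

theorem relEntropy_mix_le {γ : ℝ} (hγ0 : 0 ≤ γ) (hγ1 : γ ≤ 1) {ρ : S → ℝ} (hρ : ∀ s, 0 ≤ ρ s)
    (hp : ∀ s, 0 ≤ p s) (hq : ∀ s, 0 ≤ q s) (hpq : ∀ s, q s = 0 → p s = 0) :
    relEntropy (fun s => (1 - γ) * ρ s + γ * p s) (fun s => (1 - γ) * ρ s + γ * q s)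
      ≤ γ * relEntropy p q := by
  rw [relEntropy, relEntropy, mul_sum]
  refine sum_le_sum fun s _ => ?_
  have hρ' : 0 ≤ (1 - γ) * ρ s := mul_nonneg (sub_nonneg.2 hγ1) (hρ s)
  calc _ ≤ (1 - γ) * ρ s * log ((1 - γ) * ρ s / ((1 - γ) * ρ s))
        + γ * p s * log (γ * p s / (γ * q s)) :=
        add_mul_log_div_add_le hρ' (mul_nonneg hγ0 (hp s)) hρ' (mul_nonneg hγ0 (hq s))
          (fun h => h) fun h => by rcases mul_eq_zero.1 h with h | h <;> simp [h, hpq]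
    _ = γ * (p s * log (p s / q s)) := by rw [mul_log_div_self, mul_mul_log_mul_div_mul, zero_add]

/-- The data processing inequality for a Markov kernel `Q`. -/
theorem relEntropy_kernel_le {κ : Type*} [Fintype κ] {Q : S → κ → ℝ}
    (hp : ∀ s, 0 ≤ p s) (hq : ∀ s, 0 ≤ q s) (hpq : ∀ s, q s = 0 → p s = 0)
    (hQ : ∀ s k, 0 ≤ Q s k) (hQ1 : ∀ s, ∑ k, Q s k = 1) :
    relEntropy (fun k => ∑ s, p s * Q s k) (fun k => ∑ s, q s * Q s k) ≤ relEntropy p q := by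
  calc relEntropy (fun k => ∑ s, p s * Q s k) (fun k => ∑ s, q s * Q s k)
      ≤ ∑ k, ∑ s, p s * Q s k * log (p s * Q s k / (q s * Q s k)) :=
        sum_le_sum fun k _ => sum_mul_log_div_sum_le univ
          (fun s _ => mul_nonneg (hp s) (hQ s k)) (fun s _ => mul_nonneg (hq s) (hQ s k))
          fun s _ h => by rcases mul_eq_zero.1 h with h | h <;> simp [h, hpq]
    _ = relEntropy p q := by
        simp_rw [mul_comm (p _) (Q _ _), mul_comm (q _) (Q _ _), mul_mul_log_mul_div_mul]
        rw [sum_comm, relEntropy]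
        simp_rw [← sum_mul, hQ1, one_mul]

end relEntropy

theorem relEntropy_compProd {X A : Type*} [Fintype X] [Fintype A] {ν ν' : X → ℝ}
    {π π' : X → A → ℝ} (hν : ∀ x, ν' x = 0 → ν x = 0)
    (hπ : ∀ x, ν x ≠ 0 → ∀ a, π' x a = 0 → π x a = 0) (hπ1 : ∀ x, ∑ a, π x a = 1) :
    relEntropy (fun p : X × A => ν p.1 * π p.1 p.2) (fun p => ν' p.1 * π' p.1 p.2)
      = relEntropy ν ν' + ∑ x, ν x * relEntropy (π x) (π' x) := by
  simp only [relEntropy, mul_sum]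
  rw [Fintype.sum_prod_type, ← sum_add_distrib]
  refine sum_congr rfl fun x _ => ?_
  have hsplit : ∀ a, ν x * π x a * log (ν x * π x a / (ν' x * π' x a))
      = π x a * (ν x * log (ν x / ν' x)) + ν x * (π x a * log (π x a / π' x a)) := by
    intro a
    by_cases h : ν x * π x a = 0
    · rcases mul_eq_zero.1 h with h | h <;> simp [h]
    obtain ⟨hνx, hπx⟩ := mul_ne_zero_iff.1 h
    rw [mul_div_mul_comm, log_mul (div_ne_zero hνx (mt (hν x) hνx))
      (div_ne_zero hπx (mt (hπ x hνx a) hπx))]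
    ring
  rw [sum_congr rfl fun a _ => hsplit a, sum_add_distrib, ← sum_mul, hπ1, one_mul]

def BellmanFlow {X A : Type*} [Fintype X] [Fintype A] (γ : ℝ) (P : X → A → X → ℝ)
    (ν₀ : X → ℝ) (π : X → A → ℝ) (ν : X → ℝ) : Prop :=
  ∀ x', ν x' = (1 - γ) * ν₀ x' + γ * ∑ p : X × A, ν p.1 * π p.1 p.2 * P p.1 p.2 x'

namespace BellmanFlow

variable {X A : Type*} [Fintype X] [Fintype A] {γ : ℝ} {P : X → A → X → ℝ} {ν₀ ν ν' : X → ℝ}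
  {π π' : X → A → ℝ}
  (hγ0 : 0 ≤ γ) (hγ1 : γ < 1) (hP : ∀ x a x', 0 ≤ P x a x') (hP1 : ∀ x a, ∑ x', P x a x' = 1)
  (hν₀ : ∀ x, 0 ≤ ν₀ x) (hν : ∀ x, 0 ≤ ν x) (hν' : ∀ x, 0 ≤ ν' x)
  (hπ : ∀ x a, 0 ≤ π x a) (hπ' : ∀ x a, 0 ≤ π' x a) (hπ1 : ∀ x, ∑ a, π x a = 1)
  (hflow : BellmanFlow γ P ν₀ π ν) (hflow' : BellmanFlow γ P ν₀ π' ν')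
  (hac : ∀ x, ν x ≠ 0 → ∀ a, π' x a = 0 → π x a = 0)
include hγ0 hγ1 hP hP1 hν₀ hν hν' hπ hπ' hπ1 hflow hflow' hac

/-- The set `Z = {ν' = 0}` receives `ν`-mass only from itself, and only with a factor `γ` per
step; hence `ν(Z) ≤ γ ν(Z)`. -/
theorem eq_zero_of_eq_zero : ∀ x, ν' x = 0 → ν x = 0 := by
  classical
  set Z := univ.filter fun x => ν' x = 0
  have hZ : ∀ x' ∈ Z, ν x' = ∑ x ∈ Z, ∑ a, γ * (ν x * π x a * P x a x') := by
    intro x' hx'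
    have h0 := (mem_filter.1 hx').2
    rw [hflow' x'] at h0
    obtain ⟨hν₀x', hsum⟩ := (add_eq_zero_iff_of_nonneg
      (mul_nonneg (sub_nonneg.2 hγ1.le) (hν₀ x'))
      (mul_nonneg hγ0 (sum_nonneg fun p _ =>
        mul_nonneg (mul_nonneg (hν' p.1) (hπ' p.1 p.2)) (hP p.1 p.2 x')))).1 h0
    rw [mul_sum] at hsum
    have hterm := (sum_eq_zero_iff_of_nonneg fun p _ => mul_nonneg hγ0
      (mul_nonneg (mul_nonneg (hν' p.1) (hπ' p.1 p.2)) (hP p.1 p.2 x'))).1 hsum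
    rw [hflow x', hν₀x', zero_add, mul_sum, Fintype.sum_prod_type]
    refine (sum_subset (subset_univ Z) fun x _ hx => sum_eq_zero fun a _ => ?_).symm
    by_contra hne
    simp only [mul_eq_zero, not_or] at hne
    obtain ⟨hγ, ⟨hνx, hπx⟩, hPx⟩ := hne
    have hπ'x : π' x a ≠ 0 := mt (hac x hνx a) hπx
    exact hx (mem_filter.2 ⟨mem_univ x, by simpa [hγ, hπ'x, hPx] using hterm (x, a) (mem_univ _)⟩)
  have hmass : ∑ x' ∈ Z, ν x' ≤ γ * ∑ x ∈ Z, ν x := calc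
    ∑ x' ∈ Z, ν x' = ∑ x' ∈ Z, ∑ x ∈ Z, ∑ a, γ * (ν x * π x a * P x a x') := sum_congr rfl hZ
    _ ≤ ∑ x', ∑ x ∈ Z, ∑ a, γ * (ν x * π x a * P x a x') :=
        sum_le_sum_of_subset_of_nonneg (subset_univ Z) fun x' _ _ =>
          sum_nonneg fun x _ => sum_nonneg fun a _ =>
            mul_nonneg hγ0 (mul_nonneg (mul_nonneg (hν x) (hπ x a)) (hP x a x'))
    _ = γ * ∑ x ∈ Z, ν x := by
        rw [sum_comm, mul_sum]
        refine sum_congr rfl fun x _ => ?_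
        rw [sum_comm]
        simp_rw [← mul_sum, hP1, mul_one, ← mul_sum, hπ1, mul_one]
  have hZ0 : ∑ x ∈ Z, ν x = 0 := by
    have := sum_nonneg fun x (_ : x ∈ Z) => hν x
    nlinarith
  exact fun x hx => (sum_eq_zero_iff_of_nonneg fun x _ => hν x).1 hZ0 x (by simp [Z, hx])

theorem compProd_eq_zero_of_eq_zero :
    ∀ p : X × A, ν' p.1 * π' p.1 p.2 = 0 → ν p.1 * π p.1 p.2 = 0 := by
  have hνac := eq_zero_of_eq_zero hγ0 hγ1 hP hP1 hν₀ hν hν' hπ hπ' hπ1 hflow hflow' hac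
  rintro ⟨x, a⟩ h
  rcases eq_or_ne (ν x) 0 with hx | hx
  · simp [hx]
  rcases mul_eq_zero.1 h with h | h
  · exact absurd (hνac x h) hx
  · simp [hac x hx a h]

theorem relEntropy_le_mul_relEntropy_compProd :
    relEntropy ν ν'
      ≤ γ * relEntropy (fun p : X × A => ν p.1 * π p.1 p.2) (fun p => ν' p.1 * π' p.1 p.2) := by
  have hμac := compProd_eq_zero_of_eq_zero hγ0 hγ1 hP hP1 hν₀ hν hν' hπ hπ' hπ1 hflow hflow' hac
  have hterm : ∀ {ρ : X → ℝ} {σ : X → A → ℝ}, (∀ x, 0 ≤ ρ x) → (∀ x a, 0 ≤ σ x a) →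
      ∀ (p : X × A) x', 0 ≤ ρ p.1 * σ p.1 p.2 * P p.1 p.2 x' :=
    fun hρ hσ p x' => mul_nonneg (mul_nonneg (hρ p.1) (hσ p.1 p.2)) (hP p.1 p.2 x')
  calc relEntropy ν ν'
      = relEntropy (fun x' => (1 - γ) * ν₀ x' + γ * ∑ p : X × A, ν p.1 * π p.1 p.2 * P p.1 p.2 x')
          (fun x' => (1 - γ) * ν₀ x' + γ * ∑ p : X × A, ν' p.1 * π' p.1 p.2 * P p.1 p.2 x') := by
        congr 1 <;> funext x'
        exacts [hflow x', hflow' x']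
    _ ≤ γ * relEntropy (fun x' => ∑ p : X × A, ν p.1 * π p.1 p.2 * P p.1 p.2 x')
          (fun x' => ∑ p : X × A, ν' p.1 * π' p.1 p.2 * P p.1 p.2 x') :=
        relEntropy_mix_le hγ0 hγ1.le hν₀
          (fun x' => sum_nonneg fun p _ => hterm hν hπ p x')
          (fun x' => sum_nonneg fun p _ => hterm hν' hπ' p x')
          fun x' h => by
            rw [sum_eq_zero_iff_of_nonneg fun p _ => hterm hν' hπ' p x'] at h
            exact sum_eq_zero fun p hp => by
              rcases mul_eq_zero.1 (h p hp) with h | h <;> simp [h, hμac p]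
    _ ≤ _ := mul_le_mul_of_nonneg_left (relEntropy_kernel_le
        (p := fun p : X × A => ν p.1 * π p.1 p.2) (q := fun p => ν' p.1 * π' p.1 p.2)
        (Q := fun p => P p.1 p.2)
        (fun p => mul_nonneg (hν p.1) (hπ p.1 p.2)) (fun p => mul_nonneg (hν' p.1) (hπ' p.1 p.2))
        hμac (fun p => hP p.1 p.2) fun p => hP1 p.1 p.2) hγ0

theorem relEntropy_compProd_le :
    relEntropy (fun p : X × A => ν p.1 * π p.1 p.2) (fun p => ν' p.1 * π' p.1 p.2)
      ≤ 1 / (1 - γ) * ∑ x, ν x * relEntropy (π x) (π' x) := by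
  have hchain := relEntropy_compProd
    (eq_zero_of_eq_zero hγ0 hγ1 hP hP1 hν₀ hν hν' hπ hπ' hπ1 hflow hflow' hac) hac hπ1
  have hcontract :=
    relEntropy_le_mul_relEntropy_compProd hγ0 hγ1 hP hP1 hν₀ hν hν' hπ hπ' hπ1 hflow hflow' hac
  rw [div_mul_eq_mul_div, one_mul, le_div_iff₀ (sub_pos.2 hγ1), mul_one_sub]
  linarith

end BellmanFlow

section stateDist

variable {X A : Type*} [Fintype X] [Fintype A] {γ : ℝ} {P : X → A → X → ℝ} {ν₀ : X → ℝ}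
  {π π' : X → A → ℝ}

theorem stateDist_nonneg (hP : ∀ x a x', 0 ≤ P x a x') (hν₀ : ∀ x, 0 ≤ ν₀ x)
    (hπ : ∀ x a, 0 ≤ π x a) : ∀ t x, 0 ≤ stateDist P ν₀ π t x
  | 0 => hν₀
  | t + 1 => fun x' => sum_nonneg fun x _ => sum_nonneg fun a _ =>
      mul_nonneg (mul_nonneg (stateDist_nonneg hP hν₀ hπ t x) (hπ x a)) (hP x a x')

theorem sum_stateDist (hP1 : ∀ x a, ∑ x', P x a x' = 1) (hπ1 : ∀ x, ∑ a, π x a = 1) :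
    ∀ t, ∑ x, stateDist P ν₀ π t x = ∑ x, ν₀ x
  | 0 => rfl
  | t + 1 => by
    rw [← sum_stateDist hP1 hπ1 t]
    calc ∑ x', stateDist P ν₀ π (t + 1) x'
        = ∑ x, ∑ a, stateDist P ν₀ π t x * π x a * ∑ x', P x a x' := by
          simp only [stateDist, mul_sum]
          rw [sum_comm]
          exact sum_congr rfl fun x _ => sum_comm
      _ = ∑ x, stateDist P ν₀ π t x := by simp_rw [hP1, mul_one, ← mul_sum, hπ1, mul_one]

theorem summable_geometric_mul_stateDist (hγ0 : 0 ≤ γ) (hγ1 : γ < 1)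
    (hP : ∀ x a x', 0 ≤ P x a x') (hP1 : ∀ x a, ∑ x', P x a x' = 1) (hν₀ : ∀ x, 0 ≤ ν₀ x)
    (hπ : ∀ x a, 0 ≤ π x a) (hπ1 : ∀ x, ∑ a, π x a = 1) (x : X) :
    Summable fun t => γ ^ t * stateDist P ν₀ π t x := by
  have hd := stateDist_nonneg hP hν₀ hπ
  have hbound : ∀ t, stateDist P ν₀ π t x ≤ ∑ y, ν₀ y := fun t =>
    sum_stateDist hP1 hπ1 t ▸ single_le_sum (fun y _ => hd t y) (mem_univ x)
  exact Summable.of_nonneg_of_le (fun t => mul_nonneg (pow_nonneg hγ0 t) (hd t x))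
    (fun t => mul_le_mul_of_nonneg_left (hbound t) (pow_nonneg hγ0 t))
    ((summable_geometric_of_lt_one hγ0 hγ1).mul_right _)

variable (γ P ν₀ π) in
/-- The discounted state occupancy `ν^π`. -/
noncomputable def stateOcc (x : X) : ℝ :=
  (1 - γ) * ∑' t : ℕ, γ ^ t * stateDist P ν₀ π t x

theorem occ_eq_stateOcc_mul (x : X) (a : A) :
    occ γ P ν₀ π x a = stateOcc γ P ν₀ π x * π x a := by
  rw [occ, stateOcc, mul_assoc, ← tsum_mul_right]

theorem sum_occ (hπ1 : ∀ x, ∑ a, π x a = 1) (x : X) :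
    ∑ a, occ γ P ν₀ π x a = stateOcc γ P ν₀ π x := by
  simp_rw [occ_eq_stateOcc_mul, ← mul_sum, hπ1, mul_one]

theorem stateOcc_nonneg (hγ0 : 0 ≤ γ) (hγ1 : γ ≤ 1) (hP : ∀ x a x', 0 ≤ P x a x')
    (hν₀ : ∀ x, 0 ≤ ν₀ x) (hπ : ∀ x a, 0 ≤ π x a) (x : X) : 0 ≤ stateOcc γ P ν₀ π x :=
  mul_nonneg (sub_nonneg.2 hγ1)
    (tsum_nonneg fun t => mul_nonneg (pow_nonneg hγ0 t) (stateDist_nonneg hP hν₀ hπ t x))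

theorem bellmanFlow_stateOcc (hγ0 : 0 ≤ γ) (hγ1 : γ < 1)
    (hP : ∀ x a x', 0 ≤ P x a x') (hP1 : ∀ x a, ∑ x', P x a x' = 1) (hν₀ : ∀ x, 0 ≤ ν₀ x)
    (hπ : ∀ x a, 0 ≤ π x a) (hπ1 : ∀ x, ∑ a, π x a = 1) :
    BellmanFlow γ P ν₀ π (stateOcc γ P ν₀ π) := by
  have hs := summable_geometric_mul_stateDist hγ0 hγ1 hP hP1 hν₀ hπ hπ1
  have hS : ∀ x', ∑' t, γ ^ t * stateDist P ν₀ π t x' = ν₀ x' +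
      γ * ∑ p : X × A, (∑' t, γ ^ t * stateDist P ν₀ π t p.1) * π p.1 p.2 * P p.1 p.2 x' := by
    intro x'
    rw [(hs x').tsum_eq_zero_add, pow_zero, one_mul]
    congr 1
    calc ∑' t, γ ^ (t + 1) * stateDist P ν₀ π (t + 1) x'
        = ∑' t, ∑ p : X × A, γ * (γ ^ t * stateDist P ν₀ π t p.1 * π p.1 p.2 * P p.1 p.2 x') :=
          tsum_congr fun t => by
            simp only [stateDist, Fintype.sum_prod_type, mul_sum, pow_succ]
            exact sum_congr rfl fun x _ => sum_congr rfl fun a _ => by ring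
      _ = ∑ p : X × A, ∑' t, γ * (γ ^ t * stateDist P ν₀ π t p.1 * π p.1 p.2 * P p.1 p.2 x') :=
          Summable.tsum_finsetSum fun p _ => (((hs p.1).mul_right _).mul_right _).mul_left γ
      _ = γ * ∑ p : X × A, (∑' t, γ ^ t * stateDist P ν₀ π t p.1) * π p.1 p.2 * P p.1 p.2 x' := by
          simp_rw [mul_sum, tsum_mul_left, tsum_mul_right]
  intro x'
  simp only [stateOcc]
  rw [hS x', mul_add, mul_left_comm, mul_sum]
  congr 2
  exact sum_congr rfl fun p _ => by ring

theorem condKL_eq_ofReal (hγ0 : 0 ≤ γ) (hγ1 : γ ≤ 1) (hP : ∀ x a x', 0 ≤ P x a x')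
    (hν₀ : ∀ x, 0 ≤ ν₀ x) (hπ : ∀ x a, 0 ≤ π x a) (hπ' : ∀ x a, 0 ≤ π' x a)
    (hπ1 : ∀ x, ∑ a, π x a = 1) (hπ'1 : ∀ x, ∑ a, π' x a = 1)
    (hac : ∀ x, stateOcc γ P ν₀ π x ≠ 0 → ∀ a, π' x a = 0 → π x a = 0) :
    condKL γ P ν₀ π π'
      = ENNReal.ofReal (∑ x, stateOcc γ P ν₀ π x * relEntropy (π x) (π' x)) := by
  have hν := stateOcc_nonneg hγ0 hγ1 hP hν₀ hπ
  have hterm : ∀ x, ENNReal.ofReal (stateOcc γ P ν₀ π x) * KLd (π x) (π' x)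
      = ENNReal.ofReal (stateOcc γ P ν₀ π x * relEntropy (π x) (π' x)) ∧
      0 ≤ stateOcc γ P ν₀ π x * relEntropy (π x) (π' x) := by
    intro x
    rcases eq_or_ne (stateOcc γ P ν₀ π x) 0 with h | h
    · simp [h]
    rw [KLd_eq_ofReal_relEntropy (hac x h), ENNReal.ofReal_mul (hν x)]
    exact ⟨rfl, mul_nonneg (hν x)
      (relEntropy_nonneg (hπ x) (hπ' x) (hac x h) (by rw [hπ1, hπ'1]))⟩
  rw [condKL, ENNReal.ofReal_sum_of_nonneg fun x _ => (hterm x).2]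
  exact sum_congr rfl fun x _ => by rw [sum_occ hπ1, (hterm x).1]

theorem condKL_eq_top (hγ0 : 0 ≤ γ) (hγ1 : γ ≤ 1) (hP : ∀ x a x', 0 ≤ P x a x')
    (hν₀ : ∀ x, 0 ≤ ν₀ x) (hπ : ∀ x a, 0 ≤ π x a) (hπ1 : ∀ x, ∑ a, π x a = 1) {x : X}
    (hx : stateOcc γ P ν₀ π x ≠ 0) {a : A} (ha' : π' x a = 0) (ha : π x a ≠ 0) :
    condKL γ P ν₀ π π' = ⊤ := by
  refine ENNReal.sum_eq_top.2 ⟨x, mem_univ x, ?_⟩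
  rw [KLd, if_neg fun h => ha (h a ha'), sum_occ hπ1]
  exact ENNReal.mul_top (ENNReal.ofReal_pos.2
    ((stateOcc_nonneg hγ0 hγ1 hP hν₀ hπ x).lt_of_ne' hx)).ne'

end stateDist

theorem stmt_2_general {X A : Type*} [Fintype X] [Fintype A]
    (γ : ℝ) (hγ0 : 0 < γ) (hγ1 : γ < 1)
    (P : X → A → X → ℝ) (hP0 : ∀ x a x', 0 ≤ P x a x') (hP1 : ∀ x a, ∑ x', P x a x' = 1)
    (ν₀ : X → ℝ) (hν0 : ∀ x, 0 ≤ ν₀ x)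
    (π : X → A → ℝ) (hπ0 : ∀ x a, 0 ≤ π x a) (hπ1 : ∀ x, ∑ a, π x a = 1)
    (π' : X → A → ℝ) (hπ'0 : ∀ x a, 0 ≤ π' x a) (hπ'1 : ∀ x, ∑ a, π' x a = 1) :
    KLd (fun p : X × A => occ γ P ν₀ π p.1 p.2) (fun p : X × A => occ γ P ν₀ π' p.1 p.2)
      ≤ ENNReal.ofReal (1 / (1 - γ)) * condKL γ P ν₀ π π' := by
  simp only [occ_eq_stateOcc_mul]
  by_cases hac : ∀ x, stateOcc γ P ν₀ π x ≠ 0 → ∀ a, π' x a = 0 → π x a = 0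
  · have hflow := bellmanFlow_stateOcc hγ0.le hγ1 hP0 hP1 hν0 hπ0 hπ1
    have hflow' := bellmanFlow_stateOcc hγ0.le hγ1 hP0 hP1 hν0 hπ'0 hπ'1
    have hν := stateOcc_nonneg hγ0.le hγ1.le hP0 hν0 hπ0
    have hν' := stateOcc_nonneg hγ0.le hγ1.le hP0 hν0 hπ'0
    rw [KLd_eq_ofReal_relEntropy (hflow.compProd_eq_zero_of_eq_zero hγ0.le hγ1 hP0 hP1 hν0 hν hν'
        hπ0 hπ'0 hπ1 hflow' hac),
      condKL_eq_ofReal hγ0.le hγ1.le hP0 hν0 hπ0 hπ'0 hπ1 hπ'1 hac,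
      ← ENNReal.ofReal_mul (one_div_nonneg.2 (sub_nonneg.2 hγ1.le))]
    exact ENNReal.ofReal_le_ofReal
      (hflow.relEntropy_compProd_le hγ0.le hγ1 hP0 hP1 hν0 hν hν' hπ0 hπ'0 hπ1 hflow' hac)
  · push Not at hac
    obtain ⟨x, hx, a, ha', ha⟩ := hac
    rw [condKL_eq_top hγ0.le hγ1.le hP0 hν0 hπ0 hπ1 hx ha' ha,
      ENNReal.mul_top (ENNReal.ofReal_pos.2 (one_div_pos.2 (sub_pos.2 hγ1))).ne']
    exact le_top

/-- Lemma (KL between occupancies): for any two policies `π, π'`,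
`KL(μ^π ‖ μ^{π'}) ≤ (1/(1−γ)) H(π ‖ π')`. -/
theorem stmt_2 {X A : Type*} [Fintype X] [Fintype A] [Nonempty X] [Nonempty A]
    (γ : ℝ) (hγ0 : 0 < γ) (hγ1 : γ < 1)
    (P : X → A → X → ℝ) (hP0 : ∀ x a x', 0 ≤ P x a x') (hP1 : ∀ x a, ∑ x', P x a x' = 1)
    (ν₀ : X → ℝ) (hν0 : ∀ x, 0 ≤ ν₀ x) (hν1 : ∑ x, ν₀ x = 1)
    (π : X → A → ℝ) (hπ0 : ∀ x a, 0 ≤ π x a) (hπ1 : ∀ x, ∑ a, π x a = 1)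
    (π' : X → A → ℝ) (hπ'0 : ∀ x a, 0 ≤ π' x a) (hπ'1 : ∀ x, ∑ a, π' x a = 1) :
    KLd (fun p : X × A => occ γ P ν₀ π p.1 p.2) (fun p : X × A => occ γ P ν₀ π' p.1 p.2)
      ≤ ENNReal.ofReal (1 / (1 - γ)) * condKL γ P ν₀ π π' :=
  stmt_2_general γ hγ0 hγ1 P hP0 hP1 ν₀ hν0 π hπ0 hπ1 π' hπ'0 hπ'1
end

section
/- Let A be a nonempty finite set, Q : A → ℝ, p' a probability distribution on A, and η > 0. Then max_{p ∈ Δ(A)} { Σ_a p(a) Q(a) − (1/η) · KL(p ‖ p') } = (1/η) · log( Σ_a p'(a) · exp(η Q(a)) ), and the maximum is attained at the distribution p*(a) = p'(a) · exp(η Q(a)) / Σ_{a'} p'(a') exp(η Q(a')). -/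
open scoped ENNReal

/-- The softmax (exponentially tilted) distribution
`p*(a) = p'(a) exp(η Q(a)) / Σ_{a'} p'(a') exp(η Q(a'))`. -/
noncomputable def softmaxDist {A : Type*} [Fintype A] (η : ℝ) (p' Q : A → ℝ) : A → ℝ :=
  fun a => p' a * Real.exp (η * Q a) / ∑ a', p' a' * Real.exp (η * Q a')

open Finset in
lemma jensen_core {A : Type*} [Fintype A] (p p' f : A → ℝ)
    (hp0 : ∀ a, 0 ≤ p a) (hp1 : ∑ a, p a = 1) (hp'0 : ∀ a, 0 ≤ p' a)
    (habs : ∀ a, p' a = 0 → p a = 0) :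
    ∑ a, (if p a = 0 then (0:ℝ) else p a * Real.log (p' a * Real.exp (f a) / p a))
      ≤ Real.log (∑ a, p' a * Real.exp (f a)) := by
  classical
  set t : Finset A := Finset.univ.filter (fun a => p a ≠ 0) with ht
  have hppos : ∀ a ∈ t, 0 < p a := by
    intro a ha; rw [ht, mem_filter] at ha; exact lt_of_le_of_ne (hp0 a) (Ne.symm ha.2)
  have hp'pos : ∀ a ∈ t, 0 < p' a := by
    intro a ha
    rw [ht, mem_filter] at ha
    exact lt_of_le_of_ne (hp'0 a) (fun h => ha.2 (habs a h.symm))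
  have hsum_t : ∑ a ∈ t, p a = 1 := by
    rw [ht, Finset.sum_filter_ne_zero, hp1]
  have htne : t.Nonempty := by
    rcases Finset.eq_empty_or_nonempty t with h | h
    · exfalso; rw [h, Finset.sum_empty] at hsum_t; norm_num at hsum_t
    · exact h
  have hx : ∀ a ∈ t, p' a * Real.exp (f a) / p a ∈ Set.Ioi (0:ℝ) := by
    intro a ha
    exact div_pos (mul_pos (hp'pos a ha) (Real.exp_pos _)) (hppos a ha)
  have hjen := (strictConcaveOn_log_Ioi.concaveOn).le_map_sum
    (t := t) (w := p) (p := fun a => p' a * Real.exp (f a) / p a)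
    (fun a ha => hp0 a) hsum_t hx
  have hsum_eq : ∑ a ∈ t, p a • (p' a * Real.exp (f a) / p a)
      = ∑ a ∈ t, p' a * Real.exp (f a) := by
    apply Finset.sum_congr rfl
    intro a ha
    rw [smul_eq_mul, mul_div_cancel₀]
    exact (hppos a ha).ne'
  have hlhs : ∑ a, (if p a = 0 then (0:ℝ) else p a * Real.log (p' a * Real.exp (f a) / p a))
      = ∑ a ∈ t, p a • Real.log (p' a * Real.exp (f a) / p a) := by
    rw [ht, Finset.sum_filter]
    apply Finset.sum_congr rfl
    intro a _
    by_cases h : p a = 0 <;> simp [h]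
  have hpos_t : 0 < ∑ a ∈ t, p' a * Real.exp (f a) :=
    Finset.sum_pos (fun a ha => mul_pos (hp'pos a ha) (Real.exp_pos _)) htne
  have hmono : ∑ a ∈ t, p' a * Real.exp (f a) ≤ ∑ a, p' a * Real.exp (f a) := by
    apply Finset.sum_le_sum_of_subset_of_nonneg (Finset.subset_univ t)
    intro a _ _
    exact mul_nonneg (hp'0 a) (Real.exp_pos _).le
  calc ∑ a, (if p a = 0 then (0:ℝ) else p a * Real.log (p' a * Real.exp (f a) / p a))
      = ∑ a ∈ t, p a • Real.log (p' a * Real.exp (f a) / p a) := hlhs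
    _ ≤ Real.log (∑ a ∈ t, p a • (p' a * Real.exp (f a) / p a)) := hjen
    _ = Real.log (∑ a ∈ t, p' a * Real.exp (f a)) := by rw [hsum_eq]
    _ ≤ Real.log (∑ a, p' a * Real.exp (f a)) := Real.log_le_log hpos_t hmono

/-- Gibbs' inequality: the KL sum is nonnegative. -/
lemma gibbs_nonneg {A : Type*} [Fintype A] (p p' : A → ℝ)
    (hp0 : ∀ a, 0 ≤ p a) (hp1 : ∑ a, p a = 1) (hp'0 : ∀ a, 0 ≤ p' a)
    (hp'1 : ∑ a, p' a = 1) (habs : ∀ a, p' a = 0 → p a = 0) :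
    0 ≤ ∑ a, (if p a = 0 then (0:ℝ) else p a * Real.log (p a / p' a)) := by
  classical
  have h := jensen_core p p' (fun _ => 0) hp0 hp1 hp'0 habs
  simp only [Real.exp_zero, mul_one] at h
  rw [hp'1, Real.log_one] at h
  have heq : ∑ a, (if p a = 0 then (0:ℝ) else p a * Real.log (p' a / p a))
      = - ∑ a, (if p a = 0 then (0:ℝ) else p a * Real.log (p a / p' a)) := by
    rw [← Finset.sum_neg_distrib]
    apply Finset.sum_congr rfl
    intro a _
    by_cases h : p a = 0
    · simp [h]
    · have hl := Real.log_inv (p a / p' a)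
      rw [inv_div] at hl
      rw [if_neg h, if_neg h, hl]
      ring
  rw [heq] at h
  linarith

/-- Maximum of the entropy-regularized linear functional: for any distribution `p'` on `A` and
`η > 0`, `max_{p ∈ Δ(A)} {⟨p, Q⟩ − (1/η) KL(p‖p')} = (1/η) log Σ_a p'(a) exp(η Q(a))`, and
the maximum is attained at the softmax distribution `p*`. -/
theorem stmt_7 {A : Type*} [Fintype A] [Nonempty A] (Q p' : A → ℝ)
    (hp'0 : ∀ a, 0 ≤ p' a) (hp'1 : ∑ a, p' a = 1) (η : ℝ) (hη : 0 < η) :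
    (∀ p : A → ℝ, (∀ a, 0 ≤ p a) → ∑ a, p a = 1 →
        ((∑ a, p a * Q a : ℝ) : EReal) - ((1 / η : ℝ) : EReal) * (KLd p p' : EReal)
          ≤ (((1 / η) * Real.log (∑ a, p' a * Real.exp (η * Q a)) : ℝ) : EReal))
      ∧ (∀ a, 0 ≤ softmaxDist η p' Q a) ∧ (∑ a, softmaxDist η p' Q a = 1)
      ∧ ((∑ a, softmaxDist η p' Q a * Q a : ℝ) : EReal)
            - ((1 / η : ℝ) : EReal) * (KLd (softmaxDist η p' Q) p' : EReal)
          = (((1 / η) * Real.log (∑ a, p' a * Real.exp (η * Q a)) : ℝ) : EReal) := by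
  classical
  set Z : ℝ := ∑ a, p' a * Real.exp (η * Q a) with hZ
  have hZpos : 0 < Z := by
    rw [hZ]
    have : ∃ a, 0 < p' a := by
      by_contra h
      push_neg at h
      have : ∀ a, p' a = 0 := fun a => le_antisymm (h a) (hp'0 a)
      simp [this] at hp'1
    obtain ⟨a0, ha0⟩ := this
    apply Finset.sum_pos' (fun a _ => mul_nonneg (hp'0 a) (Real.exp_pos _).le)
    exact ⟨a0, Finset.mem_univ a0, mul_pos ha0 (Real.exp_pos _)⟩
  have hηne : η ≠ 0 := hη.ne'
  -- the upper bound for every distribution p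
  have hub : ∀ p : A → ℝ, (∀ a, 0 ≤ p a) → ∑ a, p a = 1 →
      ((∑ a, p a * Q a : ℝ) : EReal) - ((1 / η : ℝ) : EReal) * (KLd p p' : EReal)
        ≤ (((1 / η) * Real.log Z : ℝ) : EReal) := by
    intro p hp0 hp1
    by_cases habs : ∀ a, p' a = 0 → p a = 0
    · -- finite KL case
      rw [KLd, if_pos habs]
      set S : ℝ := ∑ a, (if p a = 0 then (0:ℝ) else p a * Real.log (p a / p' a)) with hS
      have hSnn : 0 ≤ S := gibbs_nonneg p p' hp0 hp1 hp'0 hp'1 habs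
      rw [EReal.coe_ennreal_ofReal, max_eq_left hSnn,
        ← EReal.coe_mul, ← EReal.coe_sub, EReal.coe_le_coe_iff]
      -- real inequality: ∑ pQ - (1/η) S ≤ (1/η) log Z
      have hkey : η * (∑ a, p a * Q a) - S ≤ Real.log Z := by
        have h := jensen_core p p' (fun a => η * Q a) hp0 hp1 hp'0 habs
        have heq : ∑ a, (if p a = 0 then (0:ℝ)
            else p a * Real.log (p' a * Real.exp (η * Q a) / p a))
            = ∑ a, (p a * (η * Q a)
              - (if p a = 0 then (0:ℝ) else p a * Real.log (p a / p' a))) := by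
          apply Finset.sum_congr rfl
          intro a _
          by_cases hpa : p a = 0
          · simp [hpa]
          · have hp'a : p' a ≠ 0 := fun h => hpa (habs a h)
            rw [if_neg hpa, if_neg hpa]
            rw [Real.log_div (by positivity) hpa,
              Real.log_mul hp'a (Real.exp_ne_zero _), Real.log_exp,
              Real.log_div hpa hp'a]
            ring
        rw [heq, Finset.sum_sub_distrib, ← hS] at h
        have : ∑ a, p a * (η * Q a) = η * ∑ a, p a * Q a := by
          rw [Finset.mul_sum]; apply Finset.sum_congr rfl; intro a _; ring
        rw [this] at h
        exact h
      calc (∑ a, p a * Q a) - 1 / η * S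
          = (1/η) * (η * (∑ a, p a * Q a) - S) := by field_simp
        _ ≤ (1/η) * Real.log Z := by
            apply mul_le_mul_of_nonneg_left hkey (by positivity)
    · -- infinite KL case
      rw [KLd, if_neg habs, EReal.coe_ennreal_top]
      have h1 : ((1 / η : ℝ) : EReal) * (⊤ : EReal) = ⊤ :=
        EReal.coe_mul_top_of_pos (by positivity)
      rw [h1, EReal.sub_top]
      exact bot_le
  refine ⟨hub, ?_, ?_, ?_⟩
  · intro a
    exact div_nonneg (mul_nonneg (hp'0 a) (Real.exp_pos _).le) hZpos.le
  · simp only [softmaxDist]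
    rw [← Finset.sum_div, ← hZ, div_self hZpos.ne']
  · -- equality at the softmax distribution
    set ps : A → ℝ := softmaxDist η p' Q with hps
    have hps0 : ∀ a, 0 ≤ ps a := fun a =>
      div_nonneg (mul_nonneg (hp'0 a) (Real.exp_pos _).le) hZpos.le
    have hps1 : ∑ a, ps a = 1 := by
      rw [hps]; simp only [softmaxDist]
      rw [← Finset.sum_div, ← hZ, div_self hZpos.ne']
    have habs : ∀ a, p' a = 0 → ps a = 0 := by
      intro a h
      rw [hps]; simp [softmaxDist, h]
    have hpszero : ∀ a, ps a = 0 ↔ p' a = 0 := by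
      intro a
      constructor
      · intro h
        rw [hps, softmaxDist] at h
        rcases div_eq_zero_iff.mp h with h1 | h1
        · rcases mul_eq_zero.mp h1 with h2 | h2
          · exact h2
          · exact absurd h2 (Real.exp_ne_zero _)
        · rw [← hZ] at h1; exact absurd h1 hZpos.ne'
      · exact habs a
    rw [KLd, if_pos habs]
    set S : ℝ := ∑ a, (if ps a = 0 then (0:ℝ) else ps a * Real.log (ps a / p' a)) with hS
    have hSnn : 0 ≤ S := gibbs_nonneg ps p' hps0 hps1 hp'0 hp'1 habs
    have hSval : S = η * (∑ a, ps a * Q a) - Real.log Z := by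
      have heq : ∀ a, (if ps a = 0 then (0:ℝ) else ps a * Real.log (ps a / p' a))
          = ps a * (η * Q a) - ps a * Real.log Z := by
        intro a
        by_cases h : ps a = 0
        · simp [h]
        · have hp'a : p' a ≠ 0 := fun hh => h ((hpszero a).mpr hh)
          have hratio : ps a / p' a = Real.exp (η * Q a) / Z := by
            rw [hps]; simp only [softmaxDist]; rw [← hZ]
            field_simp
          rw [if_neg h, hratio, Real.log_div (Real.exp_ne_zero _) hZpos.ne',
            Real.log_exp]
          ring
      rw [hS]
      rw [Finset.sum_congr rfl (fun a _ => heq a), Finset.sum_sub_distrib,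
        ← Finset.sum_mul, hps1, one_mul, Finset.mul_sum]
      congr 1
      apply Finset.sum_congr rfl
      intro a _
      ring
    rw [EReal.coe_ennreal_ofReal, max_eq_left hSnn,
      ← EReal.coe_mul, ← EReal.coe_sub, EReal.coe_eq_coe_iff]
    rw [hSval]
    field_simp
    ring
end

section
/- Let X and A be nonempty finite sets, η > 0, π₀ : X → Δ(A) an initial policy, and Q₁, …, Q_k : X × A → ℝ arbitrary functions. Define recursively for i = 1, …, k: V_i(x) = (1/η) · log( Σ_a π_{i−1}(a|x) exp(η Q_i(x,a)) ) and π_i(a|x) = π_{i−1}(a|x) · exp( η (Q_i(x,a) − V_i(x)) ). Then for every state x: Σ_{i=1}^k V_i(x) = max_{p ∈ Δ(A)} { Σ_a p(a) · Σ_{i=1}^k Q_i(x,a) − (1/η) · KL(p ‖ π₀(·|x)) }. -/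
open scoped ENNReal

/-!
Unrolling the recursion gives `π_k(a|x) = π₀(a|x) exp(η (S(x,a) − W(x)))` with `S = Σ_i Q_i`,
`W = Σ_i V_i`, and each `π_i(·|x)` is a probability distribution because `V_i` is exactly its
log-normaliser. So `π_k(·|x)` is the Gibbs tilt of `π₀(·|x)` by `η S`, with normaliser `W`, and
for every `p ≪ π₀(·|x)`,
`KL(p ‖ π₀) = KL(p ‖ π_k) + η (⟨p, S⟩ − W)`.
Gibbs' inequality `KL(p ‖ π_k) ≥ 0` bounds the objective by `W`, with equality at `p = π_k`.
-/

namespace MirrorDescent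

open Finset Real

theorem sub_le_mul_log_div {p q : ℝ} (hp : 0 ≤ p) (hq : 0 ≤ q) (hpq : q = 0 → p = 0) :
    p - q ≤ p * log (p / q) := by
  rcases hq.eq_or_lt with rfl | hq
  · simp [hpq rfl]
  have h := mul_le_mul_of_nonneg_left (self_sub_one_le_mul_log (div_nonneg hp hq.le)) hq.le
  rwa [mul_sub, mul_div_cancel₀ _ hq.ne', mul_one, ← mul_assoc, mul_div_cancel₀ _ hq.ne'] at h

variable {A : Type*}

theorem eq_mul_exp_sum_sub_sum {η : ℝ} {k : ℕ} {ρ Q : ℕ → A → ℝ} {V : ℕ → ℝ}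
    (hρ : ∀ i, 1 ≤ i → i ≤ k → ∀ a, ρ i a = ρ (i - 1) a * exp (η * (Q i a - V i))) :
    ∀ j ≤ k, ∀ a, ρ j a =
      ρ 0 a * exp (η * (∑ i ∈ Icc 1 j, Q i a - ∑ i ∈ Icc 1 j, V i)) := by
  intro j
  induction j with
  | zero => simp
  | succ j ih =>
    intro hj a
    rw [hρ (j + 1) (by omega) hj a, Nat.add_sub_cancel, ih (by omega) a, mul_assoc,
      ← exp_add, sum_Icc_succ_top (by omega), sum_Icc_succ_top (by omega)]
    ring_nf

variable [Fintype A]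

theorem sum_mul_exp_sub_logSumExp {η : ℝ} (hη : η ≠ 0) {p Q : A → ℝ}
    (hp : ∀ a, 0 ≤ p a) (hp1 : ∑ a, p a = 1) :
    ∑ a, p a * exp (η * (Q a - 1 / η * log (∑ b, p b * exp (η * Q b)))) = 1 := by
  set Z := ∑ b, p b * exp (η * Q b)
  have hZ : 0 < Z := by
    obtain ⟨a, -, ha⟩ := exists_ne_zero_of_sum_ne_zero (hp1 ▸ one_ne_zero)
    exact sum_pos' (fun b _ => mul_nonneg (hp b) (exp_pos _).le)
      ⟨a, mem_univ a, mul_pos ((hp a).lt_of_ne' ha) (exp_pos _)⟩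
  have hexp : ∀ a, exp (η * (Q a - 1 / η * log Z)) = exp (η * Q a) / Z := fun a => by
    rw [mul_sub, ← mul_assoc, mul_one_div_cancel hη, one_mul, exp_sub, exp_log hZ]
  simp only [hexp, mul_div_assoc', ← sum_div]
  exact div_self hZ.ne'

theorem nonneg_and_sum_eq_one {η : ℝ} {k : ℕ} {ρ Q : ℕ → A → ℝ} {V : ℕ → ℝ} (hη : η ≠ 0)
    (h0 : ∀ a, 0 ≤ ρ 0 a) (h1 : ∑ a, ρ 0 a = 1)
    (hV : ∀ i, 1 ≤ i → i ≤ k → V i = 1 / η * log (∑ a, ρ (i - 1) a * exp (η * Q i a)))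
    (hρ : ∀ i, 1 ≤ i → i ≤ k → ∀ a, ρ i a = ρ (i - 1) a * exp (η * (Q i a - V i))) :
    ∀ j ≤ k, (∀ a, 0 ≤ ρ j a) ∧ ∑ a, ρ j a = 1 := by
  intro j
  induction j with
  | zero => exact fun _ => ⟨h0, h1⟩
  | succ j ih =>
    intro hj
    obtain ⟨hj0, hj1⟩ := ih (by omega)
    have hstep := hρ (j + 1) (by omega) hj
    rw [hV (j + 1) (by omega) hj, Nat.add_sub_cancel] at hstep
    simp only [hstep]
    exact ⟨fun a => mul_nonneg (hj0 a) (exp_pos _).le, sum_mul_exp_sub_logSumExp hη hj0 hj1⟩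

theorem sum_mul_log_div_nonneg {p q : A → ℝ} (hp : ∀ a, 0 ≤ p a) (hq : ∀ a, 0 ≤ q a)
    (hp1 : ∑ a, p a = 1) (hq1 : ∑ a, q a ≤ 1) (hpq : ∀ a, q a = 0 → p a = 0) :
    0 ≤ ∑ a, p a * log (p a / q a) := by
  have h := sum_le_sum fun a (_ : a ∈ univ) => sub_le_mul_log_div (hp a) (hq a) (hpq a)
  rw [sum_sub_distrib, hp1] at h
  linarith

theorem coe_KLd_of_absolutelyContinuous {p q : A → ℝ} (hp : ∀ a, 0 ≤ p a)
    (hq : ∀ a, 0 ≤ q a) (hp1 : ∑ a, p a = 1) (hq1 : ∑ a, q a ≤ 1)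
    (hpq : ∀ a, q a = 0 → p a = 0) :
    (KLd p q : EReal) = ((∑ a, p a * log (p a / q a) : ℝ) : EReal) := by
  have hif : (∑ a, if p a = 0 then (0 : ℝ) else p a * log (p a / q a)) =
      ∑ a, p a * log (p a / q a) :=
    sum_congr rfl fun a _ => by split_ifs with h <;> simp [h]
  rw [KLd, if_pos hpq, hif, EReal.coe_ennreal_ofReal,
    max_eq_left (sum_mul_log_div_nonneg hp hq hp1 hq1 hpq)]

theorem coe_KLd_of_not_absolutelyContinuous {p q : A → ℝ}
    (hpq : ¬ ∀ a, q a = 0 → p a = 0) : (KLd p q : EReal) = ⊤ := by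
  rw [KLd, if_neg hpq, EReal.coe_ennreal_top]

/-- Gibbs variational principle. -/
theorem isGreatest_sum_mul_sub_KLd {η : ℝ} (hη : 0 < η) {q S : A → ℝ} {W : ℝ}
    (hq : ∀ a, 0 ≤ q a) (hq1 : ∑ a, q a = 1)
    (hZ : ∑ a, q a * exp (η * (S a - W)) = 1) :
    IsGreatest {v : EReal | ∃ p : A → ℝ, (∀ a, 0 ≤ p a) ∧ (∑ a, p a = 1) ∧
        v = ((∑ a, p a * S a : ℝ) : EReal) - ((1 / η : ℝ) : EReal) * (KLd p q : EReal)}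
      (W : EReal) := by
  set g : A → ℝ := fun a => q a * exp (η * (S a - W))
  have hg : ∀ a, 0 ≤ g a := fun a => mul_nonneg (hq a) (exp_pos _).le
  have hgq : ∀ a, q a = 0 → g a = 0 := fun a h => by simp [g, h]
  have hqg : ∀ a, g a = 0 → q a = 0 := fun a h => by simpa [g, (exp_pos _).ne'] using h
  have hlog : ∀ p : A → ℝ, (∀ a, q a = 0 → p a = 0) → ∀ a,
      p a * log (p a / q a) = p a * log (p a / g a) + η * (p a * (S a - W)) := by
    intro p hpq a
    rcases eq_or_ne (p a) 0 with hp | hp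
    · simp [hp]
    have hqa : q a ≠ 0 := fun h => hp (hpq a h)
    rw [log_div hp hqa, log_div hp (mul_ne_zero hqa (exp_pos _).ne'), log_mul hqa
      (exp_pos _).ne', log_exp]
    ring
  have hvalue : ∀ p : A → ℝ, ∑ a, p a = 1 → (∀ a, q a = 0 → p a = 0) →
      ((∑ a, p a * S a : ℝ) : EReal) - ((1 / η : ℝ) : EReal) *
        ((∑ a, p a * log (p a / q a) : ℝ) : EReal) =
      ((W - (1 / η) * ∑ a, p a * log (p a / g a) : ℝ) : EReal) := by
    intro p hp1 hpq
    have hmean : ∑ a, p a * (S a - W) = ∑ a, p a * S a - W := by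
      simp only [mul_sub, sum_sub_distrib, ← sum_mul, hp1, one_mul]
    rw [← EReal.coe_mul, ← EReal.coe_sub, EReal.coe_eq_coe_iff, sum_congr rfl
      fun a _ => hlog p hpq a, sum_add_distrib, ← mul_sum, hmean]
    field_simp
    ring
  constructor
  · refine ⟨g, hg, hZ, ?_⟩
    rw [coe_KLd_of_absolutelyContinuous hg hq hZ hq1.le hgq, hvalue g hZ hgq]
    simp
  · rintro v ⟨p, hp, hp1, rfl⟩
    by_cases hpq : ∀ a, q a = 0 → p a = 0
    · rw [coe_KLd_of_absolutelyContinuous hp hq hp1 hq1.le hpq, hvalue p hp1 hpq,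
        EReal.coe_le_coe_iff, sub_le_self_iff]
      exact mul_nonneg (by positivity) (sum_mul_log_div_nonneg hp hg hp1 hZ.le
        fun a h => hpq a (hqg a h))
    · rw [coe_KLd_of_not_absolutelyContinuous hpq,
        EReal.mul_top_of_pos (EReal.coe_pos.2 (by positivity)), EReal.sub_top]
      exact bot_le

end MirrorDescent

open Finset MirrorDescent in
theorem stmt_8_general {X A : Type*} [Fintype A]
    (η : ℝ) (hη : 0 < η) (k : ℕ)
    (π : ℕ → X → A → ℝ) (hπ00 : ∀ x a, 0 ≤ π 0 x a) (hπ01 : ∀ x, ∑ a, π 0 x a = 1)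
    (Q : ℕ → X → A → ℝ) (V : ℕ → X → ℝ)
    (hV : ∀ i, 1 ≤ i → i ≤ k → ∀ x,
        V i x = (1 / η) * Real.log (∑ a, π (i - 1) x a * Real.exp (η * Q i x a)))
    (hπ : ∀ i, 1 ≤ i → i ≤ k → ∀ x a,
        π i x a = π (i - 1) x a * Real.exp (η * (Q i x a - V i x))) :
    ∀ x, IsGreatest
      {v : EReal | ∃ p : A → ℝ, (∀ a, 0 ≤ p a) ∧ (∑ a, p a = 1) ∧
        v = ((∑ a, p a * ∑ i ∈ Finset.Icc 1 k, Q i x a : ℝ) : EReal)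
              - ((1 / η : ℝ) : EReal) * (KLd p (π 0 x) : EReal)}
      (((∑ i ∈ Finset.Icc 1 k, V i x : ℝ)) : EReal) := by
  intro x
  have hπx := fun i hi hik a => hπ i hi hik x a
  have hsum : ∑ a, π k x a = 1 :=
    (nonneg_and_sum_eq_one hη.ne' (hπ00 x) (hπ01 x) (fun i hi hik => hV i hi hik x) hπx
      k le_rfl).2
  have hZ : ∑ a, π 0 x a *
      Real.exp (η * (∑ i ∈ Icc 1 k, Q i x a - ∑ i ∈ Icc 1 k, V i x)) = 1 := by
    rw [← hsum]
    exact sum_congr rfl fun a _ => (eq_mul_exp_sum_sub_sum hπx k le_rfl a).symm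
  exact isGreatest_sum_mul_sub_KLd hη (hπ00 x) (hπ01 x) hZ

/-- Telescoping property of mirror-descent value iterates:  with
`V_i(x) = (1/η) log Σ_a π_{i−1}(a|x) exp(η Q_i(x,a))` and
`π_i(a|x) = π_{i−1}(a|x) exp(η (Q_i(x,a) − V_i(x)))` for `i = 1, …, k`,
for every state `x` the sum `Σ_{i=1}^k V_i(x)` equals
`max_{p ∈ Δ(A)} {⟨p, Σ_{i=1}^k Q_i(x,·)⟩ − (1/η) KL(p ‖ π₀(·|x))}`. -/
theorem stmt_8 {X A : Type*} [Fintype X] [Fintype A] [Nonempty X] [Nonempty A]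
    (η : ℝ) (hη : 0 < η) (k : ℕ)
    (π : ℕ → X → A → ℝ) (hπ00 : ∀ x a, 0 ≤ π 0 x a) (hπ01 : ∀ x, ∑ a, π 0 x a = 1)
    (Q : ℕ → X → A → ℝ) (V : ℕ → X → ℝ)
    (hV : ∀ i, 1 ≤ i → i ≤ k → ∀ x,
        V i x = (1 / η) * Real.log (∑ a, π (i - 1) x a * Real.exp (η * Q i x a)))
    (hπ : ∀ i, 1 ≤ i → i ≤ k → ∀ x a,
        π i x a = π (i - 1) x a * Real.exp (η * (Q i x a - V i x))) :
    ∀ x, IsGreatest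
      {v : EReal | ∃ p : A → ℝ, (∀ a, 0 ≤ p a) ∧ (∑ a, p a = 1) ∧
        v = ((∑ a, p a * ∑ i ∈ Finset.Icc 1 k, Q i x a : ℝ) : EReal)
              - ((1 / η : ℝ) : EReal) * (KLd p (π 0 x) : EReal)}
      (((∑ i ∈ Finset.Icc 1 k, V i x : ℝ)) : EReal) :=
  stmt_8_general η hη k π hπ00 hπ01 Q V hV hπ
end

section
/- Let d ≥ 1, λ > 0, and C > 0. Let T₁, …, T_K be nonempty finite disjoint index sets with total cardinality T = Σ_k |T_k|, and for each k and each t ∈ T_k let φ_{k,t} ∈ ℝ^d satisfy ‖φ_{k,t}‖₂ ≤ C. Define Λ₁ = λ I and Λ_{k+1} = Λ_k + Σ_{t ∈ T_k} φ_{k,t} φ_{k,t}ᵀ. Then Σ_{k=1}^K (1/|T_k|) · Σ_{t ∈ T_k} log( 1 + |T_k| · φ_{k,t}ᵀ Λ_k^{−1} φ_{k,t} ) ≤ d · log( 1 + C² T / (λ d) ). -/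
/-!
Write `S_k = ∑_{t ∈ T_k} φ_{k,t} φ_{k,t}ᵀ`. By concavity of `log`, the `k`-th summand is at most
`log (1 + tr (Λ_k⁻¹ S_k))`. Conjugating by a square root of `Λ_k⁻¹` and using Sylvester's
determinant identity, `det (Λ_k + S_k) = det Λ_k · det (1 + B)` with `B ⪰ 0` and
`tr B = tr (Λ_k⁻¹ S_k)`, and `det (1 + B) = ∏ (1 + μ_i) ≥ 1 + ∑ μ_i`. Hence the sum telescopes to at
most `log det Λ_{K+1} - log det Λ_1`, and AM-GM on the eigenvalues gives
`log det Λ_{K+1} ≤ d log (tr Λ_{K+1} / d) ≤ d log (λ + C² T / d)`.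
-/

open Matrix Finset

theorem Finset.one_add_sum_le_prod_one_add {ι R : Type*} [CommSemiring R] [PartialOrder R]
    [IsOrderedRing R] (s : Finset ι) {f : ι → R} (hf : ∀ i ∈ s, 0 ≤ f i) :
    1 + ∑ i ∈ s, f i ≤ ∏ i ∈ s, (1 + f i) := by
  classical
  induction s using Finset.induction_on with
  | empty => simp
  | insert a s ha ih =>
    have hfa := hf a (mem_insert_self a s)
    have hs : ∀ i ∈ s, 0 ≤ f i := fun i hi => hf i (mem_insert_of_mem hi)
    rw [sum_insert ha, prod_insert ha]
    calc 1 + (f a + ∑ i ∈ s, f i) ≤ 1 + (f a + ∑ i ∈ s, f i) + f a * ∑ i ∈ s, f i :=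
          le_add_of_nonneg_right (mul_nonneg hfa (sum_nonneg hs))
      _ = (1 + f a) * (1 + ∑ i ∈ s, f i) := by ring
      _ ≤ (1 + f a) * ∏ i ∈ s, (1 + f i) := by
          gcongr
          exacts [add_nonneg zero_le_one hfa, ih hs]

theorem Fin.sum_univ_sub_telescope {M : Type*} [AddCommGroup M] (f : ℕ → M) (K : ℕ) :
    ∑ k : Fin K, (f (k + 1) - f k) = f K - f 0 := by
  rw [Fin.sum_univ_eq_sum_range (fun k => f (k + 1) - f k), sum_range_sub]

theorem Real.sum_log_le_card_mul_log_sum_div_card {ι : Type*} {s : Finset ι} (hs : s.Nonempty)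
    {z : ι → ℝ} (hz : ∀ i ∈ s, 0 < z i) :
    ∑ i ∈ s, Real.log (z i) ≤ #s * Real.log ((∑ i ∈ s, z i) / #s) := by
  have hcard : (0 : ℝ) < #s := by exact_mod_cast hs.card_pos
  have hjensen := strictConcaveOn_log_Ioi.concaveOn.le_map_sum (t := s)
    (w := fun _ => (#s : ℝ)⁻¹) (p := z) (fun _ _ => by positivity) (by simp [hcard.ne']) hz
  simp only [smul_eq_mul, ← mul_sum] at hjensen
  rw [div_eq_inv_mul, ← inv_mul_le_iff₀ hcard]
  exact hjensen

namespace Matrix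

variable {n : Type*}

theorem posDef_of_succ_eq_add {K : ℕ} {Λ : ℕ → Matrix n n ℝ} {S : Fin K → Matrix n n ℝ}
    (h0 : (Λ 0).PosDef) (hS : ∀ k, (S k).PosSemidef) (hΛ : ∀ k : Fin K, Λ (k + 1) = Λ k + S k) :
    ∀ m ≤ K, (Λ m).PosDef := by
  intro m
  induction m with
  | zero => exact fun _ => h0
  | succ m ih =>
    intro hm
    rw [show m = (⟨m, hm⟩ : Fin K) from rfl, hΛ]
    exact (ih (by omega)).add_posSemidef (hS _)

variable [Fintype n]

theorem posSemidef_sum_vecMulVec_self {ι : Type*} (s : Finset ι) (v : ι → n → ℝ) :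
    (∑ t ∈ s, vecMulVec (v t) (v t)).PosSemidef :=
  posSemidef_sum s fun t _ => by simpa using posSemidef_vecMulVec_self_star (v t)

theorem trace_mul_vecMulVec_self (M : Matrix n n ℝ) (v : n → ℝ) :
    (M * vecMulVec v v).trace = v ⬝ᵥ M *ᵥ v := by
  rw [mul_vecMulVec, trace_vecMulVec, dotProduct_comm]

theorem trace_sum_vecMulVec_self_le {ι : Type*} {s : Finset ι} {v : ι → n → ℝ} {C : ℝ}
    (hv : ∀ t ∈ s, √(∑ i, v t i ^ 2) ≤ C) :
    (∑ t ∈ s, vecMulVec (v t) (v t)).trace ≤ #s * C ^ 2 := by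
  rw [trace_sum, ← nsmul_eq_mul, ← sum_const]
  refine sum_le_sum fun t ht => ?_
  simpa [dotProduct, sq] using (Real.sqrt_le_iff.mp (hv t ht)).2

theorem trace_le_of_succ_eq_add_sum_vecMulVec {ι : Type*} {K : ℕ} {Ts : Fin K → Finset ι}
    {v : Fin K → ι → n → ℝ} {Λ : ℕ → Matrix n n ℝ} {C : ℝ}
    (hv : ∀ k, ∀ t ∈ Ts k, √(∑ i, v k t i ^ 2) ≤ C)
    (hΛ : ∀ k : Fin K, Λ (k + 1) = Λ k + ∑ t ∈ Ts k, vecMulVec (v k t) (v k t)) :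
    (Λ K).trace ≤ (Λ 0).trace + C ^ 2 * ∑ k, #(Ts k) := by
  have htel := Fin.sum_univ_sub_telescope (fun m => (Λ m).trace) K
  simp only [hΛ, trace_add, add_sub_cancel_left] at htel
  have := sum_le_sum fun k (_ : k ∈ univ) => trace_sum_vecMulVec_self_le (hv k)
  rw [← sum_mul] at this
  push_cast
  linarith

variable [DecidableEq n]

theorem IsHermitian.det_one_add {A : Matrix n n ℝ} (hA : A.IsHermitian) :
    (1 + A).det = ∏ i, (1 + hA.eigenvalues i) := by
  have h : cfc (fun x : ℝ => 1 + x) A = 1 + A := by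
    rw [cfc_const_add (1 : ℝ) (fun x => x) A, cfc_id' ℝ A, map_one]
  rw [← h, hA.cfc_eq]
  simp [IsHermitian.cfc, -Unitary.conjStarAlgAut_apply, det_diagonal]

theorem PosSemidef.one_add_trace_le_det_one_add {A : Matrix n n ℝ} (hA : A.PosSemidef) :
    1 + A.trace ≤ (1 + A).det := by
  rw [hA.isHermitian.det_one_add, hA.isHermitian.trace_eq_sum_eigenvalues]
  exact one_add_sum_le_prod_one_add _ fun i _ => hA.eigenvalues_nonneg i

theorem PosDef.log_det_le_card_mul_log_trace_div_card [Nonempty n] {A : Matrix n n ℝ}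
    (hA : A.PosDef) :
    Real.log A.det ≤ Fintype.card n * Real.log (A.trace / Fintype.card n) := by
  rw [hA.isHermitian.det_eq_prod_eigenvalues, hA.isHermitian.trace_eq_sum_eigenvalues]
  simp only [RCLike.ofReal_real_eq_id, id]
  rw [Real.log_prod fun i _ => (hA.eigenvalues_pos i).ne']
  exact Real.sum_log_le_card_mul_log_sum_div_card univ_nonempty fun i _ => hA.eigenvalues_pos i

open scoped MatrixOrder in
theorem PosDef.det_mul_one_add_trace_inv_mul_le_det_add {A S : Matrix n n ℝ} (hA : A.PosDef)
    (hS : S.PosSemidef) : A.det * (1 + (A⁻¹ * S).trace) ≤ (A + S).det := by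
  obtain ⟨X, hX⟩ : ∃ X : Matrix n n ℝ, A⁻¹ = star X * X :=
    ⟨CFC.sqrt A⁻¹, by
      rw [(CFC.sqrt_nonneg A⁻¹).isSelfAdjoint.star_eq,
        CFC.sqrt_mul_sqrt_self A⁻¹ hA.inv.posSemidef.nonneg]⟩
  have hA_add : A + S = A * (1 + A⁻¹ * S) := by
    rw [mul_add, mul_one, mul_nonsing_inv_cancel_left _ _ (isUnit_iff_ne_zero.mpr hA.det_pos.ne')]
  have hconj : A⁻¹ * S = star X * (X * S) := by rw [hX, Matrix.mul_assoc]
  -- Sylvester's identity turns `A⁻¹ * S` into the positive semidefinite `X * S * Xᴴ`.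
  rw [hA_add, det_mul, hconj, det_one_add_mul_comm, trace_mul_comm]
  gcongr
  · exact hA.det_pos.le
  · exact (hS.mul_mul_conjTranspose_same X).one_add_trace_le_det_one_add

theorem PosDef.inv_card_mul_sum_log_le_log_det_add_sub_log_det {ι : Type*} {A : Matrix n n ℝ}
    (hA : A.PosDef) {s : Finset ι} (hs : s.Nonempty) (v : ι → n → ℝ) :
    1 / (#s : ℝ) * ∑ t ∈ s, Real.log (1 + #s * (v t ⬝ᵥ A⁻¹ *ᵥ v t)) ≤
      Real.log (A + ∑ t ∈ s, vecMulVec (v t) (v t)).det - Real.log A.det := by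
  have hcard : (0 : ℝ) < #s := by exact_mod_cast hs.card_pos
  have hw : ∀ t, 0 ≤ v t ⬝ᵥ A⁻¹ *ᵥ v t := fun t => by
    simpa using hA.inv.posSemidef.dotProduct_mulVec_nonneg (v t)
  have hmean : (∑ t ∈ s, (1 + #s * (v t ⬝ᵥ A⁻¹ *ᵥ v t))) / #s =
      1 + (A⁻¹ * ∑ t ∈ s, vecMulVec (v t) (v t)).trace := by
    rw [mul_sum, trace_sum, sum_add_distrib, ← mul_sum, sum_const, nsmul_one]
    simp only [trace_mul_vecMulVec_self]
    field_simp
  have hS := posSemidef_sum_vecMulVec_self s v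
  calc 1 / (#s : ℝ) * ∑ t ∈ s, Real.log (1 + #s * (v t ⬝ᵥ A⁻¹ *ᵥ v t))
      ≤ Real.log (1 + (A⁻¹ * ∑ t ∈ s, vecMulVec (v t) (v t)).trace) := by
        rw [← hmean, one_div, inv_mul_le_iff₀ hcard]
        exact Real.sum_log_le_card_mul_log_sum_div_card hs fun t _ => by
          have := hw t; positivity
    _ ≤ Real.log (A + ∑ t ∈ s, vecMulVec (v t) (v t)).det - Real.log A.det := by
        have htr : 0 < 1 + (A⁻¹ * ∑ t ∈ s, vecMulVec (v t) (v t)).trace := by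
          rw [← hmean]
          exact div_pos (sum_pos (fun t _ => by have := hw t; positivity) hs) hcard
        rw [le_sub_iff_add_le', ← Real.log_mul hA.det_pos.ne' htr.ne']
        exact Real.log_le_log (by have := hA.det_pos; positivity)
          (hA.det_mul_one_add_trace_inv_mul_le_det_add hS)

theorem sum_inv_card_mul_sum_log_le_log_det_sub_log_det {ι : Type*} {K : ℕ}
    {Ts : Fin K → Finset ι} (hne : ∀ k, (Ts k).Nonempty) {v : Fin K → ι → n → ℝ}
    {Λ : ℕ → Matrix n n ℝ} (h0 : (Λ 0).PosDef)
    (hΛ : ∀ k : Fin K, Λ (k + 1) = Λ k + ∑ t ∈ Ts k, vecMulVec (v k t) (v k t)) :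
    ∑ k : Fin K, 1 / (#(Ts k) : ℝ) *
        ∑ t ∈ Ts k, Real.log (1 + #(Ts k) * (v k t ⬝ᵥ (Λ k)⁻¹ *ᵥ v k t)) ≤
      Real.log (Λ K).det - Real.log (Λ 0).det := by
  have hpos := posDef_of_succ_eq_add h0 (fun k => posSemidef_sum_vecMulVec_self _ _) hΛ
  rw [← Fin.sum_univ_sub_telescope (fun m => Real.log (Λ m).det) K]
  refine sum_le_sum fun k _ => ?_
  rw [hΛ k]
  exact (hpos k k.isLt.le).inv_card_mul_sum_log_le_log_det_add_sub_log_det (hne k) (v k)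

end Matrix

theorem stmt_10_general {ι : Type*} (d K : ℕ) (hd : 1 ≤ d)
    (lam C : ℝ) (hlam : 0 < lam)
    (Ts : Fin K → Finset ι) (hne : ∀ k, (Ts k).Nonempty)
    (φ : Fin K → ι → (Fin d → ℝ))
    (hφ : ∀ k, ∀ t ∈ Ts k, Real.sqrt (∑ i, (φ k t i) ^ 2) ≤ C)
    (Λ : ℕ → Matrix (Fin d) (Fin d) ℝ)
    (hΛ0 : Λ 0 = lam • (1 : Matrix (Fin d) (Fin d) ℝ))
    (hΛ : ∀ k : Fin K, Λ (k + 1) = Λ k + ∑ t ∈ Ts k, vecMulVec (φ k t) (φ k t))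
    (T : ℕ) (hT : T = ∑ k, (Ts k).card) :
    ∑ k : Fin K, (1 / ((Ts k).card : ℝ)) *
        ∑ t ∈ Ts k, Real.log (1 + ((Ts k).card : ℝ) * (φ k t ⬝ᵥ (Λ k)⁻¹.mulVec (φ k t)))
      ≤ (d : ℝ) * Real.log (1 + C ^ 2 * (T : ℝ) / (lam * (d : ℝ))) := by
  have : Nonempty (Fin d) := ⟨⟨0, hd⟩⟩
  have hd_pos : (0 : ℝ) < d := by exact_mod_cast hd
  have hΛ0_pos : (Λ 0).PosDef := by
    rw [hΛ0, smul_one_eq_diagonal]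
    exact posDef_diagonal_iff.mpr fun _ => hlam
  have hΛK_pos := posDef_of_succ_eq_add hΛ0_pos (fun k => posSemidef_sum_vecMulVec_self _ _) hΛ K
    le_rfl
  have htrace : (Λ K).trace ≤ lam * d + C ^ 2 * T := by
    simpa [hT, hΛ0] using trace_le_of_succ_eq_add_sum_vecMulVec hφ hΛ
  have hlog_det0 : Real.log (Λ 0).det = d * Real.log lam := by
    rw [hΛ0, det_smul, det_one, mul_one, Fintype.card_fin, Real.log_pow]
  calc _ ≤ Real.log (Λ K).det - Real.log (Λ 0).det :=
        sum_inv_card_mul_sum_log_le_log_det_sub_log_det hne hΛ0_pos hΛ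
    _ ≤ d * Real.log ((Λ K).trace / d) - d * Real.log lam := by
        rw [hlog_det0]
        gcongr
        simpa using hΛK_pos.log_det_le_card_mul_log_trace_div_card
    _ = d * Real.log ((Λ K).trace / (lam * d)) := by
        rw [← mul_sub, ← Real.log_div (by have := hΛK_pos.trace_pos; positivity) hlam.ne',
          div_div, mul_comm lam]
    _ ≤ d * Real.log (1 + C ^ 2 * T / (lam * d)) := by
        gcongr
        · exact div_pos hΛK_pos.trace_pos (by positivity)
        · rw [one_add_div (by positivity)]
          gcongr

/-- Elliptical potential lemma over epochs: with `Λ₁ = λI` (indexed here as `Λ 0`) and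
`Λ_{k+1} = Λ_k + Σ_{t ∈ T_k} φ_{k,t} φ_{k,t}ᵀ`, feature vectors of Euclidean norm at most `C`,
and `T = Σ_k |T_k|`,
`Σ_k (1/|T_k|) Σ_{t ∈ T_k} log(1 + |T_k| ‖φ_{k,t}‖²_{Λ_k⁻¹}) ≤ d log(1 + C² T/(λ d))`. -/
theorem stmt_10 {ι : Type*} [DecidableEq ι] (d K : ℕ) (hd : 1 ≤ d)
    (lam C : ℝ) (hlam : 0 < lam) (hC : 0 < C)
    (Ts : Fin K → Finset ι) (hne : ∀ k, (Ts k).Nonempty)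
    (hdisj : ∀ k k', k ≠ k' → Disjoint (Ts k) (Ts k'))
    (φ : Fin K → ι → (Fin d → ℝ))
    (hφ : ∀ k, ∀ t ∈ Ts k, Real.sqrt (∑ i, (φ k t i) ^ 2) ≤ C)
    (Λ : ℕ → Matrix (Fin d) (Fin d) ℝ)
    (hΛ0 : Λ 0 = lam • (1 : Matrix (Fin d) (Fin d) ℝ))
    (hΛ : ∀ k : Fin K, Λ (k + 1) = Λ k + ∑ t ∈ Ts k, vecMulVec (φ k t) (φ k t))
    (T : ℕ) (hT : T = ∑ k, (Ts k).card) :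
    ∑ k : Fin K, (1 / ((Ts k).card : ℝ)) *
        ∑ t ∈ Ts k, Real.log (1 + ((Ts k).card : ℝ) * (φ k t ⬝ᵥ (Λ k)⁻¹.mulVec (φ k t)))
      ≤ (d : ℝ) * Real.log (1 + C ^ 2 * (T : ℝ) / (lam * (d : ℝ))) :=
  stmt_10_general d K hd lam C hlam Ts hne φ hφ Λ hΛ0 hΛ T hT
end

section
/- Let γ ∈ (0,1), let T ≥ 1 be an integer, and let Z₁, …, Z_T be independent identically distributed random variables with geometric law P(Z = i) = (1−γ) γ^{i−1} for integers i ≥ 1. Then E[ max_{1 ≤ j ≤ T} Z_j / log(1 + Z_j) ] ≤ (4 + 2 log T) / (1 − γ). -/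
/-!
Since `log (k + 2) ≥ log 2 > 1/2`, each maximand `Z_j / log (1 + Z_j)` is at most `2 Z_j`, and
for every `n`, `Z_j ≤ n + 1 + ∑ᵢ (Zᵢ - 1 - n)₊`. By memorylessness
`E (Z - 1 - n)₊ = γ^(n+1) / (1 - γ)`, so the expectation is at most
`2 (n + 1 + T γ^(n+1) / (1 - γ))`, and `n = ⌈log T / (1 - γ)⌉` makes `T γ^n ≤ 1`.
The expectations over the product are computed in `ℝ≥0∞`, where no summability is needed.
-/

open scoped ENNReal
open Finset

namespace ENNReal

theorem tsum_fin_pi_prod {α : Type*} :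
    ∀ {n : ℕ} (f : Fin n → α → ℝ≥0∞), ∑' z : Fin n → α, ∏ i, f i (z i) = ∏ i, ∑' a, f i a
  | 0, f => by simp [tsum_fintype]
  | n + 1, f => by
    rw [← (Fin.consEquiv fun _ => α).tsum_eq, ENNReal.tsum_prod']
    simp only [Fin.consEquiv_apply, Fin.prod_univ_succ, Fin.cons_zero, Fin.cons_succ,
      ENNReal.tsum_mul_left, tsum_fin_pi_prod, ENNReal.tsum_mul_right]

variable {α : Type*} {n : ℕ} {w : α → ℝ≥0∞}

theorem tsum_fin_pi_prod_mul_apply (hw : ∑' a, w a = 1) (g : α → ℝ≥0∞) (j : Fin n) :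
    ∑' z : Fin n → α, (∏ i, w (z i)) * g (z j) = ∑' a, w a * g a := by
  have key := tsum_fin_pi_prod fun i a => w a * if i = j then g a else 1
  simp only [prod_mul_distrib, prod_ite_eq', mem_univ, if_true] at key
  rw [key, prod_eq_single j (fun i _ hij => by simp [hij, hw]) (by simp)]
  simp

theorem tsum_fin_pi_prod_mul_add_sum (hw : ∑' a, w a = 1) (c : ℝ≥0∞) (g : α → ℝ≥0∞) :
    ∑' z : Fin n → α, (∏ i, w (z i)) * (c + ∑ i, g (z i)) = c + n * ∑' a, w a * g a := by
  simp_rw [mul_add, ENNReal.tsum_add, ENNReal.tsum_mul_right, tsum_fin_pi_prod fun _ => w, hw,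
    prod_const_one, one_mul, mul_sum, Summable.tsum_finsetSum fun _ _ => ENNReal.summable,
    tsum_fin_pi_prod_mul_apply hw, sum_const, card_univ, Fintype.card_fin, nsmul_eq_mul]

end ENNReal

theorem tsum_le_of_tsum_ofReal_le {α : Type*} {f : α → ℝ} {c : ℝ} (hf : ∀ a, 0 ≤ f a)
    (hc : 0 ≤ c) (h : ∑' a, ENNReal.ofReal (f a) ≤ ENNReal.ofReal c) : ∑' a, f a ≤ c :=
  calc ∑' a, f a = ∑' a, (ENNReal.ofReal (f a)).toReal := by
        simp_rw [ENNReal.toReal_ofReal (hf _)]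
    _ = (∑' a, ENNReal.ofReal (f a)).toReal :=
        (ENNReal.tsum_toReal_eq fun _ => ENNReal.ofReal_ne_top).symm
    _ ≤ c := ENNReal.toReal_le_of_le_ofReal hc h

section Geometric

variable {γ : ℝ}

theorem hasSum_one_sub_mul_geometric (hγ0 : 0 ≤ γ) (hγ1 : γ < 1) :
    HasSum (fun k : ℕ => (1 - γ) * γ ^ k) 1 := by
  simpa [mul_inv_cancel₀ (sub_ne_zero.2 hγ1.ne')] using
    (hasSum_geometric_of_lt_one hγ0 hγ1).mul_left (1 - γ)

theorem hasSum_one_sub_mul_geometric_mul_tsub (hγ0 : 0 ≤ γ) (hγ1 : γ < 1) (n : ℕ) :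
    HasSum (fun k : ℕ => (1 - γ) * γ ^ k * ((k - n : ℕ) : ℝ)) (γ ^ (n + 1) / (1 - γ)) := by
  rw [← hasSum_nat_add_iff' n, sum_eq_zero fun i hi => by
    simp [Nat.sub_eq_zero_of_le (mem_range.1 hi).le], sub_zero]
  have hγ : ‖γ‖ < 1 := by rwa [Real.norm_of_nonneg hγ0]
  rw [show γ ^ (n + 1) / (1 - γ) = (1 - γ) * γ ^ n * (γ / (1 - γ) ^ 2) by
    field_simp [sub_ne_zero.2 hγ1.ne']; ring]
  refine ((hasSum_coe_mul_geometric_of_norm_lt_one hγ).mul_left _).congr_fun fun m => ?_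
  rw [Nat.add_sub_cancel, pow_add]
  ring

theorem ENNReal.tsum_ofReal_one_sub_mul_geometric (hγ0 : 0 ≤ γ) (hγ1 : γ < 1) :
    ∑' k : ℕ, ENNReal.ofReal ((1 - γ) * γ ^ k) = 1 := by
  have h := hasSum_one_sub_mul_geometric hγ0 hγ1
  rw [← ENNReal.ofReal_tsum_of_nonneg (fun k => by have := hγ1.le; positivity) h.summable,
    h.tsum_eq, ENNReal.ofReal_one]

theorem ENNReal.tsum_ofReal_one_sub_mul_geometric_mul_tsub (hγ0 : 0 ≤ γ) (hγ1 : γ < 1) (n : ℕ) :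
    ∑' k : ℕ, ENNReal.ofReal ((1 - γ) * γ ^ k) * ((k - n : ℕ) : ℝ≥0∞) =
      ENNReal.ofReal (γ ^ (n + 1) / (1 - γ)) := by
  have h := hasSum_one_sub_mul_geometric_mul_tsub hγ0 hγ1 n
  have hw : ∀ k : ℕ, 0 ≤ (1 - γ) * γ ^ k := fun k => by have := hγ1.le; positivity
  simp_rw [← ENNReal.ofReal_natCast, ← ENNReal.ofReal_mul (hw _)]
  rw [← ENNReal.ofReal_tsum_of_nonneg (fun k => mul_nonneg (hw k) (k - n).cast_nonneg)
    h.summable, h.tsum_eq]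

theorem ENNReal.tsum_geometric_pi_mul_add_sum_tsub (hγ0 : 0 ≤ γ) (hγ1 : γ < 1) (T n : ℕ) :
    ∑' z : Fin T → ℕ, (∏ j, ENNReal.ofReal ((1 - γ) * γ ^ (z j))) *
        ((n + 1 + ∑ i, (z i - n) : ℕ) : ℝ≥0∞) =
      ENNReal.ofReal (n + 1 + T * (γ ^ (n + 1) / (1 - γ))) := by
  have htail : 0 ≤ γ ^ (n + 1) / (1 - γ) := div_nonneg (by positivity) (by linarith)
  simp_rw [Nat.cast_add (n + 1), Nat.cast_sum]
  rw [ENNReal.tsum_fin_pi_prod_mul_add_sum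
    (ENNReal.tsum_ofReal_one_sub_mul_geometric hγ0 hγ1) _ fun k => ((k - n : ℕ) : ℝ≥0∞),
    ENNReal.tsum_ofReal_one_sub_mul_geometric_mul_tsub hγ0 hγ1,
    ENNReal.ofReal_add (by positivity) (by positivity), ENNReal.ofReal_mul (by positivity)]
  norm_cast

theorem mul_pow_ceil_log_div_le_one (hγ0 : 0 ≤ γ) (hγ1 : γ < 1) {T : ℝ} (hT : 0 < T) :
    T * γ ^ ⌈Real.log T / (1 - γ)⌉₊ ≤ 1 := by
  set n := ⌈Real.log T / (1 - γ)⌉₊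
  have hlog : Real.log T ≤ n * (1 - γ) := (div_le_iff₀ (sub_pos.2 hγ1)).1 (Nat.le_ceil _)
  calc T * γ ^ n ≤ T * Real.exp (γ - 1) ^ n := by
        gcongr
        linarith [Real.add_one_le_exp (γ - 1)]
    _ = T * Real.exp (-(n * (1 - γ))) := by rw [← Real.exp_nat_mul]; ring_nf
    _ ≤ T * Real.exp (-Real.log T) := by gcongr
    _ = 1 := by rw [Real.exp_neg, Real.exp_log hT, mul_inv_cancel₀ hT.ne']

theorem two_mul_ceil_add_tail_le (hγ0 : 0 ≤ γ) (hγ1 : γ < 1) {T : ℝ} (hT : 1 ≤ T) :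
    2 * (⌈Real.log T / (1 - γ)⌉₊ + 1 + T * (γ ^ (⌈Real.log T / (1 - γ)⌉₊ + 1) / (1 - γ))) ≤
      (4 + 2 * Real.log T) / (1 - γ) := by
  set n := ⌈Real.log T / (1 - γ)⌉₊
  have hγ : 0 < 1 - γ := sub_pos.2 hγ1
  have hlog : 0 ≤ Real.log T := Real.log_nonneg hT
  have hn : (n : ℝ) < Real.log T / (1 - γ) + 1 := Nat.ceil_lt_add_one (by positivity)
  have hTγn : T * γ ^ n ≤ 1 := mul_pow_ceil_log_div_le_one hγ0 hγ1 (by linarith)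
  have htail : T * (γ ^ (n + 1) / (1 - γ)) ≤ γ / (1 - γ) := by
    rw [pow_succ, ← mul_div_assoc, ← mul_assoc]
    gcongr
    nlinarith
  calc 2 * (n + 1 + T * (γ ^ (n + 1) / (1 - γ)))
      ≤ 2 * (Real.log T / (1 - γ) + 2 + γ / (1 - γ)) := by linarith
    _ = (4 - 2 * γ + 2 * Real.log T) / (1 - γ) := by field_simp; ring
    _ ≤ (4 + 2 * Real.log T) / (1 - γ) := by gcongr; linarith

end Geometric

theorem div_log_add_two_le {x : ℝ} (hx : 0 ≤ x) :
    (x + 1) / Real.log (x + 2) ≤ 2 * (x + 1) := by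
  have hlog : 1 / 2 ≤ Real.log (x + 2) := by
    have := Real.log_le_log two_pos (by linarith : (2 : ℝ) ≤ x + 2)
    linarith [Real.log_two_gt_d9]
  calc (x + 1) / Real.log (x + 2) ≤ (x + 1) / (1 / 2) := by gcongr
    _ = 2 * (x + 1) := by ring

theorem le_add_sum_tsub {ι : Type*} {s : Finset ι} {j : ι} (hj : j ∈ s) (z : ι → ℕ) (n : ℕ) :
    z j ≤ n + ∑ i ∈ s, (z i - n) := by
  have := single_le_sum (f := fun i => z i - n) (fun _ _ => Nat.zero_le _) hj
  omega

theorem sup'_div_log_add_two_le {ι : Type*} {s : Finset ι} (hs : s.Nonempty) (z : ι → ℕ) (n : ℕ) :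
    s.sup' hs (fun j => ((z j : ℝ) + 1) / Real.log ((z j : ℝ) + 2)) ≤
      2 * ((n + 1 + ∑ i ∈ s, (z i - n) : ℕ) : ℝ) := by
  refine sup'_le _ _ fun j hj => (div_log_add_two_le (z j).cast_nonneg).trans ?_
  have := le_add_sum_tsub hj z n
  gcongr
  exact_mod_cast (by omega : z j + 1 ≤ n + 1 + ∑ i ∈ s, (z i - n))

/-- Let `γ ∈ (0,1)`, `T ≥ 1`, and `Z₁, …, Z_T` be i.i.d. geometric random variables with law
`P(Z = i) = (1−γ) γ^(i−1)` for integers `i ≥ 1`.  Then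
`E[max_j Z_j / log(1 + Z_j)] ≤ (4 + 2 log T)/(1−γ)`.
The expectation is written out explicitly: an outcome is a vector `z : Fin T → ℕ` encoding
`Z_j = z j + 1`, whose probability is the product `∏ j, (1−γ) γ^(z j)` (by independence),
and the maximand for coordinate `j` is `(z j + 1) / log(z j + 2)`. -/
theorem stmt_12 (γ : ℝ) (hγ0 : 0 < γ) (hγ1 : γ < 1) (T : ℕ) (hT : 1 ≤ T) :
    ∑' z : Fin T → ℕ,
        (∏ j, ((1 - γ) * γ ^ (z j))) *
          (Finset.univ.sup' (Finset.univ_nonempty_iff.mpr (Fin.pos_iff_nonempty.mp hT))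
            fun j => ((z j : ℝ) + 1) / Real.log ((z j : ℝ) + 2))
      ≤ (4 + 2 * Real.log T) / (1 - γ) := by
  set hne := Finset.univ_nonempty_iff.mpr (Fin.pos_iff_nonempty.mp hT)
  set n := ⌈Real.log T / (1 - γ)⌉₊
  have hT' : (1 : ℝ) ≤ T := by exact_mod_cast hT
  have hw : ∀ k : ℕ, 0 ≤ (1 - γ) * γ ^ k := fun k => by have := hγ1.le; positivity
  have hP : ∀ z : Fin T → ℕ, 0 ≤ ∏ j, (1 - γ) * γ ^ (z j) := fun z => prod_nonneg fun j _ => hw _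
  have hF : ∀ z : Fin T → ℕ, 0 ≤ univ.sup' hne fun j => ((z j : ℝ) + 1) / Real.log (z j + 2) :=
    fun z => le_sup'_of_le _ (mem_univ ⟨0, hT⟩) <| div_nonneg (by positivity) <|
      Real.log_nonneg (by linarith [(z ⟨0, hT⟩).cast_nonneg (α := ℝ)])
  refine tsum_le_of_tsum_ofReal_le (fun z => mul_nonneg (hP z) (hF z))
    (div_nonneg (by linarith [Real.log_nonneg hT']) (by linarith)) ?_
  calc ∑' z : Fin T → ℕ, ENNReal.ofReal ((∏ j, ((1 - γ) * γ ^ (z j))) *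
          univ.sup' hne fun j => ((z j : ℝ) + 1) / Real.log ((z j : ℝ) + 2))
      ≤ ∑' z : Fin T → ℕ, (∏ j, ENNReal.ofReal ((1 - γ) * γ ^ (z j))) *
          (2 * ((n + 1 + ∑ i, (z i - n) : ℕ) : ℝ≥0∞)) := by
        gcongr with z
        rw [ENNReal.ofReal_mul (hP z), ENNReal.ofReal_prod_of_nonneg fun j _ => hw _,
          ← ENNReal.ofReal_ofNat 2, ← ENNReal.ofReal_natCast, ← ENNReal.ofReal_mul zero_le_two]
        gcongr
        exact sup'_div_log_add_two_le hne z n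
    _ = ENNReal.ofReal (2 * (n + 1 + T * (γ ^ (n + 1) / (1 - γ)))) := by
        simp_rw [mul_left_comm _ (2 : ℝ≥0∞), ENNReal.tsum_mul_left,
          ENNReal.tsum_geometric_pi_mul_add_sum_tsub hγ0.le hγ1, ENNReal.ofReal_mul zero_le_two,
          ENNReal.ofReal_ofNat]
    _ ≤ ENNReal.ofReal ((4 + 2 * Real.log T) / (1 - γ)) :=
        ENNReal.ofReal_le_ofReal (two_mul_ceil_add_tail_le hγ0.le hγ1 hT')
end

section
/- Let γ ∈ (0,1), let T ≥ 1 be an integer, and let Z₁, …, Z_T be independent identically distributed random variables with geometric law P(Z = i) = (1−γ) γ^{i−1} for integers i ≥ 1. Then E[ max_{1 ≤ j ≤ T} Z_j ] ≤ (2 + log T) / (1 − γ). -/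
open scoped ENNReal

lemma tsum_pi_prod : ∀ (n : ℕ) (f : Fin n → ℕ → ℝ≥0∞),
    ∑' z : Fin n → ℕ, ∏ j, f j (z j) = ∏ j, ∑' m, f j m := by
  intro n
  induction n with
  | zero =>
    intro f
    rw [tsum_eq_single (fun i => i.elim0) (fun b hb => absurd (Subsingleton.elim b _) hb)]
    simp
  | succ n ih =>
    intro f
    rw [← (Fin.consEquiv (fun _ : Fin (n+1) => ℕ)).tsum_eq, ENNReal.tsum_prod']
    have h1 : ∑' (a : ℕ) (w : Fin n → ℕ),
        (∏ j, f j ((Fin.consEquiv (fun _ : Fin (n+1) => ℕ)) (a, w) j))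
        = ∑' (a : ℕ) (w : Fin n → ℕ), f 0 a * ∏ i : Fin n, f i.succ (w i) :=
      tsum_congr fun a => tsum_congr fun w => by
        rw [Fin.prod_univ_succ]; simp [Fin.consEquiv]
    rw [h1, Fin.prod_univ_succ, ← ih fun i => f i.succ]
    simp_rw [ENNReal.tsum_mul_left]
    rw [ENNReal.tsum_mul_right]

lemma geom_summable {γ : ℝ} (hγ0 : 0 < γ) (hγ1 : γ < 1) :
    Summable (fun n : ℕ => (1 - γ) * γ ^ n) :=
  (summable_geometric_of_lt_one hγ0.le hγ1).mul_left _

lemma geom_tsum {γ : ℝ} (hγ0 : 0 < γ) (hγ1 : γ < 1) :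
    ∑' n : ℕ, (1 - γ) * γ ^ n = 1 := by
  rw [tsum_mul_left, tsum_geometric_of_lt_one hγ0.le hγ1]
  exact mul_inv_cancel₀ (by linarith)

lemma geom_trunc_summable {γ : ℝ} (hγ0 : 0 < γ) (hγ1 : γ < 1) (k : ℕ) :
    Summable (fun n : ℕ => (1 - γ) * γ ^ n * ((n - k : ℕ) : ℝ)) := by
  have h := (summable_pow_mul_geometric_of_norm_lt_one 1 (r := γ)
    (by rwa [Real.norm_eq_abs, abs_of_pos hγ0])).mul_left (1 - γ)
  have h1γ : (0:ℝ) ≤ 1 - γ := by linarith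
  apply h.of_nonneg_of_le
  · intro n
    have : (0:ℝ) ≤ γ ^ n := by positivity
    positivity
  · intro n
    have h1 : ((n - k : ℕ) : ℝ) ≤ (n : ℝ) := by
      exact_mod_cast Nat.sub_le n k
    have h2 : (0:ℝ) ≤ (1 - γ) * γ ^ n := by
      have : (0:ℝ) ≤ γ ^ n := by positivity
      positivity
    calc (1 - γ) * γ ^ n * ((n - k : ℕ) : ℝ) ≤ (1 - γ) * γ ^ n * n :=
          mul_le_mul_of_nonneg_left h1 h2
      _ = (1 - γ) * ((n:ℝ) ^ 1 * γ ^ n) := by ring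

lemma geom_trunc_tsum {γ : ℝ} (hγ0 : 0 < γ) (hγ1 : γ < 1) (k : ℕ) :
    ∑' n : ℕ, (1 - γ) * γ ^ n * ((n - k : ℕ) : ℝ) = γ ^ (k + 1) / (1 - γ) := by
  have hsum := geom_trunc_summable hγ0 hγ1 k
  have hshift := Summable.sum_add_tsum_nat_add (f := fun n : ℕ => (1 - γ) * γ ^ n * ((n - k : ℕ) : ℝ))
    (k + 1) hsum
  have hz : ∑ i ∈ Finset.range (k + 1), (1 - γ) * γ ^ i * ((i - k : ℕ) : ℝ) = 0 := by
    apply Finset.sum_eq_zero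
    intro i hi
    have : i - k = 0 := by
      simp only [Finset.mem_range] at hi; omega
    rw [this]; simp
  rw [hz, zero_add] at hshift
  rw [← hshift]
  have heach : ∀ n : ℕ, (1 - γ) * γ ^ (n + (k + 1)) * ((n + (k + 1) - k : ℕ) : ℝ)
      = ((1 - γ) * γ ^ (k+1)) * (((n:ℝ) + 1) * γ ^ n) := by
    intro n
    have : n + (k + 1) - k = n + 1 := by omega
    rw [this]
    push_cast
    ring
  rw [tsum_congr heach, tsum_mul_left]
  have hsum1 : ∑' n : ℕ, ((n:ℝ) + 1) * γ ^ n = 1 / (1 - γ)^2 := by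
    have hg : Summable (fun n : ℕ => γ ^ n) := summable_geometric_of_lt_one hγ0.le hγ1
    have hng : Summable (fun n : ℕ => (n:ℝ) * γ ^ n) := by
      have := summable_pow_mul_geometric_of_norm_lt_one (R := ℝ) 1 (r := γ)
        (by rwa [Real.norm_eq_abs, abs_of_pos hγ0])
      simpa using this
    have := Summable.tsum_add hng hg
    simp only [add_mul, one_mul] at this ⊢
    rw [this, tsum_coe_mul_geometric_of_norm_lt_one
      (by rwa [Real.norm_eq_abs, abs_of_pos hγ0]), tsum_geometric_of_lt_one hγ0.le hγ1]
    have h1γ : (1:ℝ) - γ ≠ 0 := by intro h; linarith [h]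
    field_simp
    ring
  rw [hsum1]
  have h1γ : (1:ℝ) - γ ≠ 0 := by intro h; linarith [h]
  field_simp

lemma q_tsum {γ : ℝ} (hγ0 : 0 < γ) (hγ1 : γ < 1) :
    ∑' n : ℕ, ENNReal.ofReal ((1 - γ) * γ ^ n) = 1 := by
  rw [← ENNReal.ofReal_tsum_of_nonneg
      (fun n => mul_nonneg (by linarith) (pow_nonneg hγ0.le n)) (geom_summable hγ0 hγ1),
    geom_tsum hγ0 hγ1, ENNReal.ofReal_one]

lemma q_trunc_tsum {γ : ℝ} (hγ0 : 0 < γ) (hγ1 : γ < 1) (k : ℕ) :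
    ∑' n : ℕ, ENNReal.ofReal ((1 - γ) * γ ^ n) * ((n - k : ℕ) : ℝ≥0∞)
      = ENNReal.ofReal (γ ^ (k + 1) / (1 - γ)) := by
  have heach : ∀ n : ℕ, ENNReal.ofReal ((1 - γ) * γ ^ n) * ((n - k : ℕ) : ℝ≥0∞)
      = ENNReal.ofReal ((1 - γ) * γ ^ n * ((n - k : ℕ) : ℝ)) := by
    intro n
    rw [ENNReal.ofReal_mul (mul_nonneg (by linarith) (pow_nonneg hγ0.le n)),
      ENNReal.ofReal_natCast]
  rw [tsum_congr heach, ← ENNReal.ofReal_tsum_of_nonneg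
      (fun n => mul_nonneg (mul_nonneg (by linarith) (pow_nonneg hγ0.le n)) (Nat.cast_nonneg _))
      (geom_trunc_summable hγ0 hγ1 k),
    geom_trunc_tsum hγ0 hγ1 k]

lemma final_arith {γ : ℝ} (hγ0 : 0 < γ) (hγ1 : γ < 1) (T : ℕ) (hT : 1 ≤ T) :
    ((⌈Real.log T / (-Real.log γ)⌉₊ : ℝ) + 1)
      + T * (γ ^ (⌈Real.log T / (-Real.log γ)⌉₊ + 1) / (1 - γ))
      ≤ (2 + Real.log T) / (1 - γ) := by
  set k₀ := ⌈Real.log T / (-Real.log γ)⌉₊ with hk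
  have ha : (0:ℝ) < 1 - γ := by linarith
  have hlogγ : Real.log γ < 0 := Real.log_neg hγ0 hγ1
  have hlogT : 0 ≤ Real.log T := Real.log_nonneg (by exact_mod_cast hT)
  have hTpos : (0:ℝ) < T := by exact_mod_cast hT
  have hKbound : (T:ℝ) * γ ^ k₀ ≤ 1 := by
    have h1 : Real.log T / (-Real.log γ) ≤ (k₀ : ℝ) := Nat.le_ceil _
    have h2 : Real.log T ≤ (k₀ : ℝ) * (-Real.log γ) := by
      rwa [div_le_iff₀ (by linarith)] at h1
    have h3 : γ ^ k₀ = Real.exp ((k₀ : ℝ) * Real.log γ) := by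
      rw [Real.exp_nat_mul, Real.exp_log hγ0]
    have h4 : γ ^ k₀ ≤ Real.exp (-Real.log T) := by
      rw [h3]; exact Real.exp_le_exp.2 (by linarith)
    have h5 : Real.exp (-Real.log T) = (T:ℝ)⁻¹ := by
      rw [← Real.log_inv, Real.exp_log (by positivity)]
    rw [h5] at h4
    calc (T:ℝ) * γ ^ k₀ ≤ (T:ℝ) * (T:ℝ)⁻¹ :=
          mul_le_mul_of_nonneg_left h4 hTpos.le
      _ = 1 := mul_inv_cancel₀ hTpos.ne'
  have hk₀ : (k₀ : ℝ) ≤ Real.log T / (1 - γ) + 1 := by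
    have h1 : (k₀ : ℝ) < Real.log T / (-Real.log γ) + 1 :=
      Nat.ceil_lt_add_one (div_nonneg hlogT (by linarith))
    have h2 : 1 - γ ≤ -Real.log γ := by
      have := Real.log_le_sub_one_of_pos hγ0
      linarith
    have h3 : Real.log T / (-Real.log γ) ≤ Real.log T / (1 - γ) :=
      div_le_div_of_nonneg_left hlogT ha h2
    linarith
  have hTg : (T:ℝ) * γ ^ (k₀ + 1) ≤ γ := by
    calc (T:ℝ) * γ ^ (k₀ + 1) = ((T:ℝ) * γ ^ k₀) * γ := by ring
      _ ≤ 1 * γ := mul_le_mul_of_nonneg_right hKbound hγ0.le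
      _ = γ := one_mul γ
  have step : (T:ℝ) * (γ ^ (k₀ + 1) / (1 - γ)) ≤ γ / (1 - γ) := by
    rw [mul_div_assoc']
    gcongr
  calc ((k₀:ℝ) + 1) + T * (γ ^ (k₀ + 1) / (1 - γ))
      ≤ (Real.log T / (1 - γ) + 2) + γ / (1 - γ) := by linarith
    _ = (Real.log T + 2 * (1 - γ) + γ) / (1 - γ) := by field_simp
    _ ≤ (2 + Real.log T) / (1 - γ) := by
        rw [div_le_div_iff₀ ha ha]
        nlinarith

/-- Let `γ ∈ (0,1)`, `T ≥ 1`, and `Z₁, …, Z_T` be i.i.d. geometric random variables with law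
`P(Z = i) = (1−γ) γ^(i−1)` for integers `i ≥ 1`.  Then `E[max_j Z_j] ≤ (2 + log T)/(1−γ)`.
The expectation of the maximum is written out explicitly: an outcome is a vector
`z : Fin T → ℕ` encoding `Z_j = z j + 1`, whose probability is the product
`∏ j, (1−γ) γ^(z j)` (by independence), and the maximum is `(sup_j z j) + 1`. -/
theorem stmt_13 (γ : ℝ) (hγ0 : 0 < γ) (hγ1 : γ < 1) (T : ℕ) (hT : 1 ≤ T) :
    ∑' z : Fin T → ℕ,
        (∏ j, ((1 - γ) * γ ^ (z j))) * (((Finset.univ.sup z : ℕ) : ℝ) + 1)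
      ≤ (2 + Real.log T) / (1 - γ) := by
  have ha : (0:ℝ) < 1 - γ := by linarith
  have hlogT : 0 ≤ Real.log T := Real.log_nonneg (by exact_mod_cast hT)
  set k₀ := ⌈Real.log T / (-Real.log γ)⌉₊ with hk
  set r : ℝ := (2 + Real.log T) / (1 - γ) with hr
  have hr0 : 0 ≤ r := div_nonneg (by linarith) ha.le
  set F : (Fin T → ℕ) → ℝ := fun z =>
    (∏ j, ((1 - γ) * γ ^ (z j))) * (((Finset.univ.sup z : ℕ) : ℝ) + 1) with hF
  have hFnn : ∀ z, 0 ≤ F z := fun z =>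
    mul_nonneg (Finset.prod_nonneg fun j _ =>
      mul_nonneg (by linarith) (pow_nonneg hγ0.le _)) (by positivity)
  set q : ℕ → ℝ≥0∞ := fun n => ENNReal.ofReal ((1 - γ) * γ ^ n) with hq
  -- key ENNReal estimate
  have key : ∑' z : Fin T → ℕ, ENNReal.ofReal (F z) ≤ ENNReal.ofReal r := by
    have step1 : ∀ z : Fin T → ℕ, ENNReal.ofReal (F z)
        = (∏ j, q (z j)) * ((Finset.univ.sup z + 1 : ℕ) : ℝ≥0∞) := by
      intro z
      have hc : ((Finset.univ.sup z : ℕ) : ℝ) + 1 = ((Finset.univ.sup z + 1 : ℕ) : ℝ) := by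
        push_cast; ring
      rw [hF]
      simp only
      rw [hc, ENNReal.ofReal_mul (Finset.prod_nonneg fun j _ =>
          mul_nonneg (by linarith) (pow_nonneg hγ0.le _)),
        ENNReal.ofReal_prod_of_nonneg (fun j _ =>
          mul_nonneg (by linarith) (pow_nonneg hγ0.le _)),
        ENNReal.ofReal_natCast]
    have hnat : ∀ z : Fin T → ℕ,
        Finset.univ.sup z + 1 ≤ (k₀ + 1) + ∑ j, (z j - k₀) := by
      intro z
      have hne : (Finset.univ : Finset (Fin T)).Nonempty := by
        have : Nonempty (Fin T) := ⟨⟨0, hT⟩⟩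
        exact Finset.univ_nonempty
      obtain ⟨j, -, hj⟩ := Finset.exists_mem_eq_sup _ hne z
      have h1 : z j - k₀ ≤ ∑ i, (z i - k₀) :=
        Finset.single_le_sum (f := fun i => z i - k₀) (fun i _ => Nat.zero_le _) (Finset.mem_univ j)
      omega
    have hP1 : ∑' z : Fin T → ℕ, ∏ j, q (z j) = 1 := by
      rw [tsum_pi_prod T (fun _ => q)]
      simp only [hq]
      rw [Finset.prod_congr rfl (fun j _ => q_tsum hγ0 hγ1)]
      simp
    have hBj : ∀ j : Fin T, ∑' z : Fin T → ℕ,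
        (∏ i, q (z i)) * ((z j - k₀ : ℕ) : ℝ≥0∞)
        = ENNReal.ofReal (γ ^ (k₀ + 1) / (1 - γ)) := by
      intro j
      set g : Fin T → ℕ → ℝ≥0∞ :=
        fun i n => if i = j then q n * ((n - k₀ : ℕ) : ℝ≥0∞) else q n with hg
      have hgz : ∀ z : Fin T → ℕ,
          (∏ i, q (z i)) * ((z j - k₀ : ℕ) : ℝ≥0∞) = ∏ i, g i (z i) := by
        intro z
        rw [Finset.prod_eq_mul_prod_sdiff_singleton_of_mem (Finset.mem_univ j)
            (fun i => g i (z i)),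
          Finset.prod_eq_mul_prod_sdiff_singleton_of_mem (Finset.mem_univ j)
            (fun i => q (z i))]
        have hrest : ∏ i ∈ Finset.univ \ {j}, g i (z i)
            = ∏ i ∈ Finset.univ \ {j}, q (z i) :=
          Finset.prod_congr rfl fun i hi => by
            have : i ≠ j := by
              simpa using (Finset.mem_sdiff.1 hi).2
            simp [hg, this]
        rw [hrest]
        simp only [hg, if_pos rfl]
        ring
      rw [tsum_congr hgz, tsum_pi_prod T g,
        Finset.prod_eq_mul_prod_sdiff_singleton_of_mem (Finset.mem_univ j)
          (fun i => ∑' m, g i m)]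
      have h1 : ∑' n : ℕ, g j n = ENNReal.ofReal (γ ^ (k₀ + 1) / (1 - γ)) := by
        simp only [hg, if_pos rfl, hq]
        exact q_trunc_tsum hγ0 hγ1 k₀
      have h2 : ∏ i ∈ Finset.univ \ {j}, ∑' n : ℕ, g i n = 1 :=
        Finset.prod_eq_one fun i hi => by
          have hij : i ≠ j := by simpa using (Finset.mem_sdiff.1 hi).2
          simp only [hg, if_neg hij, hq]
          exact q_tsum hγ0 hγ1
      rw [h1, h2, mul_one]
    calc ∑' z : Fin T → ℕ, ENNReal.ofReal (F z)
        = ∑' z : Fin T → ℕ, (∏ j, q (z j)) * ((Finset.univ.sup z + 1 : ℕ) : ℝ≥0∞) :=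
          tsum_congr step1
      _ ≤ ∑' z : Fin T → ℕ, ((∏ j, q (z j)) * ((k₀ + 1 : ℕ) : ℝ≥0∞)
            + ∑ j, (∏ i, q (z i)) * ((z j - k₀ : ℕ) : ℝ≥0∞)) := by
          apply ENNReal.tsum_le_tsum
          intro z
          have hcast : ((Finset.univ.sup z + 1 : ℕ) : ℝ≥0∞)
              ≤ ((k₀ + 1 : ℕ) : ℝ≥0∞) + ∑ j, ((z j - k₀ : ℕ) : ℝ≥0∞) := by
            calc ((Finset.univ.sup z + 1 : ℕ) : ℝ≥0∞)
                ≤ (((k₀ + 1) + ∑ j, (z j - k₀) : ℕ) : ℝ≥0∞) := by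
                  exact_mod_cast Nat.cast_le.2 (hnat z)
              _ = ((k₀ + 1 : ℕ) : ℝ≥0∞) + ∑ j, ((z j - k₀ : ℕ) : ℝ≥0∞) := by
                  push_cast; ring
          calc (∏ j, q (z j)) * ((Finset.univ.sup z + 1 : ℕ) : ℝ≥0∞)
              ≤ (∏ j, q (z j)) * (((k₀ + 1 : ℕ) : ℝ≥0∞)
                  + ∑ j, ((z j - k₀ : ℕ) : ℝ≥0∞)) := mul_le_mul_right hcast _
            _ = (∏ j, q (z j)) * ((k₀ + 1 : ℕ) : ℝ≥0∞)
                  + ∑ j, (∏ i, q (z i)) * ((z j - k₀ : ℕ) : ℝ≥0∞) := by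
                rw [mul_add, Finset.mul_sum]
      _ = (∑' z : Fin T → ℕ, ∏ j, q (z j)) * ((k₀ + 1 : ℕ) : ℝ≥0∞)
            + ∑ j, ∑' z : Fin T → ℕ, (∏ i, q (z i)) * ((z j - k₀ : ℕ) : ℝ≥0∞) := by
          rw [ENNReal.tsum_add, ENNReal.tsum_mul_right,
            Summable.tsum_finsetSum (fun _ _ => ENNReal.summable)]
      _ = ((k₀ + 1 : ℕ) : ℝ≥0∞) + (T : ℝ≥0∞) * ENNReal.ofReal (γ ^ (k₀ + 1) / (1 - γ)) := by
          rw [hP1, one_mul, Finset.sum_congr rfl (fun j _ => hBj j)]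
          simp [Finset.sum_const, mul_comm]
      _ = ENNReal.ofReal (((k₀ : ℝ) + 1) + T * (γ ^ (k₀ + 1) / (1 - γ))) := by
          have hx : (0:ℝ) ≤ γ ^ (k₀ + 1) / (1 - γ) :=
            div_nonneg (pow_nonneg hγ0.le _) ha.le
          rw [ENNReal.ofReal_add (by positivity) (by positivity),
            ENNReal.ofReal_mul (Nat.cast_nonneg T), ENNReal.ofReal_natCast]
          congr 1
          rw [← ENNReal.ofReal_natCast (k₀ + 1)]
          congr 1
          push_cast; ring
      _ ≤ ENNReal.ofReal r := ENNReal.ofReal_le_ofReal (final_arith hγ0 hγ1 T hT)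
  by_cases hs : Summable F
  · have heq := ENNReal.ofReal_tsum_of_nonneg hFnn hs
    rw [← heq] at key
    exact (ENNReal.ofReal_le_ofReal_iff hr0).1 key
  · rw [tsum_eq_zero_of_not_summable hs]
    exact hr0
end

section
/- For every real number x ≥ 0 and every integer n ≥ 1: min(x, n) ≤ ( n / log(n + 1) ) · log(1 + x). -/
/-- For every real `x ≥ 0` and every integer `n ≥ 1`,
`min(x, n) ≤ (n / log(n+1)) · log(1+x)`. -/
theorem stmt_14 (x : ℝ) (hx : 0 ≤ x) (n : ℕ) (hn : 1 ≤ n) :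
    min x (n : ℝ) ≤ ((n : ℝ) / Real.log ((n : ℝ) + 1)) * Real.log (1 + x) := by
  have hn0 : (0 : ℝ) < n := by exact_mod_cast hn
  have hlogpos : 0 < Real.log ((n : ℝ) + 1) := by
    apply Real.log_pos; linarith
  rcases le_total x (n : ℝ) with h | h
  · rw [min_eq_left h]
    rw [div_mul_eq_mul_div, le_div_iff₀ hlogpos]
    -- x * log(n+1) ≤ n * log(1+x)
    have hp1 : 0 ≤ x / n := div_nonneg hx hn0.le
    have hp2 : x / n ≤ 1 := (div_le_one hn0).2 h
    have hb := rpow_one_add_le_one_add_mul_self (s := (n : ℝ)) (by linarith) hp1 hp2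
    rw [div_mul_cancel₀ _ hn0.ne'] at hb
    have hlb := Real.log_le_log (by positivity) hb
    rw [Real.log_rpow (by linarith)] at hlb
    have : x / n * Real.log (1 + (n : ℝ)) * n ≤ Real.log (1 + x) * n :=
      mul_le_mul_of_nonneg_right hlb hn0.le
    calc x * Real.log ((n : ℝ) + 1)
        = x / n * Real.log (1 + (n : ℝ)) * n := by
          rw [add_comm 1 (n:ℝ), div_mul_eq_mul_div, div_mul_eq_mul_div,
            mul_div_cancel_right₀ _ hn0.ne']
      _ ≤ Real.log (1 + x) * n := this
      _ = (n : ℝ) * Real.log (1 + x) := by ring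
  · rw [min_eq_right h]
    have hlog : Real.log ((n : ℝ) + 1) ≤ Real.log (1 + x) := by
      apply Real.log_le_log (by linarith); linarith
    calc (n : ℝ) = (n : ℝ) / Real.log ((n : ℝ) + 1) * Real.log ((n : ℝ) + 1) := by
          field_simp
      _ ≤ (n : ℝ) / Real.log ((n : ℝ) + 1) * Real.log (1 + x) := by
          apply mul_le_mul_of_nonneg_left hlog (by positivity)
end

section
/- Let d ≥ 1, λ > 0, θ ∈ ℝ^d, and let φ₁, …, φ_n ∈ ℝ^d and y₁, …, y_n ∈ ℝ. Define Λ = λ I + Σ_{j=1}^n φ_j φ_jᵀ and the regularized least-squares estimator θ̂ = Λ^{−1} Σ_{j=1}^n φ_j y_j. Then for every φ ∈ ℝ^d: |⟨φ, θ̂ − θ⟩| ≤ ‖φ‖_{Λ^{−1}} · ( ‖ Σ_{j=1}^n φ_j (y_j − ⟨θ, φ_j⟩) ‖_{Λ^{−1}} + λ ‖θ‖_{Λ^{−1}} ), and moreover λ ‖θ‖_{Λ^{−1}} ≤ √λ · ‖θ‖₂. -/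
/-!
With `S = ∑ⱼ (yⱼ - ⟨θ, φⱼ⟩) φⱼ`, the identity `Λ θ = λ θ + ∑ⱼ ⟨φⱼ, θ⟩ φⱼ` gives
`θ̂ - θ = Λ⁻¹ (S - λ θ)`, so the first bound is Cauchy–Schwarz for the semi-inner product
`(x, y) ↦ xᵀ Λ⁻¹ y`, applied to `S` and to `θ` separately. The second bound comes from `λ I ≤ Λ`:
for `u = Λ⁻¹ θ` we get `λ ‖u‖² ≤ uᵀ Λ u = ⟨θ, u⟩ ≤ ‖θ‖ ‖u‖`, hence `λ ⟨θ, Λ⁻¹ θ⟩ ≤ ‖θ‖²`.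
-/

open Matrix

namespace Matrix

variable {m ι : Type*} [Fintype m] [Fintype ι]

theorem IsHermitian.dotProduct_mulVec_comm {A : Matrix m m ℝ} (hA : A.IsHermitian)
    (x y : m → ℝ) : y ⬝ᵥ A *ᵥ x = x ⬝ᵥ A *ᵥ y := by
  rw [dotProduct_mulVec, ← mulVec_transpose, ← conjTranspose_eq_transpose_of_trivial, hA.eq,
    dotProduct_comm]

theorem PosSemidef.abs_dotProduct_mulVec_le {A : Matrix m m ℝ} (hA : A.PosSemidef)
    (x y : m → ℝ) : |x ⬝ᵥ A *ᵥ y| ≤ √(x ⬝ᵥ A *ᵥ x) * √(y ⬝ᵥ A *ᵥ y) := by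
  classical
  have hnonneg (z : m → ℝ) : 0 ≤ z ⬝ᵥ A *ᵥ z := by
    simpa using hA.dotProduct_mulVec_nonneg z
  have hcs := (toBilin' A).apply_mul_apply_le_of_forall_zero_le
    (fun z => (toBilin'_apply' A z z).symm ▸ hnonneg z) x y
  simp only [toBilin'_apply', hA.isHermitian.dotProduct_mulVec_comm x y] at hcs
  rw [← Real.sqrt_mul (hnonneg x), ← Real.sqrt_mul_self_eq_abs]
  exact Real.sqrt_le_sqrt hcs

theorem PosDef.mul_dotProduct_inv_mulVec_le [DecidableEq m] {Λ : Matrix m m ℝ} (hΛ : Λ.PosDef)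
    {c : ℝ} (hc : 0 ≤ c) (hcΛ : (Λ - c • 1).PosSemidef) (θ : m → ℝ) :
    c * (θ ⬝ᵥ Λ⁻¹ *ᵥ θ) ≤ θ ⬝ᵥ θ := by
  set u := Λ⁻¹ *ᵥ θ
  have hΛu : Λ *ᵥ u = θ := by
    rw [mulVec_mulVec, mul_nonsing_inv _ hΛ.det_pos.ne'.isUnit, one_mulVec]
  have hq : θ ⬝ᵥ u = u ⬝ᵥ Λ *ᵥ u := by rw [hΛu, dotProduct_comm]
  have hq_nonneg : 0 ≤ θ ⬝ᵥ u := by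
    simpa using hΛ.inv.posSemidef.dotProduct_mulVec_nonneg θ
  have hlow : c * (u ⬝ᵥ u) ≤ θ ⬝ᵥ u := by
    have := hcΛ.dotProduct_mulVec_nonneg u
    simp only [star_trivial, sub_mulVec, smul_mulVec, one_mulVec, dotProduct_sub,
      dotProduct_smul, smul_eq_mul] at this
    linarith
  have hcs : (θ ⬝ᵥ u) ^ 2 ≤ (θ ⬝ᵥ θ) * (u ⬝ᵥ u) := by
    simpa only [dotProduct, sq] using Finset.sum_mul_sq_le_sq_mul_sq Finset.univ θ u
  have hθθ : 0 ≤ θ ⬝ᵥ θ := by simpa using dotProduct_star_self_nonneg θ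
  nlinarith [mul_le_mul_of_nonneg_left hcs hc, mul_le_mul_of_nonneg_left hlow hθθ]

theorem smul_one_add_sum_vecMulVec_mulVec [DecidableEq m] (c : ℝ) (φs : ι → m → ℝ)
    (x : m → ℝ) :
    (c • (1 : Matrix m m ℝ) + ∑ j, vecMulVec (φs j) (φs j)) *ᵥ x
      = c • x + ∑ j, (φs j ⬝ᵥ x) • φs j := by
  simp [add_mulVec, smul_mulVec, sum_mulVec, vecMulVec_mulVec]

theorem posSemidef_sum_vecMulVec_self_s15 (φs : ι → m → ℝ) :
    (∑ j, vecMulVec (φs j) (φs j)).PosSemidef :=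
  posSemidef_sum _ fun j _ => by simpa using posSemidef_vecMulVec_self_star (φs j)

theorem posDef_smul_one_add_sum_vecMulVec [DecidableEq m] {c : ℝ} (hc : 0 < c)
    (φs : ι → m → ℝ) : (c • (1 : Matrix m m ℝ) + ∑ j, vecMulVec (φs j) (φs j)).PosDef :=
  (PosDef.one.smul hc).add_posSemidef (posSemidef_sum_vecMulVec_self_s15 φs)

theorem inv_mulVec_sum_smul_sub_eq [DecidableEq m] {c : ℝ} {φs : ι → m → ℝ}
    {Λ : Matrix m m ℝ} (hΛ : Λ = c • 1 + ∑ j, vecMulVec (φs j) (φs j)) (hdet : IsUnit Λ.det)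
    (y : ι → ℝ) (θ : m → ℝ) :
    Λ⁻¹ *ᵥ (∑ j, y j • φs j) - θ = Λ⁻¹ *ᵥ (∑ j, (y j - θ ⬝ᵥ φs j) • φs j - c • θ) := by
  have hres : ∑ j, (y j - θ ⬝ᵥ φs j) • φs j - c • θ = ∑ j, y j • φs j - Λ *ᵥ θ := by
    simp only [hΛ, smul_one_add_sum_vecMulVec_mulVec, sub_smul, Finset.sum_sub_distrib,
      dotProduct_comm θ]
    abel
  rw [hres, mulVec_sub, mulVec_mulVec, nonsing_inv_mul _ hdet, one_mulVec]

end Matrix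

theorem stmt_15_general (d n : ℕ) (lam : ℝ) (hlam : 0 < lam)
    (θ : Fin d → ℝ) (φs : Fin n → Fin d → ℝ) (y : Fin n → ℝ)
    (Λ : Matrix (Fin d) (Fin d) ℝ)
    (hΛ : Λ = lam • (1 : Matrix (Fin d) (Fin d) ℝ) + ∑ j, vecMulVec (φs j) (φs j))
    (θhat : Fin d → ℝ) (hθhat : θhat = Λ⁻¹.mulVec (∑ j, y j • φs j))
    (φ : Fin d → ℝ) :
    |φ ⬝ᵥ (θhat - θ)| ≤
        Real.sqrt (φ ⬝ᵥ Λ⁻¹.mulVec φ) *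
          (Real.sqrt ((∑ j, (y j - θ ⬝ᵥ φs j) • φs j) ⬝ᵥ
              Λ⁻¹.mulVec (∑ j, (y j - θ ⬝ᵥ φs j) • φs j))
            + lam * Real.sqrt (θ ⬝ᵥ Λ⁻¹.mulVec θ))
      ∧ lam * Real.sqrt (θ ⬝ᵥ Λ⁻¹.mulVec θ) ≤ Real.sqrt lam * Real.sqrt (∑ i, θ i ^ 2) := by
  have hpd : Λ.PosDef := hΛ ▸ posDef_smul_one_add_sum_vecMulVec hlam φs
  have hinv := hpd.inv.posSemidef
  set S := ∑ j, (y j - θ ⬝ᵥ φs j) • φs j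
  have herr : φ ⬝ᵥ (θhat - θ) = φ ⬝ᵥ Λ⁻¹ *ᵥ S - lam * (φ ⬝ᵥ Λ⁻¹ *ᵥ θ) := by
    rw [hθhat, inv_mulVec_sum_smul_sub_eq hΛ hpd.det_pos.ne'.isUnit, mulVec_sub, mulVec_smul,
      dotProduct_sub, dotProduct_smul, smul_eq_mul]
  constructor
  · calc |φ ⬝ᵥ (θhat - θ)| ≤ |φ ⬝ᵥ Λ⁻¹ *ᵥ S| + lam * |φ ⬝ᵥ Λ⁻¹ *ᵥ θ| := by
          rw [herr, ← abs_of_pos hlam, ← abs_mul, abs_of_pos hlam]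
          exact abs_sub _ _
      _ ≤ √(φ ⬝ᵥ Λ⁻¹ *ᵥ φ) * √(S ⬝ᵥ Λ⁻¹ *ᵥ S)
            + lam * (√(φ ⬝ᵥ Λ⁻¹ *ᵥ φ) * √(θ ⬝ᵥ Λ⁻¹ *ᵥ θ)) := by
          gcongr <;> exact hinv.abs_dotProduct_mulVec_le _ _
      _ = _ := by ring
  · have hgap : (Λ - lam • 1).PosSemidef := by
      rw [hΛ, add_sub_cancel_left]
      exact posSemidef_sum_vecMulVec_self_s15 φs
    calc lam * √(θ ⬝ᵥ Λ⁻¹ *ᵥ θ) = √(lam * (lam * (θ ⬝ᵥ Λ⁻¹ *ᵥ θ))) := by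
          rw [← mul_assoc, Real.sqrt_mul (mul_self_nonneg lam), Real.sqrt_mul_self hlam.le]
      _ ≤ √(lam * (θ ⬝ᵥ θ)) := by
          gcongr
          exact hpd.mul_dotProduct_inv_mulVec_le hlam.le hgap θ
      _ = √lam * √(∑ i, θ i ^ 2) := by
          rw [Real.sqrt_mul hlam.le, dotProduct]
          simp only [sq]

/-- Regularized least-squares error decomposition.  With `Λ = λI + Σ_j φ_j φ_jᵀ` and
`θ̂ = Λ⁻¹ Σ_j y_j φ_j`, for every `φ`:
`|⟨φ, θ̂ − θ⟩| ≤ ‖φ‖_{Λ⁻¹} (‖Σ_j φ_j (y_j − ⟨θ, φ_j⟩)‖_{Λ⁻¹} + λ‖θ‖_{Λ⁻¹})`,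
and `λ‖θ‖_{Λ⁻¹} ≤ √λ ‖θ‖₂`. -/
theorem stmt_15 (d n : ℕ) (hd : 1 ≤ d) (lam : ℝ) (hlam : 0 < lam)
    (θ : Fin d → ℝ) (φs : Fin n → Fin d → ℝ) (y : Fin n → ℝ)
    (Λ : Matrix (Fin d) (Fin d) ℝ)
    (hΛ : Λ = lam • (1 : Matrix (Fin d) (Fin d) ℝ) + ∑ j, vecMulVec (φs j) (φs j))
    (θhat : Fin d → ℝ) (hθhat : θhat = Λ⁻¹.mulVec (∑ j, y j • φs j))
    (φ : Fin d → ℝ) :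
    |φ ⬝ᵥ (θhat - θ)| ≤
        Real.sqrt (φ ⬝ᵥ Λ⁻¹.mulVec φ) *
          (Real.sqrt ((∑ j, (y j - θ ⬝ᵥ φs j) • φs j) ⬝ᵥ
              Λ⁻¹.mulVec (∑ j, (y j - θ ⬝ᵥ φs j) • φs j))
            + lam * Real.sqrt (θ ⬝ᵥ Λ⁻¹.mulVec θ))
      ∧ lam * Real.sqrt (θ ⬝ᵥ Λ⁻¹.mulVec θ) ≤ Real.sqrt lam * Real.sqrt (∑ i, θ i ^ 2) :=
  stmt_15_general d n lam hlam θ φs y Λ hΛ θhat hθhat φ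
end

section
/- Let S be a nonempty finite set of cardinality m, and let s₁, …, s_T ∈ S be any sequence. Define the counts N_t(s) = 1 + #{ u < t : s_u = s }. Then Σ_{t=1}^T 1/√(N_t(s_t)) ≤ 2 √(m T). -/
/-!
Group the times by their symbol: within the fibre of a symbol `a` that occurs `n_a` times the
counts run through `1, …, n_a`, so the fibre contributes `∑_{k ≤ n_a} 1/√k ≤ 2√n_a` by
telescoping `1/√(k+1) ≤ 2(√(k+1) - √k)`. Cauchy–Schwarz then gives
`∑_a √n_a ≤ √(m ∑_a n_a) = √(m T)`.
-/

open Finset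

theorem Finset.sum_card_filter_lt {α M : Type*} [LinearOrder α] [AddCommMonoid M]
    (F : Finset α) (f : ℕ → M) :
    ∑ t ∈ F, f #{u ∈ F | u < t} = ∑ k ∈ range #F, f k := by
  classical
  induction F using Finset.induction_on_max with
  | empty => simp
  | insert x G hG ih =>
    have hx : x ∉ G := fun h => lt_irrefl x (hG x h)
    have hrank_x : #{u ∈ insert x G | u < x} = #G := by
      rw [filter_insert, if_neg (lt_irrefl x), filter_true_of_mem hG]
    have hrank_G : ∀ t ∈ G, #{u ∈ insert x G | u < t} = #{u ∈ G | u < t} := fun t ht => by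
      rw [filter_insert, if_neg (hG t ht).not_gt]
    rw [sum_insert hx, hrank_x, sum_congr rfl fun t ht => congrArg f (hrank_G t ht), ih, card_insert_of_notMem hx,
      sum_range_succ, add_comm]

lemma one_div_sqrt_one_add_le (x : ℝ) (hx : 0 ≤ x) :
    1 / √(1 + x) ≤ 2 * (√(x + 1) - √x) := by
  have hlt : 0 < √(x + 1) := Real.sqrt_pos.2 (by linarith)
  have hle : √x ≤ √(x + 1) := Real.sqrt_le_sqrt (by linarith)
  rw [add_comm, div_le_iff₀ hlt]
  nlinarith [Real.sq_sqrt hx, Real.sq_sqrt (by linarith : 0 ≤ x + 1), Real.sqrt_nonneg x]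

lemma sum_range_one_div_sqrt_le (n : ℕ) :
    ∑ k ∈ range n, 1 / √(1 + (k : ℝ)) ≤ 2 * √(n : ℝ) := by
  induction n with
  | zero => simp
  | succ n ih =>
    rw [sum_range_succ, Nat.cast_succ]
    linarith [one_div_sqrt_one_add_le n n.cast_nonneg]

lemma Real.sum_sqrt_le_sqrt_card_mul_sum {ι : Type*} (s : Finset ι) {g : ι → ℝ}
    (hg : ∀ i, 0 ≤ g i) : ∑ i ∈ s, √(g i) ≤ √(#s * ∑ i ∈ s, g i) := by
  simpa [Real.sqrt_mul (Nat.cast_nonneg _)] using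
    Real.sum_sqrt_mul_sqrt_le s (fun _ => zero_le_one) hg

theorem stmt_16_general {S : Type*} [Fintype S] [DecidableEq S]
    (m T : ℕ) (hm : Fintype.card S = m) (s : Fin T → S) :
    ∑ t : Fin T,
        (1 : ℝ) / Real.sqrt (1 + ((Finset.univ.filter fun u : Fin T => u < t ∧ s u = s t).card : ℝ))
      ≤ 2 * Real.sqrt ((m : ℝ) * (T : ℝ)) := by
  set fiber : S → Finset (Fin T) := fun a => {u | s u = a}
  have hrank : ∀ a, ∀ t ∈ fiber a,
      #{u | u < t ∧ s u = s t} = #{u ∈ fiber a | u < t} := fun a t ht => by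
    rw [(mem_filter.1 ht).2, filter_filter]
    simp only [and_comm]
  calc ∑ t : Fin T, 1 / √(1 + (#{u | u < t ∧ s u = s t} : ℝ))
      = ∑ a, ∑ t ∈ fiber a, 1 / √(1 + (#{u ∈ fiber a | u < t} : ℝ)) := by
        rw [← sum_fiberwise univ s]
        exact sum_congr rfl fun a _ => sum_congr rfl fun t ht => by rw [hrank a t ht]
    _ = ∑ a, ∑ k ∈ range #(fiber a), 1 / √(1 + (k : ℝ)) := by
        simp only [sum_card_filter_lt (fiber _) (fun k : ℕ => 1 / √(1 + (k : ℝ)))]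
    _ ≤ ∑ a, 2 * √(#(fiber a) : ℝ) := sum_le_sum fun a _ => sum_range_one_div_sqrt_le _
    _ ≤ 2 * √(m * T) := by
        rw [← mul_sum]
        gcongr
        have hT : ∑ a, (#(fiber a) : ℝ) = T := by
          rw [← Nat.cast_sum, ← card_eq_sum_card_fiberwise (fun _ _ => mem_univ _), card_fin]
        simpa [hm, hT] using
          Real.sum_sqrt_le_sqrt_card_mul_sum univ (fun a => (#(fiber a)).cast_nonneg)

/-- Let `S` be a nonempty finite set of cardinality `m`, and `s₁, …, s_T` any sequence in `S`.
With counts `N_t(s) = 1 + #{u < t : s_u = s}`, we have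
`Σ_{t=1}^T 1/√(N_t(s_t)) ≤ 2 √(m T)`. -/
theorem stmt_16 {S : Type*} [Fintype S] [Nonempty S] [DecidableEq S]
    (m T : ℕ) (hm : Fintype.card S = m) (s : Fin T → S) :
    ∑ t : Fin T,
        (1 : ℝ) / Real.sqrt (1 + ((Finset.univ.filter fun u : Fin T => u < t ∧ s u = s t).card : ℝ))
      ≤ 2 * Real.sqrt ((m : ℝ) * (T : ℝ)) :=
  stmt_16_general m T hm s
end
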